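/- arXiv:0812.4545 — 11 statements merged into one kernel-verified Lean document; each statement's English description precedes it below -/
import Mathlib

section
/- Let k, ℓ be nonzero integers with |k| > |ℓ|, and define α : [0, π/2] → ℝ by α(s) = arccos(1 − 2·ln((k²/ℓ²)·sin²s + cos²s)/ln(k²/ℓ²)). Then α is smooth on (0, π/2), satisfies α(0) = 0 and α(π/2) = π, and on (0, π/2) it satisfies the reduced σ₂-criticality ODE: [α″(s)·sin α(s) + α′(s)²·cos α(s)]·(k²/cos²s + ℓ²/sin²s) + α′(s)·sin α(s)·(k²/(sin s · cos³s) − ℓ²/(cos s · sin³s)) = 0. -/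
open Real Set

noncomputable def gg (c t : ℝ) : ℝ := c * Real.sin t ^ 2 + Real.cos t ^ 2
noncomputable def GG (c t : ℝ) : ℝ := 2 * (c - 1) * (Real.sin t * Real.cos t)
noncomputable def vv (c t : ℝ) : ℝ := 1 - 2 * Real.log (gg c t) / Real.log c
noncomputable def WW (c t : ℝ) : ℝ := 2 * (GG c t / gg c t) / Real.log c

lemma gg_hasDeriv (c t : ℝ) : HasDerivAt (gg c) (GG c t) t := by
  have h := ((((Real.hasDerivAt_sin t).pow 2).const_mul c).add
    ((Real.hasDerivAt_cos t).pow 2)).congr_deriv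
    (show c * ((2 : ℕ) * Real.sin t ^ (2 - 1) * Real.cos t) +
        (2 : ℕ) * Real.cos t ^ (2 - 1) * (-Real.sin t) = GG c t by
      simp [GG]; ring)
  exact h

lemma vv_hasDeriv (c t : ℝ) (h : gg c t ≠ 0) : HasDerivAt (vv c) (-(WW c t)) t := by
  have h2 := ((((gg_hasDeriv c t).log h).const_mul (2 : ℝ)).div_const (Real.log c)).const_sub 1
  exact h2.congr_deriv (by simp [WW])

lemma WW_hasDeriv (c t : ℝ) (h : gg c t ≠ 0) :
    HasDerivAt (WW c)
      (2 * ((2 * (c - 1) * (Real.cos t * Real.cos t - Real.sin t * Real.sin t) * gg c t -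
        GG c t * GG c t) / (gg c t) ^ 2) / Real.log c) t := by
  have hG : HasDerivAt (GG c) (2 * (c - 1) * (Real.cos t * Real.cos t - Real.sin t * Real.sin t)) t := by
    exact (((Real.hasDerivAt_sin t).mul (Real.hasDerivAt_cos t)).const_mul (2 * (c - 1))).congr_deriv
      (by ring)
  exact (((hG.div (gg_hasDeriv c t) h).const_mul (2 : ℝ)).div_const (Real.log c)).congr_deriv rfl

lemma key_alg (c L P Q : ℝ) (hP : P ≠ 0) (hQ : Q ≠ 0) (hL : L ≠ 0)
    (hg : c * P ^ 2 + Q ^ 2 ≠ 0) (hPQ : P ^ 2 + Q ^ 2 = 1) :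
    2 * ((2 * (c - 1) * (Q * Q - P * P) * (c * P ^ 2 + Q ^ 2) -
        2 * (c - 1) * (P * Q) * (2 * (c - 1) * (P * Q))) / (c * P ^ 2 + Q ^ 2) ^ 2) / L *
      (c / Q ^ 2 + 1 / P ^ 2) +
    2 * (2 * (c - 1) * (P * Q) / (c * P ^ 2 + Q ^ 2)) / L *
      (c / (P * Q ^ 3) - 1 / (Q * P ^ 3)) = 0 := by
  have expand :
      2 * ((2 * (c - 1) * (Q * Q - P * P) * (c * P ^ 2 + Q ^ 2) -
          2 * (c - 1) * (P * Q) * (2 * (c - 1) * (P * Q))) / (c * P ^ 2 + Q ^ 2) ^ 2) / L *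
        (c / Q ^ 2 + 1 / P ^ 2) +
      2 * (2 * (c - 1) * (P * Q) / (c * P ^ 2 + Q ^ 2)) / L *
        (c / (P * Q ^ 3) - 1 / (Q * P ^ 3)) =
      4 * (c - 1) / (L * ((c * P ^ 2 + Q ^ 2) * P ^ 2 * Q ^ 2)) *
        ((P ^ 2 + Q ^ 2 - 1) * (Q ^ 2 - c * P ^ 2)) := by
    field_simp
    ring
  rw [expand, show P ^ 2 + Q ^ 2 - 1 = (0 : ℝ) by rw [hPQ]; ring]
  ring

theorem sigma2_main (c : ℝ) (hc : 1 < c) (α : ℝ → ℝ)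
    (hα : α = fun s => arccos (1 - 2 * Real.log (c * sin s ^ 2 + cos s ^ 2) / Real.log c)) :
    ContDiffOn ℝ (⊤ : ℕ∞) α (Ioo 0 (π/2)) ∧
    α 0 = 0 ∧ α (π/2) = π ∧
    ∀ s ∈ Ioo 0 (π/2),
      (deriv (deriv α) s * sin (α s) + (deriv α s)^2 * cos (α s)) *
        (c / cos s ^ 2 + 1 / sin s ^ 2) +
      deriv α s * sin (α s) *
        (c / (sin s * cos s ^ 3) - 1 / (cos s * sin s ^ 3)) = 0 := by
  have hL : 0 < Real.log c := Real.log_pos hc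
  have hLne : Real.log c ≠ 0 := ne_of_gt hL
  have hαc : α = arccos ∘ vv c := by rw [hα]; rfl
  have hsin : ∀ t ∈ Ioo 0 (π/2), 0 < sin t := fun t ht =>
    Real.sin_pos_of_pos_of_lt_pi ht.1 (by linarith [ht.2, Real.pi_pos])
  have hcos : ∀ t ∈ Ioo 0 (π/2), 0 < cos t := fun t ht =>
    Real.cos_pos_of_mem_Ioo ⟨by linarith [ht.1, Real.pi_pos], ht.2⟩
  have hg1 : ∀ t ∈ Ioo 0 (π/2), 1 < gg c t := by
    intro t ht
    have h1 := hsin t ht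
    have h2 := Real.sin_sq_add_cos_sq t
    have h3 : 0 < sin t ^ 2 := pow_pos h1 2
    simp only [gg]
    nlinarith [mul_pos (sub_pos.mpr hc) h3]
  have hgc : ∀ t ∈ Ioo 0 (π/2), gg c t < c := by
    intro t ht
    have h1 := hcos t ht
    have h2 := Real.sin_sq_add_cos_sq t
    have h3 : 0 < cos t ^ 2 := pow_pos h1 2
    simp only [gg]
    nlinarith [mul_pos (sub_pos.mpr hc) h3]
  have hgpos : ∀ t ∈ Ioo 0 (π/2), 0 < gg c t := fun t ht => lt_trans one_pos (hg1 t ht)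
  have hgne : ∀ t ∈ Ioo 0 (π/2), gg c t ≠ 0 := fun t ht => ne_of_gt (hgpos t ht)
  have hvlt : ∀ t ∈ Ioo 0 (π/2), -1 < vv c t ∧ vv c t < 1 := by
    intro t ht
    have h1 : 0 < Real.log (gg c t) := Real.log_pos (hg1 t ht)
    have h2 : Real.log (gg c t) < Real.log c := Real.log_lt_log (hgpos t ht) (hgc t ht)
    have h3 : 0 < 2 * Real.log (gg c t) / Real.log c := by positivity
    have h4 : 2 * Real.log (gg c t) / Real.log c < 2 := by
      rw [div_lt_iff₀ hL]; linarith
    constructor <;> (simp only [vv]; linarith)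
  have hvpos : ∀ t ∈ Ioo 0 (π/2), 0 < 1 - vv c t ^ 2 := by
    intro t ht
    obtain ⟨h1, h2⟩ := hvlt t ht
    nlinarith
  -- smoothness
  have hsm : ContDiffOn ℝ (⊤ : ℕ∞) α (Ioo 0 (π/2)) := by
    intro s hs
    have hgcd : ContDiffAt ℝ (⊤ : ℕ∞) (gg c) s :=
      ((contDiff_const.mul (Real.contDiff_sin.pow 2)).add (Real.contDiff_cos.pow 2)).contDiffAt
    have hlogcd : ContDiffAt ℝ (⊤ : ℕ∞) (fun t => Real.log (gg c t)) s :=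
      (Real.contDiffAt_log.mpr (hgne s hs)).comp s hgcd
    have hvcd : ContDiffAt ℝ (⊤ : ℕ∞) (vv c) s :=
      contDiffAt_const.sub ((contDiffAt_const.mul hlogcd).div_const (Real.log c))
    obtain ⟨h1, h2⟩ := hvlt s hs
    have hacd : ContDiffAt ℝ (⊤ : ℕ∞) (arccos ∘ vv c) s :=
      (Real.contDiffAt_arccos (ne_of_gt h1) (ne_of_lt h2)).comp s hvcd
    rw [hαc]
    exact hacd.contDiffWithinAt
  refine ⟨hsm, ?_, ?_, ?_⟩
  · rw [hα]
    norm_num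
  · rw [hα]
    have h1 : c * sin (π/2) ^ 2 + cos (π/2) ^ 2 = c := by
      rw [Real.sin_pi_div_two, Real.cos_pi_div_two]; ring
    show arccos (1 - 2 * Real.log (c * sin (π/2) ^ 2 + cos (π/2) ^ 2) / Real.log c) = π
    rw [h1]
    rw [show 1 - 2 * Real.log c / Real.log c = -1 by field_simp; ring]
    exact Real.arccos_neg_one
  · -- the ODE
    have hαd : ∀ t ∈ Ioo 0 (π/2),
        HasDerivAt α (-(1 / Real.sqrt (1 - vv c t ^ 2)) * -(WW c t)) t := by
      intro t ht
      obtain ⟨h1, h2⟩ := hvlt t ht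
      rw [hαc]
      exact (Real.hasDerivAt_arccos (ne_of_gt h1) (ne_of_lt h2)).comp t
        (vv_hasDeriv c t (hgne t ht))
    have hkey1 : ∀ t ∈ Ioo 0 (π/2), sin (α t) * deriv α t = WW c t := by
      intro t ht
      have hsq : 0 < Real.sqrt (1 - vv c t ^ 2) := Real.sqrt_pos.mpr (hvpos t ht)
      rw [(hαd t ht).deriv, hαc]
      simp only [Function.comp_apply, Real.sin_arccos]
      field_simp
    intro s hs
    have hD2 : DifferentiableAt ℝ (deriv α) s := by
      have hd' : ContDiffOn ℝ (⊤ : ℕ∞) (deriv α) (Ioo 0 (π/2)) :=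
        hsm.deriv_of_isOpen isOpen_Ioo (by simp)
      exact (hd'.differentiableOn (by simp)).differentiableAt (Ioo_mem_nhds hs.1 hs.2)
    have hda : DifferentiableAt ℝ α s := (hαd s hs).differentiableAt
    have hd2 : HasDerivAt (fun t => sin (α t) * deriv α t)
        (cos (α s) * deriv α s * deriv α s + sin (α s) * deriv (deriv α) s) s :=
      (hda.hasDerivAt.sin).mul hD2.hasDerivAt
    have hw_ev : (fun t => sin (α t) * deriv α t) =ᶠ[nhds s] WW c :=
      Filter.eventuallyEq_of_mem (Ioo_mem_nhds hs.1 hs.2) (fun t ht => hkey1 t ht)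
    have e1 : deriv (fun t => sin (α t) * deriv α t) s = deriv (WW c) s := hw_ev.deriv_eq
    have e2 : deriv (WW c) s =
        2 * ((2 * (c - 1) * (cos s * cos s - sin s * sin s) * gg c s -
          GG c s * GG c s) / (gg c s) ^ 2) / Real.log c := (WW_hasDeriv c s (hgne s hs)).deriv
    have key2 : deriv (deriv α) s * sin (α s) + (deriv α s) ^ 2 * cos (α s) =
        2 * ((2 * (c - 1) * (cos s * cos s - sin s * sin s) * gg c s -
          GG c s * GG c s) / (gg c s) ^ 2) / Real.log c := by
      have eqn := hd2.deriv.symm.trans (e1.trans e2)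
      linear_combination eqn
    have key1 := hkey1 s hs
    have hPQ := Real.sin_sq_add_cos_sq s
    have hP := ne_of_gt (hsin s hs)
    have hQ := ne_of_gt (hcos s hs)
    have hgne' : c * sin s ^ 2 + cos s ^ 2 ≠ 0 := hgne s hs
    rw [key2, mul_comm (deriv α s) (sin (α s)), key1]
    simp only [WW, GG, gg]
    linear_combination key_alg c (Real.log c) (sin s) (cos s) hP hQ hLne hgne' hPQ

/-- For nonzero integers `k, l` with `|k| > |l|`, the function
`α(s) = arccos(1 − 2·ln((k²/l²)·sin²s + cos²s)/ln(k²/l²))` is smooth on `(0, π/2)`,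
satisfies `α(0) = 0`, `α(π/2) = π`, and solves the reduced σ₂-criticality ODE. -/
theorem stmt_0 (k l : ℤ) (hk : k ≠ 0) (hl : l ≠ 0) (hkl : |k| > |l|)
    (α : ℝ → ℝ)
    (hα : α = fun s => arccos (1 - 2 * Real.log (((k : ℝ)^2 / (l : ℝ)^2) * sin s ^ 2 + cos s ^ 2)
      / Real.log ((k : ℝ)^2 / (l : ℝ)^2))) :
    ContDiffOn ℝ (⊤ : ℕ∞) α (Ioo 0 (π/2)) ∧
    α 0 = 0 ∧ α (π/2) = π ∧
    ∀ s ∈ Ioo 0 (π/2),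
      (deriv (deriv α) s * sin (α s) + (deriv α s)^2 * cos (α s)) *
        ((k : ℝ)^2 / cos s ^ 2 + (l : ℝ)^2 / sin s ^ 2) +
      deriv α s * sin (α s) *
        ((k : ℝ)^2 / (sin s * cos s ^ 3) - (l : ℝ)^2 / (cos s * sin s ^ 3)) = 0 := by
  have hl2 : (0 : ℝ) < (l : ℝ) ^ 2 := by
    have : (l : ℝ) ≠ 0 := Int.cast_ne_zero.mpr hl
    positivity
  have hlk : (l : ℝ) ^ 2 < (k : ℝ) ^ 2 := by
    have h1 : l ^ 2 < k ^ 2 := by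
      rw [← sq_abs l, ← sq_abs k]
      exact pow_lt_pow_left₀ hkl (abs_nonneg l) two_ne_zero
    exact_mod_cast h1
  have hc : (1 : ℝ) < (k : ℝ) ^ 2 / (l : ℝ) ^ 2 := by
    rw [one_lt_div hl2]; exact hlk
  obtain ⟨h1, h2, h3, h4⟩ := sigma2_main ((k : ℝ) ^ 2 / (l : ℝ) ^ 2) hc α hα
  refine ⟨h1, h2, h3, fun s hs => ?_⟩
  have h := h4 s hs
  have hk2 : ((k : ℝ)) ^ 2 = ((k : ℝ) ^ 2 / (l : ℝ) ^ 2) * (l : ℝ) ^ 2 := by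
    field_simp
  rw [hk2]
  linear_combination (l : ℝ) ^ 2 * h
end

section
/- Let k, ℓ be nonzero integers with |k| = |ℓ|. Then the function α(s) = 2s satisfies, for every s ∈ (0, π/2), the reduced σ₂-criticality ODE: [α″(s)·sin α(s) + α′(s)²·cos α(s)]·(k²/cos²s + ℓ²/sin²s) + α′(s)·sin α(s)·(k²/(sin s · cos³s) − ℓ²/(cos s · sin³s)) = 0, together with the boundary conditions α(0) = 0 and α(π/2) = π. -/
open Real Set

/-!
Along `α(s) = 2s` we have `α' = 2` and `α'' = 0`, and when `k² = ℓ²` both coupling factors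
collapse: `1/cos² s + 1/sin² s = 1/(sin² s cos² s)` and
`sin 2s · (1/(sin s cos³ s) - 1/(cos s sin³ s)) = -2 cos 2s/(sin² s cos² s)`.
The two terms of the ODE are then `± 4k² cos 2s/(sin² s cos² s)` and cancel.
-/

theorem one_div_cos_sq_add_one_div_sin_sq {s : ℝ} (hs : sin s ≠ 0) (hc : cos s ≠ 0) :
    1 / cos s ^ 2 + 1 / sin s ^ 2 = 1 / (sin s ^ 2 * cos s ^ 2) := by
  field_simp
  linear_combination sin_sq_add_cos_sq s

theorem sin_two_mul_mul_one_div_sub {s : ℝ} (hs : sin s ≠ 0) (hc : cos s ≠ 0) :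
    sin (2 * s) * (1 / (sin s * cos s ^ 3) - 1 / (cos s * sin s ^ 3)) =
      -2 * cos (2 * s) / (sin s ^ 2 * cos s ^ 2) := by
  rw [sin_two_mul, cos_two_mul']
  field_simp
  ring

theorem sigma2_ode_two_mul (a : ℝ) {s : ℝ} (hs : s ∈ Ioo 0 (π / 2)) :
    (0 * sin (2 * s) + 2 ^ 2 * cos (2 * s)) * (a / cos s ^ 2 + a / sin s ^ 2) +
      2 * sin (2 * s) * (a / (sin s * cos s ^ 3) - a / (cos s * sin s ^ 3)) = 0 := by
  have hsin : sin s ≠ 0 := (sin_pos_of_pos_of_lt_pi hs.1 (by linarith [hs.2, pi_pos])).ne'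
  have hcos : cos s ≠ 0 := (cos_pos_of_mem_Ioo ⟨by linarith [hs.1, pi_pos], hs.2⟩).ne'
  have hcoupling := one_div_cos_sq_add_one_div_sin_sq hsin hcos
  have hmixed := sin_two_mul_mul_one_div_sub hsin hcos
  calc _ = 4 * a * cos (2 * s) * (1 / cos s ^ 2 + 1 / sin s ^ 2) +
        2 * a * (sin (2 * s) * (1 / (sin s * cos s ^ 3) - 1 / (cos s * sin s ^ 3))) := by ring
    _ = 0 := by rw [hcoupling, hmixed]; ring

theorem stmt_1_general (k l : ℤ) (hkl : |k| = |l|)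
    (α : ℝ → ℝ) (hα : α = fun s => 2 * s) :
    α 0 = 0 ∧ α (π/2) = π ∧
    ∀ s ∈ Ioo 0 (π/2),
      (deriv (deriv α) s * sin (α s) + (deriv α s)^2 * cos (α s)) *
        ((k : ℝ)^2 / cos s ^ 2 + (l : ℝ)^2 / sin s ^ 2) +
      deriv α s * sin (α s) *
        ((k : ℝ)^2 / (sin s * cos s ^ 3) - (l : ℝ)^2 / (cos s * sin s ^ 3)) = 0 := by
  subst hα
  have hderiv : deriv (fun s : ℝ => 2 * s) = fun _ => 2 := funext fun s => by simp
  have hsq : (l : ℝ) ^ 2 = (k : ℝ) ^ 2 := by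
    rw [← sq_abs, ← Int.cast_abs, ← hkl, Int.cast_abs, sq_abs]
  refine ⟨mul_zero 2, by ring, fun s hs => ?_⟩
  rw [hderiv, deriv_const, hsq]
  exact sigma2_ode_two_mul _ hs

/-- For nonzero integers `k, l` with `|k| = |l|`, the function `α(s) = 2s`
satisfies the reduced σ₂-criticality ODE on `(0, π/2)` together with the boundary
conditions `α(0) = 0` and `α(π/2) = π`. -/
theorem stmt_1 (k l : ℤ) (hk : k ≠ 0) (hl : l ≠ 0) (hkl : |k| = |l|)
    (α : ℝ → ℝ) (hα : α = fun s => 2 * s) :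
    α 0 = 0 ∧ α (π/2) = π ∧
    ∀ s ∈ Ioo 0 (π/2),
      (deriv (deriv α) s * sin (α s) + (deriv α s)^2 * cos (α s)) *
        ((k : ℝ)^2 / cos s ^ 2 + (l : ℝ)^2 / sin s ^ 2) +
      deriv α s * sin (α s) *
        ((k : ℝ)^2 / (sin s * cos s ^ 3) - (l : ℝ)^2 / (cos s * sin s ^ 3)) = 0 :=
  stmt_1_general k l hkl α hα
end

section
/- Let k, ℓ be nonzero integers with |k| > |ℓ|, and let α(s) = arccos(1 − 2·ln((k²/ℓ²)·sin²s + cos²s)/ln(k²/ℓ²)). Then ∫₀^{π/2} (k²·tan s + ℓ²·cot s)·α′(s)²·sin²α(s) ds = 8·(k² − ℓ²)/ln(k²/ℓ²). Consequently the reduced σ₂-energy of this configuration on the round 3-sphere of radius R equals 16π²·(k² − ℓ²)/(R·ln(k²/ℓ²)). -/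
/-!
Writing `y = cos α`, one has `α' ² sin² α = y' ²`, so the integral is the Dirichlet energy
`∫ w y'²` of `y`. The given profile satisfies the first-order equation `w y' = -4 (k² - ℓ²) / L`
with `L = ln (k²/ℓ²)`, hence `w y'² = -(4 (k² - ℓ²) / L) y'`, which integrates to
`-(4 (k² - ℓ²) / L) (y(π/2) - y(0))` with `y(0) = 1` and `y(π/2) = -1`.
-/

open Real Set intervalIntegral

theorem sq_deriv_arccos_mul_sin_sq {f : ℝ → ℝ} {f' x : ℝ} (hf : HasDerivAt f f' x)
    (h₁ : -1 < f x) (h₂ : f x < 1) :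
    deriv (fun s => arccos (f s)) x ^ 2 * sin (arccos (f x)) ^ 2 = f' ^ 2 := by
  have hpos : 0 < 1 - f x ^ 2 := by nlinarith
  have hd : HasDerivAt (fun s => arccos (f s)) (-(1 / √(1 - f x ^ 2)) * f') x :=
    (hasDerivAt_arccos h₁.ne' h₂.ne).comp x hf
  rw [hd.deriv, sin_arccos, mul_pow, neg_sq, div_pow, sq_sqrt hpos.le]
  field_simp

/-- `cos α` for the profile of the theorem, with `a = k²` and `b = ℓ²`. -/
noncomputable def hopfProfile (a b s : ℝ) : ℝ :=
  1 - 2 * Real.log ((a / b) * sin s ^ 2 + cos s ^ 2) / Real.log (a / b)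

/-- `cos α` for the profile of the theorem, with `a = k²` and `b = ℓ²`. -/
noncomputable def hopfProfileDeriv (a b s : ℝ) : ℝ :=
  -(4 * (a - b) / Real.log (a / b)) * (sin s * cos s / (a * sin s ^ 2 + b * cos s ^ 2))

section

variable {a b : ℝ}

theorem mul_sin_sq_add_mul_cos_sq_pos (ha : 0 < a) (hb : 0 < b) (s : ℝ) :
    0 < a * sin s ^ 2 + b * cos s ^ 2 := by
  rcases eq_or_ne (sin s) 0 with h | h
  · have hcos : cos s ^ 2 = 1 := by nlinarith [sin_sq_add_cos_sq s]
    rw [h, hcos]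
    positivity
  · positivity

theorem hopfProfile_zero : hopfProfile a b 0 = 1 := by
  simp [hopfProfile]

theorem hopfProfile_pi_div_two (hL : Real.log (a / b) ≠ 0) : hopfProfile a b (π / 2) = -1 := by
  rw [hopfProfile, sin_pi_div_two, cos_pi_div_two, one_pow, mul_one, zero_pow two_ne_zero,
    add_zero, mul_div_assoc, div_self hL]
  norm_num

theorem hopfProfile_mem_Ioo (hb : 0 < b) (hab : b < a) {s : ℝ} (hs : s ∈ Ioo 0 (π / 2)) :
    hopfProfile a b s ∈ Ioo (-1) 1 := by
  have hc : 1 < a / b := (one_lt_div hb).2 hab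
  have hsin : 0 < sin s := sin_pos_of_pos_of_lt_pi hs.1 (by linarith [hs.2, pi_pos])
  have hcos : 0 < cos s := cos_pos_of_mem_Ioo ⟨by linarith [hs.1, pi_pos], hs.2⟩
  have hu₁ : 1 < a / b * sin s ^ 2 + cos s ^ 2 := by
    nlinarith [sin_sq_add_cos_sq s, mul_pos hsin hsin]
  have huc : a / b * sin s ^ 2 + cos s ^ 2 < a / b := by
    nlinarith [sin_sq_add_cos_sq s, mul_pos hcos hcos]
  have hlog₀ := Real.log_pos hu₁
  have hlogc := Real.log_lt_log (by linarith) huc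
  have hL := Real.log_pos hc
  constructor <;> simp only [hopfProfile]
  · have : 2 * Real.log (a / b * sin s ^ 2 + cos s ^ 2) / Real.log (a / b) < 2 := by
      rw [div_lt_iff₀ hL]; linarith
    linarith
  · have : 0 < 2 * Real.log (a / b * sin s ^ 2 + cos s ^ 2) / Real.log (a / b) := by positivity
    linarith

theorem hasDerivAt_hopfProfile (ha : 0 < a) (hb : 0 < b) (s : ℝ) :
    HasDerivAt (hopfProfile a b) (hopfProfileDeriv a b s) s := by
  have hvu : a * sin s ^ 2 + b * cos s ^ 2 = b * (a / b * sin s ^ 2 + cos s ^ 2) := by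
    field_simp
  have hu : 0 < a / b * sin s ^ 2 + cos s ^ 2 :=
    pos_of_mul_pos_right (hvu ▸ mul_sin_sq_add_mul_cos_sq_pos ha hb s) hb.le
  have hu' : HasDerivAt (fun s => a / b * sin s ^ 2 + cos s ^ 2)
      ((a / b - 1) * (2 * sin s * cos s)) s :=
    ((((hasDerivAt_sin s).pow 2).const_mul (a / b)).add ((hasDerivAt_cos s).pow 2)).congr_deriv
      (by push_cast; ring)
  refine ((((hu'.log hu.ne').const_mul 2).div_const _).const_sub 1).congr_deriv ?_
  rw [hopfProfileDeriv, hvu]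
  field_simp
  ring

theorem continuous_hopfProfileDeriv (ha : 0 < a) (hb : 0 < b) :
    Continuous (hopfProfileDeriv a b) :=
  continuous_const.mul <| (continuous_sin.mul continuous_cos).div (by fun_prop)
    fun s => (mul_sin_sq_add_mul_cos_sq_pos ha hb s).ne'

theorem weight_mul_hopfProfileDeriv (ha : 0 < a) (hb : 0 < b) {s : ℝ} (hs : s ∈ Ioo 0 (π / 2)) :
    (a * tan s + b * cot s) * hopfProfileDeriv a b s = -(4 * (a - b) / Real.log (a / b)) := by
  have hsin : 0 < sin s := sin_pos_of_pos_of_lt_pi hs.1 (by linarith [hs.2, pi_pos])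
  have hcos : 0 < cos s := cos_pos_of_mem_Ioo ⟨by linarith [hs.1, pi_pos], hs.2⟩
  have hv := mul_sin_sq_add_mul_cos_sq_pos ha hb s
  rw [hopfProfileDeriv, tan_eq_sin_div_cos, cot_eq_cos_div_sin]
  field_simp

theorem integral_weight_mul_deriv_arccos_hopfProfile (hb : 0 < b) (hab : b < a) :
    ∫ s in (0 : ℝ)..(π / 2), (a * tan s + b * cot s) *
        deriv (fun s => arccos (hopfProfile a b s)) s ^ 2 * sin (arccos (hopfProfile a b s)) ^ 2
      = 8 * (a - b) / Real.log (a / b) := by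
  have ha : 0 < a := hb.trans hab
  have hL : Real.log (a / b) ≠ 0 := (Real.log_pos ((one_lt_div hb).2 hab)).ne'
  have hpoint : EqOn (fun s => (a * tan s + b * cot s) *
        deriv (fun s => arccos (hopfProfile a b s)) s ^ 2 * sin (arccos (hopfProfile a b s)) ^ 2)
      (fun s => -(4 * (a - b) / Real.log (a / b)) * hopfProfileDeriv a b s) (Ioo 0 (π / 2)) := by
    intro s hs
    obtain ⟨h₁, h₂⟩ := hopfProfile_mem_Ioo hb hab hs
    simp only [mul_assoc, sq_deriv_arccos_mul_sin_sq (hasDerivAt_hopfProfile ha hb s) h₁ h₂,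
      ← weight_mul_hopfProfileDeriv ha hb hs]
    ring
  calc _ = ∫ s in (0 : ℝ)..(π / 2), -(4 * (a - b) / Real.log (a / b)) * hopfProfileDeriv a b s :=
        integral_congr_Ioo_of_le (by positivity) hpoint
    _ = -(4 * (a - b) / Real.log (a / b)) * (hopfProfile a b (π / 2) - hopfProfile a b 0) := by
        rw [integral_const_mul, integral_eq_sub_of_hasDerivAt
          (fun s _ => hasDerivAt_hopfProfile ha hb s)
          ((continuous_hopfProfileDeriv ha hb).intervalIntegrable _ _)]
    _ = 8 * (a - b) / Real.log (a / b) := by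
        rw [hopfProfile_pi_div_two hL, hopfProfile_zero]
        ring

end

theorem stmt_3_general (k l : ℤ) (hl : l ≠ 0) (hkl : |k| > |l|)
    (α : ℝ → ℝ)
    (hα : α = fun s => arccos (1 - 2 * Real.log (((k : ℝ)^2 / (l : ℝ)^2) * sin s ^ 2 + cos s ^ 2)
      / Real.log ((k : ℝ)^2 / (l : ℝ)^2)))
    (R : ℝ) :
    (∫ s in (0:ℝ)..(π/2),
        ((k : ℝ)^2 * tan s + (l : ℝ)^2 * cot s) * (deriv α s)^2 * sin (α s)^2)
      = 8 * ((k : ℝ)^2 - (l : ℝ)^2) / Real.log ((k : ℝ)^2 / (l : ℝ)^2) ∧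
    (2 * π^2 / R) * (∫ s in (0:ℝ)..(π/2),
        ((k : ℝ)^2 * tan s + (l : ℝ)^2 * cot s) * (deriv α s)^2 * sin (α s)^2)
      = 16 * π^2 * ((k : ℝ)^2 - (l : ℝ)^2) / (R * Real.log ((k : ℝ)^2 / (l : ℝ)^2)) := by
  have hb : (0 : ℝ) < (l : ℝ) ^ 2 := by positivity
  have hab : (l : ℝ) ^ 2 < (k : ℝ) ^ 2 := by
    rw [← sq_abs (l : ℝ), ← sq_abs (k : ℝ)]
    exact pow_lt_pow_left₀ (by exact_mod_cast hkl) (abs_nonneg _) two_ne_zero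
  have hI : (∫ s in (0:ℝ)..(π/2),
      ((k : ℝ)^2 * tan s + (l : ℝ)^2 * cot s) * (deriv α s)^2 * sin (α s)^2)
        = 8 * ((k : ℝ)^2 - (l : ℝ)^2) / Real.log ((k : ℝ)^2 / (l : ℝ)^2) := by
    subst hα
    exact integral_weight_mul_deriv_arccos_hopfProfile hb hab
  exact ⟨hI, by rw [hI]; ring⟩

/-- For nonzero integers `k, l` with `|k| > |l|` and
`α(s) = arccos(1 − 2·ln((k²/l²)·sin²s + cos²s)/ln(k²/l²))`, the reduced integral equals
`8·(k² − l²)/ln(k²/l²)`; consequently the reduced σ₂-energy on the round 3-sphere of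
radius `R` equals `16π²·(k² − l²)/(R·ln(k²/l²))`. -/
theorem stmt_3 (k l : ℤ) (hk : k ≠ 0) (hl : l ≠ 0) (hkl : |k| > |l|)
    (α : ℝ → ℝ)
    (hα : α = fun s => arccos (1 - 2 * Real.log (((k : ℝ)^2 / (l : ℝ)^2) * sin s ^ 2 + cos s ^ 2)
      / Real.log ((k : ℝ)^2 / (l : ℝ)^2)))
    (R : ℝ) (hR : 0 < R) :
    (∫ s in (0:ℝ)..(π/2),
        ((k : ℝ)^2 * tan s + (l : ℝ)^2 * cot s) * (deriv α s)^2 * sin (α s)^2)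
      = 8 * ((k : ℝ)^2 - (l : ℝ)^2) / Real.log ((k : ℝ)^2 / (l : ℝ)^2) ∧
    (2 * π^2 / R) * (∫ s in (0:ℝ)..(π/2),
        ((k : ℝ)^2 * tan s + (l : ℝ)^2 * cot s) * (deriv α s)^2 * sin (α s)^2)
      = 16 * π^2 * ((k : ℝ)^2 - (l : ℝ)^2) / (R * Real.log ((k : ℝ)^2 / (l : ℝ)^2)) :=
  stmt_3_general k l hl hkl α hα R
end

section
/- Let k, ℓ be nonzero integers with |k| > |ℓ|. For every C¹ function α : [0, π/2] → ℝ with α(0) = 0 and α(π/2) = π one has ∫₀^{π/2} (k²·tan s + ℓ²·cot s)·α′(s)²·sin²α(s) ds ≥ 8·(k² − ℓ²)/ln(k²/ℓ²), and this lower bound is attained by α(s) = arccos(1 − 2·ln((k²/ℓ²)·sin²s + cos²s)/ln(k²/ℓ²)). In other words, this configuration is a global minimizer of the reduced σ₂-energy among all maps in the ansatz with the same boundary conditions. -/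
/-!
Write `w = a tan s + b cot s = (a sin² s + b cos² s) / (sin s cos s)` and `v = α' sin α`.
Completing the square, `w v² ≥ 2 c v - c² / w` for every constant `c`. Here `∫ v = [-cos α] = 2`
and `∫ 1 / w = ln (a / b) / (2 (a - b))`, so the choice `c = 4 (a - b) / ln (a / b)` gives the
bound `8 (a - b) / ln (a / b)`. Equality holds exactly when `v = c / w`, i.e. `(cos α)' = -c / w`,
and integrating this from `cos α (0) = 1` gives the arccos profile.

The energy of a C¹ map is finite: `sin α` vanishes at both endpoints, so with `M = max |α'|` we
have `|sin α s| ≤ M s` and `|sin α s| ≤ M (π / 2 - s)`, which cancel the simple poles of `cot` at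
`0` and of `tan` at `π / 2`.
-/

open Real Set intervalIntegral MeasureTheory

lemma sin_pos_and_cos_pos_of_mem_Ioo {s : ℝ} (hs : s ∈ Ioo 0 (π / 2)) : 0 < sin s ∧ 0 < cos s :=
  ⟨sin_pos_of_pos_of_lt_pi hs.1 (by linarith [hs.2, pi_pos]),
    cos_pos_of_mem_Ioo ⟨by linarith [hs.1, pi_pos], hs.2⟩⟩

noncomputable def quadSinCos (a b s : ℝ) : ℝ := a * sin s ^ 2 + b * cos s ^ 2

section quadSinCos

variable {a b : ℝ}

lemma quadSinCos_pos (ha : 0 < a) (hb : 0 < b) (s : ℝ) : 0 < quadSinCos a b s := by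
  have := sin_sq_add_cos_sq s
  unfold quadSinCos
  rcases le_total a b with h | h <;> nlinarith [sq_nonneg (sin s), sq_nonneg (cos s)]

lemma continuous_quadSinCos : Continuous (quadSinCos a b) := by
  unfold quadSinCos; fun_prop

lemma hasDerivAt_quadSinCos (s : ℝ) :
    HasDerivAt (quadSinCos a b) (2 * (a - b) * sin s * cos s) s := by
  have hsin := (hasDerivAt_sin s).fun_pow 2
  have hcos := (hasDerivAt_cos s).fun_pow 2
  exact ((hsin.const_mul a).add (hcos.const_mul b)).congr_deriv (by push_cast; ring)

/-- Also where `sin s * cos s = 0`: there both sides are `0` by the convention `x / 0 = 0`. -/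
lemma add_tan_cot_eq (s : ℝ) :
    a * tan s + b * cot s = quadSinCos a b s / (sin s * cos s) := by
  rw [tan_eq_sin_div_cos, cot_eq_cos_div_sin, quadSinCos]
  rcases eq_or_ne (sin s) 0 with hs | hs
  · simp [hs]
  rcases eq_or_ne (cos s) 0 with hc | hc
  · simp [hc]
  field_simp

lemma integral_sin_mul_cos_div_quadSinCos (ha : 0 < a) (hb : 0 < b) (hab : a ≠ b) :
    ∫ s in (0:ℝ)..π/2, sin s * cos s / quadSinCos a b s = log (a / b) / (2 * (a - b)) := by
  have hD := quadSinCos_pos ha hb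
  have hab' : a - b ≠ 0 := sub_ne_zero.2 hab
  have hderiv (s : ℝ) : HasDerivAt (fun s => log (quadSinCos a b s) / (2 * (a - b)))
      (sin s * cos s / quadSinCos a b s) s := by
    refine (((hasDerivAt_quadSinCos s).log (hD s).ne').div_const (2 * (a - b))).congr_deriv ?_
    field_simp
  rw [integral_deriv_eq_sub' _ (funext fun s => (hderiv s).deriv)
    (fun s _ => (hderiv s).differentiableAt)
    ((continuous_sin.mul continuous_cos).div continuous_quadSinCos fun s => (hD s).ne').continuousOn]
  simp [quadSinCos, log_div ha.ne' hb.ne', sub_div]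

end quadSinCos

lemma two_mul_mul_sub_sq_div_le {w : ℝ} (hw : 0 < w) (c v : ℝ) :
    2 * c * v - c ^ 2 / w ≤ w * v ^ 2 := by
  have h : w * v ^ 2 - (2 * c * v - c ^ 2 / w) = (w * v - c) ^ 2 / w := by
    field_simp
    ring
  rw [← sub_nonneg, h]
  positivity

lemma integral_derivWithin_mul_sin {α : ℝ → ℝ} {a b : ℝ} (hab : a < b)
    (hα : ContDiffOn ℝ 1 α (Icc a b)) :
    ∫ x in a..b, derivWithin α (Icc a b) x * sin (α x) = cos (α a) - cos (α b) := by
  have hcont : ContinuousOn α (Icc a b) := hα.continuousOn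
  have hg : ContinuousOn (derivWithin α (Icc a b)) (Icc a b) :=
    hα.continuousOn_derivWithin (uniqueDiffOn_Icc hab) le_rfl
  have hderiv (x : ℝ) (hx : x ∈ Ioo a b) :
      HasDerivAt (fun x => -cos (α x)) (derivWithin α (Icc a b) x * sin (α x)) x := by
    have hαx : HasDerivAt α (derivWithin α (Icc a b) x) x :=
      ((hα.differentiableOn one_ne_zero x (Ioo_subset_Icc_self hx)).hasDerivWithinAt).hasDerivAt
        (Icc_mem_nhds hx.1 hx.2)
    exact ((hasDerivAt_cos (α x)).comp x hαx).neg.congr_deriv (by ring)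
  rw [integral_eq_sub_of_hasDerivAt_of_le hab.le (continuous_cos.comp_continuousOn hcont).neg hderiv
    ((hg.mul (continuous_sin.comp_continuousOn hcont)).intervalIntegrable_of_Icc hab.le)]
  simp only [Pi.neg_apply, Function.comp_apply]
  ring

lemma cot_mul_sq_le {t y M : ℝ} (ht0 : 0 < t) (ht1 : t < π / 2) (hy : |y| ≤ M * t) :
    cot t * y ^ 2 ≤ M ^ 2 * t := by
  obtain ⟨hsin, hcos⟩ := sin_pos_and_cos_pos_of_mem_Ioo ⟨ht0, ht1⟩
  have hcot : 0 ≤ cot t := by rw [cot_eq_cos_div_sin]; positivity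
  have hcot_mul : cot t * t ≤ 1 := by
    have := le_tan ht0.le ht1
    rw [tan_eq_sin_div_cos, le_div_iff₀ hcos] at this
    rw [cot_eq_cos_div_sin, div_mul_eq_mul_div, div_le_one hsin]
    linarith
  have hy2 : y ^ 2 ≤ (M * t) ^ 2 := sq_le_sq' (abs_le.1 hy).1 (abs_le.1 hy).2
  calc cot t * y ^ 2 ≤ cot t * (M * t) ^ 2 := mul_le_mul_of_nonneg_left hy2 hcot
    _ = M ^ 2 * t * (cot t * t) := by ring
    _ ≤ M ^ 2 * t := mul_le_of_le_one_right (by nlinarith) hcot_mul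

lemma tan_mul_sq_le {t y M : ℝ} (ht0 : 0 < t) (ht1 : t < π / 2) (hy : |y| ≤ M * (π / 2 - t)) :
    tan t * y ^ 2 ≤ M ^ 2 * (π / 2 - t) := by
  have := cot_mul_sq_le (t := π / 2 - t) (by linarith) (by linarith) hy
  rwa [cot_eq_cos_div_sin, cos_pi_div_two_sub, sin_pi_div_two_sub, ← tan_eq_sin_div_cos] at this

lemma intervalIntegrable_tan_cot_energy (a b : ℝ) {α : ℝ → ℝ}
    (hα : ContDiffOn ℝ 1 α (Icc 0 (π / 2))) (h0 : sin (α 0) = 0) (h1 : sin (α (π / 2)) = 0) :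
    IntervalIntegrable (fun s => (a * tan s + b * cot s) *
      derivWithin α (Icc 0 (π / 2)) s ^ 2 * sin (α s) ^ 2) volume 0 (π / 2) := by
  have hpi : (0:ℝ) < π / 2 := by positivity
  set g := derivWithin α (Icc 0 (π / 2))
  have hg : ContinuousOn g (Icc 0 (π / 2)) :=
    hα.continuousOn_derivWithin (uniqueDiffOn_Icc hpi) le_rfl
  obtain ⟨M, hM⟩ := isCompact_Icc.exists_bound_of_continuousOn hg
  have hsin_lip {x y : ℝ} (hx : x ∈ Icc 0 (π / 2)) (hy : y ∈ Icc 0 (π / 2)) :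
      |sin (α y) - sin (α x)| ≤ M * |y - x| :=
    (abs_sin_sub_sin_le _ _).trans <| by
      simpa using (convex_Icc _ _).norm_image_sub_le_of_norm_derivWithin_le
        (hα.differentiableOn one_ne_zero) hM hx hy
  have hbound (s : ℝ) (hs : s ∈ Ioo 0 (π / 2)) :
      ‖(a * tan s + b * cot s) * g s ^ 2 * sin (α s) ^ 2‖ ≤ (|a| + |b|) * M ^ 4 * (π / 2) := by
    have hs' := Ioo_subset_Icc_self hs
    obtain ⟨hsin, hcos⟩ := sin_pos_and_cos_pos_of_mem_Ioo hs
    have htan : 0 ≤ tan s := by rw [tan_eq_sin_div_cos]; positivity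
    have hcot : 0 ≤ cot s := by rw [cot_eq_cos_div_sin]; positivity
    have hT : tan s * sin (α s) ^ 2 ≤ M ^ 2 * (π / 2 - s) := by
      refine tan_mul_sq_le hs.1 hs.2 ?_
      simpa [h1, abs_sub_comm, abs_of_pos (sub_pos.2 hs.2)] using
        hsin_lip hs' ⟨hpi.le, le_rfl⟩
    have hC : cot s * sin (α s) ^ 2 ≤ M ^ 2 * s := by
      refine cot_mul_sq_le hs.1 hs.2 ?_
      simpa [h0, abs_of_pos hs.1] using hsin_lip ⟨le_rfl, hpi.le⟩ hs'
    have hg2 : g s ^ 2 ≤ M ^ 2 := sq_le_sq' (abs_le.1 (hM s hs')).1 (abs_le.1 (hM s hs')).2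
    calc ‖(a * tan s + b * cot s) * g s ^ 2 * sin (α s) ^ 2‖
        = |(a * (tan s * sin (α s) ^ 2) + b * (cot s * sin (α s) ^ 2)) * g s ^ 2| := by
          rw [norm_eq_abs]; ring_nf
      _ ≤ (|a| * (M ^ 2 * (π / 2)) + |b| * (M ^ 2 * (π / 2))) * M ^ 2 := by
          rw [abs_mul, abs_of_nonneg (sq_nonneg (g s))]
          gcongr
          refine (abs_add_le _ _).trans ?_
          rw [abs_mul a, abs_mul b, abs_of_nonneg (mul_nonneg htan (sq_nonneg _)),
            abs_of_nonneg (mul_nonneg hcot (sq_nonneg _))]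
          gcongr |a| * ?_ + |b| * ?_
          · exact hT.trans (by gcongr; linarith [hs.1])
          · exact hC.trans (by gcongr; exact hs.2.le)
      _ = (|a| + |b|) * M ^ 4 * (π / 2) := by ring
  have hcot : ContinuousOn cot (Ioo 0 (π / 2)) :=
    (continuous_cos.continuousOn.div continuous_sin.continuousOn fun x hx =>
      (sin_pos_and_cos_pos_of_mem_Ioo hx).1.ne').congr
      fun x _ => cot_eq_cos_div_sin x
  have htan : ContinuousOn tan (Ioo 0 (π / 2)) :=
    continuousOn_tan_Ioo.mono (Ioo_subset_Ioo_left (by linarith))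
  have hcont : ContinuousOn (fun s => (a * tan s + b * cot s) * g s ^ 2 * sin (α s) ^ 2)
      (Ioo 0 (π / 2)) := by
    have := hg.mono Ioo_subset_Icc_self
    have := hα.continuousOn.mono Ioo_subset_Icc_self
    fun_prop
  rw [intervalIntegrable_iff_integrableOn_Ioo_of_le hpi.le]
  exact IntegrableOn.of_bound measure_Ioo_lt_top (hcont.aestronglyMeasurable measurableSet_Ioo) _
    (ae_restrict_of_forall_mem measurableSet_Ioo hbound)

theorem le_integral_tan_cot_energy {a b : ℝ} (hb : 0 < b) (hab : b < a) {α : ℝ → ℝ}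
    (hα : ContDiffOn ℝ 1 α (Icc 0 (π / 2))) (h0 : α 0 = 0) (h1 : α (π / 2) = π) :
    8 * (a - b) / log (a / b) ≤ ∫ s in (0:ℝ)..π / 2,
      (a * tan s + b * cot s) * derivWithin α (Icc 0 (π / 2)) s ^ 2 * sin (α s) ^ 2 := by
  have ha : 0 < a := hb.trans hab
  have hpi : (0:ℝ) < π / 2 := by positivity
  have hL : 0 < log (a / b) := log_pos ((one_lt_div hb).2 hab)
  set g := derivWithin α (Icc 0 (π / 2))
  set c := 4 * (a - b) / log (a / b)
  have hv : ∫ s in (0:ℝ)..π / 2, g s * sin (α s) = 2 := by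
    rw [integral_derivWithin_mul_sin hpi hα, h0, h1]
    norm_num
  have hv_int : IntervalIntegrable (fun s => g s * sin (α s)) volume 0 (π / 2) :=
    ((hα.continuousOn_derivWithin (uniqueDiffOn_Icc hpi) le_rfl).mul
      (continuous_sin.comp_continuousOn hα.continuousOn)).intervalIntegrable_of_Icc hpi.le
  have hw_int : IntervalIntegrable (fun s => sin s * cos s / quadSinCos a b s) volume 0 (π / 2) :=
    ((continuous_sin.mul continuous_cos).div continuous_quadSinCos
      fun s => (quadSinCos_pos ha hb s).ne').intervalIntegrable _ _
  calc 8 * (a - b) / log (a / b)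
      = ∫ s in (0:ℝ)..π / 2,
          2 * c * (g s * sin (α s)) - c ^ 2 * (sin s * cos s / quadSinCos a b s) := by
        rw [integral_sub (hv_int.const_mul _) (hw_int.const_mul _),
          intervalIntegral.integral_const_mul, intervalIntegral.integral_const_mul, hv,
          integral_sin_mul_cos_div_quadSinCos ha hb hab.ne']
        simp only [c]
        field_simp
        ring
    _ ≤ _ := by
      refine integral_mono_on_of_le_Ioo hpi.le ((hv_int.const_mul _).sub (hw_int.const_mul _))
        (intervalIntegrable_tan_cot_energy a b hα (by simp [h0]) (by simp [h1])) fun s hs => ?_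
      obtain ⟨hsin, hcos⟩ := sin_pos_and_cos_pos_of_mem_Ioo hs
      have hw : 0 < a * tan s + b * cot s := by
        rw [add_tan_cot_eq]; exact div_pos (quadSinCos_pos ha hb s) (mul_pos hsin hcos)
      calc 2 * c * (g s * sin (α s)) - c ^ 2 * (sin s * cos s / quadSinCos a b s)
          = 2 * c * (g s * sin (α s)) - c ^ 2 / (a * tan s + b * cot s) := by
            rw [add_tan_cot_eq]
            field_simp
        _ ≤ (a * tan s + b * cot s) * (g s * sin (α s)) ^ 2 := two_mul_mul_sub_sq_div_le hw _ _
        _ = _ := by ring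

noncomputable def optimalProfile (q s : ℝ) : ℝ :=
  arccos (1 - 2 * log (q * sin s ^ 2 + cos s ^ 2) / log q)

lemma derivWithin_optimalProfile_mul_sin {q s : ℝ} (hq : 1 < q) (hs : s ∈ Ioo 0 (π / 2)) :
    derivWithin (optimalProfile q) (Icc 0 (π / 2)) s * sin (optimalProfile q s)
      = 4 * (q - 1) / log q * (sin s * cos s / quadSinCos q 1 s) := by
  have hL : 0 < log q := log_pos hq
  obtain ⟨hsin, hcos⟩ := sin_pos_and_cos_pos_of_mem_Ioo hs
  have hD : ∀ t, q * sin t ^ 2 + cos t ^ 2 = quadSinCos q 1 t := fun t => by simp [quadSinCos]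
  have hD0 : 0 < quadSinCos q 1 s := quadSinCos_pos (by linarith) one_pos s
  have hD_gt : 1 < quadSinCos q 1 s := by
    simp only [quadSinCos]; nlinarith [sin_sq_add_cos_sq s, pow_pos hsin 2]
  have hD_lt : quadSinCos q 1 s < q := by
    simp only [quadSinCos]; nlinarith [sin_sq_add_cos_sq s, pow_pos hcos 2]
  set u : ℝ → ℝ := fun t => 1 - 2 * log (quadSinCos q 1 t) / log q
  have hu_lt : u s < 1 := by
    have : 0 < 2 * log (quadSinCos q 1 s) / log q := by have := log_pos hD_gt; positivity
    simp only [u]; linarith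
  have hu_gt : -1 < u s := by
    have : 2 * log (quadSinCos q 1 s) / log q < 2 := by
      rw [div_lt_iff₀ hL]; linarith [log_lt_log hD0 hD_lt]
    simp only [u]; linarith
  have hu : HasDerivAt u (-(4 * (q - 1) / log q * (sin s * cos s / quadSinCos q 1 s))) s := by
    refine ((((hasDerivAt_quadSinCos s).log hD0.ne').const_mul 2).div_const _).const_sub 1
      |>.congr_deriv ?_
    field_simp
    ring
  have hprofile : optimalProfile q = arccos ∘ u := by
    funext t; simp only [optimalProfile, u, hD, Function.comp_apply]
  have hsqrt : 0 < √(1 - u s ^ 2) := sqrt_pos.2 (by nlinarith)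
  rw [hprofile, ((hasDerivAt_arccos hu_gt.ne' hu_lt.ne).comp s hu).hasDerivWithinAt.derivWithin
    (uniqueDiffOn_Icc (by positivity) s (Ioo_subset_Icc_self hs)), Function.comp_apply,
    sin_arccos]
  field_simp

theorem integral_tan_cot_energy_optimalProfile {q : ℝ} (hq : 1 < q) :
    ∫ s in (0:ℝ)..π / 2, (q * tan s + cot s) * derivWithin (optimalProfile q) (Icc 0 (π / 2)) s ^ 2
      * sin (optimalProfile q s) ^ 2 = 8 * (q - 1) / log q := by
  have hL : 0 < log q := log_pos hq
  calc _ = ∫ s in (0:ℝ)..π / 2, (4 * (q - 1) / log q) ^ 2 * (sin s * cos s / quadSinCos q 1 s) := by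
        refine integral_congr_Ioo_of_le (by positivity) fun s hs => ?_
        obtain ⟨hsin, hcos⟩ := sin_pos_and_cos_pos_of_mem_Ioo hs
        have hw : q * tan s + cot s = quadSinCos q 1 s / (sin s * cos s) := by
          simpa using add_tan_cot_eq (a := q) (b := 1) s
        have := derivWithin_optimalProfile_mul_sin hq hs
        calc (q * tan s + cot s) * derivWithin (optimalProfile q) (Icc 0 (π / 2)) s ^ 2
              * sin (optimalProfile q s) ^ 2
            = (q * tan s + cot s) * (derivWithin (optimalProfile q) (Icc 0 (π / 2)) s
              * sin (optimalProfile q s)) ^ 2 := by ring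
          _ = _ := by rw [this, hw]; field_simp
    _ = 8 * (q - 1) / log q := by
      rw [intervalIntegral.integral_const_mul,
        integral_sin_mul_cos_div_quadSinCos (by linarith) one_pos hq.ne',
        div_one]
      field_simp
      ring

theorem stmt_5_general (k l : ℤ) (hl : l ≠ 0) (hkl : |k| > |l|) :
    (∀ α : ℝ → ℝ, ContDiffOn ℝ 1 α (Icc 0 (π/2)) → α 0 = 0 → α (π/2) = π →
      8 * ((k : ℝ)^2 - (l : ℝ)^2) / Real.log ((k : ℝ)^2 / (l : ℝ)^2) ≤
        ∫ s in (0:ℝ)..(π/2), ((k : ℝ)^2 * tan s + (l : ℝ)^2 * cot s) *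
          (derivWithin α (Icc 0 (π/2)) s)^2 * sin (α s)^2) ∧
    (∫ s in (0:ℝ)..(π/2), ((k : ℝ)^2 * tan s + (l : ℝ)^2 * cot s) *
        (derivWithin (fun s => arccos (1 - 2 * Real.log (((k : ℝ)^2 / (l : ℝ)^2) * sin s ^ 2
            + cos s ^ 2) / Real.log ((k : ℝ)^2 / (l : ℝ)^2))) (Icc 0 (π/2)) s)^2 *
        sin (arccos (1 - 2 * Real.log (((k : ℝ)^2 / (l : ℝ)^2) * sin s ^ 2 + cos s ^ 2)
            / Real.log ((k : ℝ)^2 / (l : ℝ)^2)))^2)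
      = 8 * ((k : ℝ)^2 - (l : ℝ)^2) / Real.log ((k : ℝ)^2 / (l : ℝ)^2) := by
  have hb : (0:ℝ) < (l:ℝ) ^ 2 := by positivity
  have hab : (l:ℝ) ^ 2 < (k:ℝ) ^ 2 := by exact_mod_cast sq_lt_sq.2 hkl
  refine ⟨fun α hα h0 h1 => le_integral_tan_cot_energy hb hab hα h0 h1, ?_⟩
  have hweight (s : ℝ) : (k:ℝ) ^ 2 * tan s + (l:ℝ) ^ 2 * cot s
      = (l:ℝ) ^ 2 * ((k:ℝ) ^ 2 / (l:ℝ) ^ 2 * tan s + cot s) := by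
    field_simp
  have henergy := integral_tan_cot_energy_optimalProfile ((one_lt_div hb).2 hab)
  simp only [mul_assoc] at henergy
  simp_rw [hweight, mul_assoc, intervalIntegral.integral_const_mul]
  exact (congrArg (fun x => (l:ℝ) ^ 2 * x) henergy).trans (by field_simp)

/-- For nonzero integers `k, l` with `|k| > |l|`, every C¹ function
`α : [0, π/2] → ℝ` with `α(0) = 0`, `α(π/2) = π` satisfies
`∫₀^{π/2} (k²·tan s + l²·cot s)·α'(s)²·sin²α(s) ds ≥ 8·(k² − l²)/ln(k²/l²)`, and the bound
is attained by `α(s) = arccos(1 − 2·ln((k²/l²)·sin²s + cos²s)/ln(k²/l²))`: this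
configuration is a global minimizer of the reduced σ₂-energy with these boundary data. -/
theorem stmt_5 (k l : ℤ) (hk : k ≠ 0) (hl : l ≠ 0) (hkl : |k| > |l|) :
    (∀ α : ℝ → ℝ, ContDiffOn ℝ 1 α (Icc 0 (π/2)) → α 0 = 0 → α (π/2) = π →
      8 * ((k : ℝ)^2 - (l : ℝ)^2) / Real.log ((k : ℝ)^2 / (l : ℝ)^2) ≤
        ∫ s in (0:ℝ)..(π/2), ((k : ℝ)^2 * tan s + (l : ℝ)^2 * cot s) *
          (derivWithin α (Icc 0 (π/2)) s)^2 * sin (α s)^2) ∧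
    (∫ s in (0:ℝ)..(π/2), ((k : ℝ)^2 * tan s + (l : ℝ)^2 * cot s) *
        (derivWithin (fun s => arccos (1 - 2 * Real.log (((k : ℝ)^2 / (l : ℝ)^2) * sin s ^ 2
            + cos s ^ 2) / Real.log ((k : ℝ)^2 / (l : ℝ)^2))) (Icc 0 (π/2)) s)^2 *
        sin (arccos (1 - 2 * Real.log (((k : ℝ)^2 / (l : ℝ)^2) * sin s ^ 2 + cos s ^ 2)
            / Real.log ((k : ℝ)^2 / (l : ℝ)^2)))^2)
      = 8 * ((k : ℝ)^2 - (l : ℝ)^2) / Real.log ((k : ℝ)^2 / (l : ℝ)^2) :=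
  stmt_5_general k l hl hkl
end

section
/- Let k be a nonzero integer. For every C¹ function α : [0, π/2] → ℝ with α(0) = 0 and α(π/2) = π one has ∫₀^{π/2} k²·(tan s + cot s)·α′(s)²·sin²α(s) ds ≥ 8k², with equality for α(s) = 2s. In other words, the configuration with α(s) = 2s and ℓ = ±k attains the absolute minimum of the reduced σ₂-energy 16π²k²/R, matching the topological lower bound 16π²·|Q| with Hopf invariant Q = ±k². -/
/-!
On `(0, π/2)` one has `tan s + cot s = 2 / sin 2s`, so the energy density is
`2c u² / v` with `u = sin α · α'` and `v = sin 2s > 0`. Completing the square,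
`u² / v ≥ 4 (u - v)`, with equality iff `u = 2v`, which holds for `α(s) = 2s`. Integrating,
`∫ u = cos α(0) - cos α(π/2) = 2` by substitution and `∫ v = 1`, whence the bound `8c`.
The density is integrable (which the Bochner integral needs) because it is bounded:
`sin ∘ α` is Lipschitz and vanishes at both ends, so `sin² α(s) = O(s (π/2 - s)) = O(sin 2s)`.
-/

open Real Set intervalIntegral MeasureTheory
open scoped NNReal

theorem Real.tan_add_cot (x : ℝ) : tan x + cot x = 2 / sin (2 * x) := by
  rw [tan_eq_sin_div_cos, cot_eq_cos_div_sin, sin_two_mul]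
  rcases eq_or_ne (sin x) 0 with hs | hs
  · simp [hs]
  rcases eq_or_ne (cos x) 0 with hc | hc
  · simp [hc]
  field_simp
  linear_combination sin_sq_add_cos_sq x

theorem four_mul_sub_le_sq_div {u v : ℝ} (hv : 0 < v) : 4 * (u - v) ≤ u ^ 2 / v := by
  rw [le_div_iff₀ hv]
  nlinarith [sq_nonneg (u - 2 * v)]

theorem LipschitzOnWith.sq_le_of_eq_zero {h : ℝ → ℝ} {K : ℝ≥0} {a b s : ℝ}
    (hh : LipschitzOnWith K h (Icc a b)) (ha : h a = 0) (hb : h b = 0) (hs : s ∈ Icc a b) :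
    h s ^ 2 ≤ K ^ 2 * ((s - a) * (b - s)) := by
  have hab : a ≤ b := hs.1.trans hs.2
  have hla : |h s| ≤ K * (s - a) := by
    simpa [ha, Real.dist_eq, abs_of_nonneg (sub_nonneg.2 hs.1)] using
      hh.dist_le_mul s hs a ⟨le_rfl, hab⟩
  have hlb : |h s| ≤ K * (b - s) := by
    simpa [hb, Real.dist_eq, abs_of_nonpos (sub_nonpos.2 hs.2)] using
      hh.dist_le_mul s hs b ⟨hab, le_rfl⟩
  have hKa : 0 ≤ (K : ℝ) * (s - a) := mul_nonneg K.2 (sub_nonneg.2 hs.1)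
  calc h s ^ 2 = |h s| * |h s| := by rw [abs_mul_abs_self, sq]
    _ ≤ (K * (s - a)) * (K * (b - s)) := mul_le_mul hla hlb (abs_nonneg _) hKa
    _ = K ^ 2 * ((s - a) * (b - s)) := by ring

theorem mul_sub_le_sin_two_mul {s : ℝ} (hs : s ∈ Icc 0 (π / 2)) :
    s * (π / 2 - s) ≤ π ^ 2 / 8 * sin (2 * s) := by
  have hsin : 2 / π * s ≤ sin s := mul_le_sin hs.1 hs.2
  have hcos : 2 / π * (π / 2 - s) ≤ cos s := by
    have := mul_le_sin (x := π / 2 - s) (by linarith [hs.2]) (by linarith [hs.1])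
    rwa [sin_pi_div_two_sub] at this
  have hprod := mul_le_mul hsin hcos (by have := hs.2; positivity)
    (sin_nonneg_of_nonneg_of_le_pi hs.1 (by linarith [hs.2, pi_pos]))
  rw [sin_two_mul]
  calc s * (π / 2 - s) = π ^ 2 / 4 * (2 / π * s * (2 / π * (π / 2 - s))) := by
        field_simp
        ring
    _ ≤ π ^ 2 / 4 * (sin s * cos s) := by gcongr
    _ = π ^ 2 / 8 * (2 * sin s * cos s) := by ring

theorem integral_sin_two_mul : ∫ s in (0 : ℝ)..π / 2, sin (2 * s) = 1 := by
  rw [integral_comp_mul_left sin two_ne_zero, mul_zero, mul_div_cancel₀ π two_ne_zero,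
    integral_sin, cos_zero, cos_pi]
  norm_num

theorem integral_sin_comp_mul_derivWithin {α : ℝ → ℝ} {a b : ℝ} (hab : a < b)
    (hα : ContDiffOn ℝ 1 α (Icc a b)) :
    ∫ s in a..b, sin (α s) * derivWithin α (Icc a b) s = cos (α a) - cos (α b) := by
  have hderiv : ∀ x ∈ Ioo (min a b) (max a b),
      HasDerivWithinAt α (derivWithin α (Icc a b) x) (Ioi x) x := by
    rw [min_eq_left hab.le, max_eq_right hab.le]
    intro x hx
    have hnhds : Icc a b ∈ nhds x := Icc_mem_nhds hx.1 hx.2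
    have hdiff := (hα.differentiableOn one_ne_zero x (Ioo_subset_Icc_self hx)).differentiableAt
      hnhds
    rw [derivWithin_of_mem_nhds hnhds]
    exact hdiff.hasDerivAt.hasDerivWithinAt
  rw [← integral_sin]
  refine integral_comp_mul_deriv'' ?_ hderiv ?_ continuous_sin.continuousOn <;>
    rw [uIcc_of_le hab.le]
  exacts [hα.continuousOn, hα.continuousOn_derivWithin (uniqueDiffOn_Icc hab) le_rfl]

/-- The integrand of the reduced σ₂-energy for `ℓ = ±k`: `c = k²` and `α'` stands for `α′`. -/
noncomputable def energyDensity (c : ℝ) (α α' : ℝ → ℝ) (s : ℝ) : ℝ :=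
  c * (tan s + cot s) * α' s ^ 2 * sin (α s) ^ 2

section EnergyDensity

variable {α α' : ℝ → ℝ} {c : ℝ}

theorem energyDensity_eq (s : ℝ) :
    energyDensity c α α' s = 2 * c * (sin (α s) * α' s) ^ 2 / sin (2 * s) := by
  rw [energyDensity, tan_add_cot]
  ring

theorem abs_energyDensity_le {s M : ℝ} {K : ℝ≥0} (hs : s ∈ Icc 0 (π / 2)) (hM : |α' s| ≤ M)
    (hK : LipschitzOnWith K (sin ∘ α) (Icc 0 (π / 2))) (h0 : sin (α 0) = 0)
    (h1 : sin (α (π / 2)) = 0) :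
    |energyDensity c α α' s| ≤ |c| * M ^ 2 * K ^ 2 * π ^ 2 / 4 := by
  have hv : 0 ≤ sin (2 * s) :=
    sin_nonneg_of_nonneg_of_le_pi (by linarith [hs.1]) (by linarith [hs.2])
  have hsin : sin (α s) ^ 2 ≤ K ^ 2 * (s * (π / 2 - s)) := by
    simpa using hK.sq_le_of_eq_zero h0 h1 hs
  have hα' : α' s ^ 2 ≤ M ^ 2 := sq_le_sq' (abs_le.1 hM).1 (abs_le.1 hM).2
  rw [energyDensity_eq, abs_div, abs_of_nonneg hv, abs_mul, abs_mul, abs_two,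
    abs_of_nonneg (sq_nonneg (sin (α s) * α' s))]
  refine div_le_of_le_mul₀ hv (by positivity) ?_
  calc 2 * |c| * (sin (α s) * α' s) ^ 2
      ≤ 2 * |c| * (K ^ 2 * (s * (π / 2 - s)) * M ^ 2) := by
        rw [mul_pow]
        gcongr 2 * |c| * ?_
        exact mul_le_mul hsin hα' (sq_nonneg _) ((sq_nonneg _).trans hsin)
    _ ≤ 2 * |c| * (K ^ 2 * (π ^ 2 / 8 * sin (2 * s)) * M ^ 2) := by
        gcongr 2 * |c| * (_ * ?_ * _)
        exact mul_sub_le_sin_two_mul hs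
    _ = |c| * M ^ 2 * K ^ 2 * π ^ 2 / 4 * sin (2 * s) := by ring

theorem continuousOn_energyDensity (hα : ContinuousOn α (Ioo 0 (π / 2)))
    (hα' : ContinuousOn α' (Ioo 0 (π / 2))) :
    ContinuousOn (energyDensity c α α') (Ioo 0 (π / 2)) := by
  simp_rw [funext (energyDensity_eq (c := c) (α := α) (α' := α'))]
  refine ContinuousOn.div (by fun_prop) (by fun_prop) fun s hs => (sin_pos_of_pos_of_lt_pi
    (by linarith [hs.1]) (by linarith [hs.2])).ne'

end EnergyDensity

theorem intervalIntegrable_energyDensity {α : ℝ → ℝ} (hα : ContDiffOn ℝ 1 α (Icc 0 (π / 2)))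
    (h0 : sin (α 0) = 0) (h1 : sin (α (π / 2)) = 0) (c : ℝ) :
    IntervalIntegrable (energyDensity c α (derivWithin α (Icc 0 (π / 2)))) volume 0 (π / 2) := by
  have hpi : 0 < π / 2 := by positivity
  have hα' := hα.continuousOn_derivWithin (uniqueDiffOn_Icc hpi) le_rfl
  obtain ⟨M, hM⟩ := isCompact_Icc.exists_bound_of_continuousOn hα'
  obtain ⟨K, hK⟩ := (contDiff_sin.comp_contDiffOn hα).exists_lipschitzOnWith one_ne_zero
    (convex_Icc _ _) isCompact_Icc
  rw [intervalIntegrable_iff_integrableOn_Ioo_of_le hpi.le]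
  refine ⟨(continuousOn_energyDensity (hα.continuousOn.mono Ioo_subset_Icc_self)
      (hα'.mono Ioo_subset_Icc_self)).aestronglyMeasurable measurableSet_Ioo,
    .restrict_of_bounded (C := |c| * M ^ 2 * K ^ 2 * π ^ 2 / 4) measure_Ioo_lt_top ?_⟩
  filter_upwards [ae_restrict_mem measurableSet_Ioo] with s hs
  exact abs_energyDensity_le (Ioo_subset_Icc_self hs) (hM s (Ioo_subset_Icc_self hs)) hK h0 h1

theorem le_integral_energyDensity {α : ℝ → ℝ} {c : ℝ} (hc : 0 ≤ c)
    (hα : ContDiffOn ℝ 1 α (Icc 0 (π / 2))) (h0 : α 0 = 0) (h1 : α (π / 2) = π) :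
    8 * c ≤ ∫ s in (0 : ℝ)..π / 2, energyDensity c α (derivWithin α (Icc 0 (π / 2))) s := by
  have hpi : 0 < π / 2 := by positivity
  set α' := derivWithin α (Icc 0 (π / 2))
  have hα' : ContinuousOn α' (Icc 0 (π / 2)) :=
    hα.continuousOn_derivWithin (uniqueDiffOn_Icc hpi) le_rfl
  have hu : IntervalIntegrable (fun s => sin (α s) * α' s) volume 0 (π / 2) :=
    ((continuous_sin.comp_continuousOn hα.continuousOn).mul hα').intervalIntegrable_of_Icc hpi.le
  have hv : IntervalIntegrable (fun s => sin (2 * s)) volume 0 (π / 2) := by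
    apply Continuous.intervalIntegrable
    fun_prop
  calc 8 * c = ∫ s in (0 : ℝ)..π / 2, 8 * c * (sin (α s) * α' s - sin (2 * s)) := by
        rw [intervalIntegral.integral_const_mul, intervalIntegral.integral_sub hu hv,
          integral_sin_comp_mul_derivWithin hpi hα, integral_sin_two_mul, h0, h1, cos_zero, cos_pi]
        ring
    _ ≤ ∫ s in (0 : ℝ)..π / 2, energyDensity c α α' s := by
        refine integral_mono_on_of_le_Ioo hpi.le ((hu.sub hv).const_mul _)
          (intervalIntegrable_energyDensity hα (by simp [h0]) (by simp [h1]) c) fun s hs => ?_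
        have hsin : 0 < sin (2 * s) :=
          sin_pos_of_pos_of_lt_pi (by linarith [hs.1]) (by linarith [hs.2])
        rw [energyDensity_eq, mul_div_assoc, show 8 * c = 2 * c * 4 by ring, mul_assoc]
        exact mul_le_mul_of_nonneg_left (four_mul_sub_le_sq_div hsin) (by positivity)

theorem integral_energyDensity_two_mul (c : ℝ) :
    ∫ s in (0 : ℝ)..π / 2,
      energyDensity c (fun s => 2 * s) (derivWithin (fun s => 2 * s) (Icc 0 (π / 2))) s
      = 8 * c := by
  have hpi : 0 < π / 2 := by positivity
  have hderiv : ∀ s ∈ uIcc 0 (π / 2), derivWithin (fun s => 2 * s) (Icc 0 (π / 2)) s = 2 := by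
    rw [uIcc_of_le hpi.le]
    intro s hs
    simpa using ((hasDerivAt_id s).const_mul 2).hasDerivWithinAt.derivWithin
      (uniqueDiffOn_Icc hpi s hs)
  rw [integral_congr (g := fun s => 8 * c * sin (2 * s)) fun s hs => ?_,
    intervalIntegral.integral_const_mul, integral_sin_two_mul, mul_one]
  rw [energyDensity_eq, hderiv s hs]
  rcases eq_or_ne (sin (2 * s)) 0 with h | h
  · simp [h]
  field_simp
  ring

theorem stmt_6_general (k : ℤ) :
    (∀ α : ℝ → ℝ, ContDiffOn ℝ 1 α (Icc 0 (π/2)) → α 0 = 0 → α (π/2) = π →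
      8 * (k : ℝ)^2 ≤
        ∫ s in (0:ℝ)..(π/2), (k : ℝ)^2 * (tan s + cot s) *
          (derivWithin α (Icc 0 (π/2)) s)^2 * sin (α s)^2) ∧
    (∫ s in (0:ℝ)..(π/2), (k : ℝ)^2 * (tan s + cot s) *
        (derivWithin (fun s => 2 * s) (Icc 0 (π/2)) s)^2 * sin (2 * s)^2)
      = 8 * (k : ℝ)^2 ∧
    ∀ R : ℝ, 0 < R → (2 * π^2 / R) * (8 * (k : ℝ)^2) = 16 * π^2 * (k : ℝ)^2 / R :=
  ⟨fun _ hα h0 h1 => le_integral_energyDensity (sq_nonneg _) hα h0 h1,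
    integral_energyDensity_two_mul _, fun _ _ => by ring⟩

/-- For a nonzero integer `k`, every C¹ function `α : [0, π/2] → ℝ` with
`α(0) = 0`, `α(π/2) = π` satisfies `∫₀^{π/2} k²·(tan s + cot s)·α'(s)²·sin²α(s) ds ≥ 8k²`,
with equality for `α(s) = 2s`; thus the configuration with `α(s) = 2s`, `l = ±k` attains
the absolute minimum `16π²k²/R` of the reduced σ₂-energy (the topological bound for
Hopf invariant `Q = ±k²`). -/
theorem stmt_6 (k : ℤ) (hk : k ≠ 0) :
    (∀ α : ℝ → ℝ, ContDiffOn ℝ 1 α (Icc 0 (π/2)) → α 0 = 0 → α (π/2) = π →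
      8 * (k : ℝ)^2 ≤
        ∫ s in (0:ℝ)..(π/2), (k : ℝ)^2 * (tan s + cot s) *
          (derivWithin α (Icc 0 (π/2)) s)^2 * sin (α s)^2) ∧
    (∫ s in (0:ℝ)..(π/2), (k : ℝ)^2 * (tan s + cot s) *
        (derivWithin (fun s => 2 * s) (Icc 0 (π/2)) s)^2 * sin (2 * s)^2)
      = 8 * (k : ℝ)^2 ∧
    ∀ R : ℝ, 0 < R → (2 * π^2 / R) * (8 * (k : ℝ)^2) = 16 * π^2 * (k : ℝ)^2 / R :=
  stmt_6_general k
end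

section
/- Let k, ℓ be nonzero integers and let α be either α(s) = arccos(1 − 2·ln((k²/ℓ²)·sin²s + cos²s)/ln(k²/ℓ²)) if |k| > |ℓ|, or α(s) = 2s if |k| = |ℓ|. Then for every smooth function v : [0, π/2] → ℝ with v(0) = v(π/2) = 0, the second variation of the reduced σ₂-energy is nonnegative: (d²/dt²)|_{t=0} ∫₀^{π/2} (k²·tan s + ℓ²·cot s)·((α+tv)′(s))²·sin²((α+tv)(s)) ds ≥ 0; i.e., these solutions are stable critical points of the reduced σ₂-energy. -/
open Real Set intervalIntegral MeasureTheory Filter Topology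

noncomputable section

set_option maxHeartbeats 1000000

/-- A bounded function continuous on the open interval is interval integrable. -/
lemma bdd_intervalIntegrable {f : ℝ → ℝ} {C : ℝ}
    (hc : ContinuousOn f (Ioo 0 (π/2))) (hb : ∀ s ∈ Ioo 0 (π/2), |f s| ≤ C) :
    IntervalIntegrable f volume 0 (π/2) := by
  have hle : (0:ℝ) ≤ π/2 := by positivity
  rw [intervalIntegrable_iff, uIoc_of_le hle]
  rw [integrableOn_Ioc_iff_integrableOn_Ioo]
  refine ⟨hc.aestronglyMeasurable measurableSet_Ioo, ?_⟩
  apply HasFiniteIntegral.restrict_of_bounded (C := C)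
      (measure_Ioo_lt_top)
  filter_upwards [ae_restrict_mem measurableSet_Ioo] with s hs
  simpa using hb s hs

/-- Junk-value-robust: if `G ≥ 0`, `G 0 = 0` and `G` is continuous at `0`, then
`deriv (deriv G) 0 ≥ 0`. -/
lemma second_deriv_nonneg_of_min {G : ℝ → ℝ} (h0 : G 0 = 0)
    (hpos : ∀ t, 0 ≤ G t) (hcont : ContinuousAt G 0) :
    0 ≤ deriv (deriv G) 0 := by
  by_contra hneg
  push_neg at hneg
  set g := deriv G with hg
  have hg0 : g 0 = 0 := by
    by_cases hd : DifferentiableAt ℝ G 0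
    · have hmin : IsLocalMin G 0 := by
        apply Filter.Eventually.of_forall
        intro t; rw [h0]; exact hpos t
      exact hmin.deriv_eq_zero
    · exact deriv_zero_of_not_differentiableAt hd
  have hdg : DifferentiableAt ℝ g 0 := by
    by_contra hd
    rw [deriv_zero_of_not_differentiableAt hd] at hneg
    exact lt_irrefl _ hneg
  have hasd : HasDerivAt g (deriv g 0) 0 := hdg.hasDerivAt
  rw [hasDerivAt_iff_tendsto_slope] at hasd
  set d := deriv g 0 with hd'
  have hdlt : d < 0 := hneg
  -- eventually in 𝓝[>] 0, slope < d/2 < 0 so g t < 0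
  have hev : ∀ᶠ t in 𝓝[>] (0:ℝ), g t < 0 := by
    have h1 : ∀ᶠ t in 𝓝[≠] (0:ℝ), slope g 0 t < d/2 :=
      hasd (Iio_mem_nhds (by linarith))
    have h2 : ∀ᶠ t in 𝓝[>] (0:ℝ), slope g 0 t < d/2 :=
      h1.filter_mono (nhdsWithin_mono _ (fun x hx => ne_of_gt hx))
    filter_upwards [h2, self_mem_nhdsWithin] with t ht ht0
    have ht0' : (0:ℝ) < t := ht0
    have hsl : slope g 0 t = g t / t := by
      simp [slope_def_field, hg0]
    rw [hsl] at ht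
    have hlt : g t / t < 0 := lt_trans ht (by linarith)
    rcases div_neg_iff.mp hlt with h | h
    · linarith [h.2]
    · exact h.1
  obtain ⟨δ, hδpos, hδ⟩ : ∃ δ > 0, ∀ t ∈ Ioo (0:ℝ) δ, g t < 0 := by
    rw [eventually_nhdsWithin_iff] at hev
    obtain ⟨ε, hε, hball⟩ := Metric.eventually_nhds_iff.mp hev
    refine ⟨ε, hε, fun t ht => ?_⟩
    have : dist t 0 < ε := by
      rw [Real.dist_eq, sub_zero, abs_of_pos ht.1]; exact ht.2
    exact hball this ht.1
  have hdiff : ∀ t ∈ Ioo (0:ℝ) δ, DifferentiableAt ℝ G t := by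
    intro t ht
    by_contra hd
    have := deriv_zero_of_not_differentiableAt (𝕜 := ℝ) (f := G) hd
    rw [← hg] at this
    exact absurd this (ne_of_lt (hδ t ht))
  have hanti : StrictAntiOn G (Ioo 0 δ) := by
    apply strictAntiOn_of_deriv_neg (convex_Ioo _ _)
    · exact fun t ht => (hdiff t ht).continuousAt.continuousWithinAt
    · intro t ht
      rw [interior_Ioo] at ht
      exact hδ t ht
  have h12 : G (δ/2) > G (3*δ/4) := by
    apply hanti ⟨by linarith, by linarith⟩ ⟨by linarith, by linarith⟩
    linarith
  have hGpos : 0 < G (δ/2) := lt_of_le_of_lt (hpos _) h12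
  -- continuity: find t near 0 with G t < G (δ/2)
  have : ∀ᶠ t in 𝓝 (0:ℝ), G t < G (δ/2) := by
    have := hcont.tendsto
    rw [h0] at this
    exact this (Iio_mem_nhds hGpos)
  obtain ⟨ε, hε, hball⟩ := Metric.eventually_nhds_iff.mp this
  set t₃ := min (ε/2) (δ/4) with ht₃
  have ht₃pos : 0 < t₃ := lt_min (by linarith) (by linarith)
  have ht₃mem : t₃ ∈ Ioo (0:ℝ) δ := ⟨ht₃pos, lt_of_le_of_lt (min_le_right _ _) (by linarith)⟩
  have hsm : G t₃ < G (δ/2) := by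
    apply hball
    rw [Real.dist_eq, sub_zero, abs_of_pos ht₃pos]
    exact lt_of_le_of_lt (min_le_left _ _) (by linarith)
  have : G t₃ > G (δ/2) := hanti ht₃mem ⟨by linarith, by linarith⟩
      (lt_of_le_of_lt (min_le_right _ _) (by linarith))
  linarith


lemma abs_sin_sub_sin (x y : ℝ) : |Real.sin x - Real.sin y| ≤ |x - y| := by
  rw [Real.sin_sub_sin]
  have h1 : |Real.sin ((x - y)/2)| ≤ |(x - y)/2| := Real.abs_sin_le_abs
  have h2 : |Real.cos ((x + y)/2)| ≤ 1 := Real.abs_cos_le_one _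
  calc |2 * Real.sin ((x - y) / 2) * Real.cos ((x + y) / 2)|
      = 2 * |Real.sin ((x - y)/2)| * |Real.cos ((x + y)/2)| := by
        rw [abs_mul, abs_mul]; simp
    _ ≤ 2 * |(x - y)/2| * 1 := by
        apply mul_le_mul _ h2 (abs_nonneg _) (by positivity)
        apply mul_le_mul_of_nonneg_left h1 (by norm_num)
    _ = |x - y| := by rw [abs_div]; simp; ring

/-- the weight -/
def Wf (k l : ℤ) (s : ℝ) : ℝ := (k:ℝ)^2 * Real.tan s + (l:ℝ)^2 * Real.cot s

/-- `sin α` in terms of `m = cos α` -/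
def Qf (m : ℝ → ℝ) (s : ℝ) : ℝ := Real.sqrt (1 - m s ^ 2)

/-- derivative of `cos (α s + t v s) - m s` -/
def Ef (α a m v : ℝ → ℝ) (t s : ℝ) : ℝ :=
  -Real.sin (α s + t * v s) * (a s + t * deriv v s) + Qf m s * a s

/-- quadratic remainder -/
def Gf (k l : ℤ) (α a m v : ℝ → ℝ) (t : ℝ) : ℝ :=
  ∫ s in (0:ℝ)..(π/2), Wf k l s * (Ef α a m v t s)^2

theorem engine (k l : ℤ) (m α a : ℝ → ℝ) (A B K : ℝ)
    (hm : Continuous m) (hαc : Continuous α)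
    (h2 : ∀ s ∈ Ioo (0:ℝ) (π/2), HasDerivAt α (a s) s)
    (h3 : ∀ s ∈ Icc (0:ℝ) (π/2), Real.cos (α s) = m s)
    (h3' : ∀ s ∈ Icc (0:ℝ) (π/2), Real.sin (α s) = Real.sqrt (1 - m s ^ 2))
    (h4 : ∀ s ∈ Ioo (0:ℝ) (π/2), |a s| ≤ A)
    (h5 : ∀ s ∈ Ioo (0:ℝ) (π/2), Wf k l s * (a s * Real.sqrt (1 - m s ^ 2)) = K)
    (h6 : ∀ s ∈ Icc (0:ℝ) (π/2), 1 - m s ^ 2 ≤ B * (s * (π/2 - s)))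
    (h70 : m 0 = 1) (h71 : m (π/2) = -1)
    (h8 : ContinuousOn a (Ioo (0:ℝ) (π/2)))
    (hA : 0 ≤ A) (hB : 0 ≤ B) :
    ∀ v : ℝ → ℝ, ContDiff ℝ (⊤ : ℕ∞) v → v 0 = 0 → v (π/2) = 0 →
      0 ≤ deriv (deriv (fun t : ℝ => ∫ s in (0:ℝ)..(π/2),
        ((k : ℝ)^2 * tan s + (l : ℝ)^2 * cot s) *
          (deriv (fun x => α x + t * v x) s)^2 * sin (α s + t * v s)^2)) 0 := by
  intro v hv hv0 hvpi
  have hπ : (0:ℝ) < π/2 := by positivity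
  have hle : (0:ℝ) ≤ π/2 := hπ.le
  -- facts about v
  have hvd : Differentiable ℝ v := hv.differentiable (by simp)
  have hv' : Continuous (deriv v) := hv.continuous_deriv (by simp)
  obtain ⟨Cv0, hCv0⟩ := (isCompact_Icc (a := (0:ℝ)) (b := π/2)).exists_bound_of_continuousOn
      hv'.continuousOn
  set Cv : ℝ := max Cv0 0 with hCvdef
  have hCvnn : 0 ≤ Cv := le_max_right _ _
  have hCv : ∀ s ∈ Icc (0:ℝ) (π/2), |deriv v s| ≤ Cv := fun s hs =>
    (hCv0 s hs).trans (le_max_left _ _)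
  have hvlip : ∀ x ∈ Icc (0:ℝ) (π/2), ∀ y ∈ Icc (0:ℝ) (π/2), |v y - v x| ≤ Cv * |y - x| := by
    intro x hx y hy
    exact Convex.norm_image_sub_le_of_norm_hasDerivWithin_le
      (f' := deriv v) (fun z hz => (hvd z).hasDerivAt.hasDerivWithinAt)
      (fun z hz => hCv z hz) (convex_Icc _ _) hx hy
  have hv_le_l : ∀ s ∈ Icc (0:ℝ) (π/2), |v s| ≤ Cv * s := by
    intro s hs
    have := hvlip 0 ⟨le_refl _, hle⟩ s hs
    simpa [hv0, abs_of_nonneg hs.1] using this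
  have hv_le_r : ∀ s ∈ Icc (0:ℝ) (π/2), |v s| ≤ Cv * (π/2 - s) := by
    intro s hs
    have := hvlip (π/2) ⟨hle, le_refl _⟩ s hs
    have habs : |s - π/2| = π/2 - s := by
      rw [abs_sub_comm, abs_of_nonneg (by linarith [hs.2])]
    simpa [hvpi, habs] using this
  -- basic facts on m, q
  have hm1 : ∀ s ∈ Icc (0:ℝ) (π/2), 0 ≤ 1 - m s ^ 2 := by
    intro s hs
    have := Real.cos_sq_le_one (α s)
    rw [h3 s hs] at this; linarith
  have hq0 : ∀ s, 0 ≤ Qf m s := fun s => Real.sqrt_nonneg _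
  have hq_sq : ∀ s ∈ Icc (0:ℝ) (π/2), Qf m s ^ 2 = 1 - m s ^ 2 := fun s hs =>
    Real.sq_sqrt (hm1 s hs)
  have hq1 : ∀ s ∈ Icc (0:ℝ) (π/2), Qf m s ≤ 1 := by
    intro s hs
    unfold Qf
    exact Real.sqrt_le_one.mpr (by nlinarith [sq_nonneg (m s)])
  -- w facts
  have hsc : ∀ s ∈ Ioo (0:ℝ) (π/2), 0 < Real.sin s ∧ 0 < Real.cos s := by
    intro s hs
    obtain ⟨hs1, hs2⟩ := hs
    constructor
    · exact Real.sin_pos_of_pos_of_lt_pi hs1 (by linarith [Real.pi_pos])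
    · exact Real.cos_pos_of_mem_Ioo ⟨by linarith, hs2⟩
  have hw_eq : ∀ s ∈ Ioo (0:ℝ) (π/2),
      Wf k l s = ((k:ℝ)^2 * Real.sin s ^2 + (l:ℝ)^2 * Real.cos s ^2)
        / (Real.sin s * Real.cos s) := by
    intro s hs
    obtain ⟨hs1, hs2⟩ := hsc s hs
    rw [Wf, Real.tan_eq_sin_div_cos, Real.cot_eq_cos_div_sin]
    field_simp
  have hw_nonneg : ∀ s ∈ Icc (0:ℝ) (π/2), 0 ≤ Wf k l s := by
    intro s hs
    have h1 : 0 ≤ Real.sin s := Real.sin_nonneg_of_nonneg_of_le_pi hs.1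
      (by linarith [hs.2, Real.pi_pos])
    have h2 : 0 ≤ Real.cos s := Real.cos_nonneg_of_mem_Icc ⟨by linarith [hs.1], hs.2⟩
    rw [Wf, Real.tan_eq_sin_div_cos, Real.cot_eq_cos_div_sin]
    have := div_nonneg h1 h2
    have := div_nonneg h2 h1
    positivity
  have hw0 : Wf k l 0 = 0 := by
    rw [Wf]; simp [Real.tan_zero, Real.cot_eq_cos_div_sin]
  have hwpi2 : Wf k l (π/2) = 0 := by
    rw [Wf]; simp [Real.tan_pi_div_two, Real.cot_eq_cos_div_sin]
  set Wc : ℝ := ((k:ℝ)^2 + (l:ℝ)^2) * (π^2/4) with hWcdef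
  have hWcnn : 0 ≤ Wc := by positivity
  have hw_bound : ∀ s ∈ Ioo (0:ℝ) (π/2), Wf k l s * (s * (π/2 - s)) ≤ Wc := by
    intro s hs
    obtain ⟨hsin, hcos⟩ := hsc s hs
    obtain ⟨hs1, hs2⟩ := hs
    have hj1 : 2/π * s ≤ Real.sin s := Real.mul_le_sin hs1.le hs2.le
    have hj2 : 2/π * (π/2 - s) ≤ Real.cos s := by
      have := Real.mul_le_sin (x := π/2 - s) (by linarith) (by linarith)
      rwa [Real.sin_pi_div_two_sub] at this
    have hkey : s * (π/2 - s) = π^2/4 * ((2/π*s) * (2/π*(π/2 - s))) := by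
      have : (π:ℝ) ≠ 0 := Real.pi_ne_zero
      field_simp
      ring
    have hprod : (2/π*s) * (2/π*(π/2 - s)) ≤ Real.sin s * Real.cos s :=
      mul_le_mul hj1 hj2 (mul_nonneg (by positivity) (by linarith)) hsin.le
    have hN : (k:ℝ)^2 * Real.sin s ^2 + (l:ℝ)^2 * Real.cos s ^2 ≤ ((k:ℝ)^2 + (l:ℝ)^2) := by
      nlinarith [Real.sin_sq_le_one s, Real.cos_sq_le_one s, sq_nonneg ((k:ℝ)), sq_nonneg ((l:ℝ))]
    rw [hw_eq s ⟨hs1, hs2⟩, div_mul_eq_mul_div, div_le_iff₀ (mul_pos hsin hcos)]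
    calc ((k:ℝ)^2 * Real.sin s ^2 + (l:ℝ)^2 * Real.cos s ^2) * (s * (π/2 - s))
        ≤ ((k:ℝ)^2 + (l:ℝ)^2) * (s * (π/2 - s)) := by
          apply mul_le_mul_of_nonneg_right hN
          have : 0 < π/2 - s := by linarith
          positivity
      _ = ((k:ℝ)^2 + (l:ℝ)^2) * (π^2/4 * ((2/π*s) * (2/π*(π/2 - s)))) := by rw [← hkey]
      _ ≤ ((k:ℝ)^2 + (l:ℝ)^2) * (π^2/4 * (Real.sin s * Real.cos s)) := by
          apply mul_le_mul_of_nonneg_left _ (by positivity)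
          exact mul_le_mul_of_nonneg_left hprod (by positivity)
      _ = Wc * (Real.sin s * Real.cos s) := by rw [hWcdef]; ring
  have hw_cont : ContinuousOn (Wf k l) (Ioo (0:ℝ) (π/2)) := by
    have hg : ContinuousOn (fun s => ((k:ℝ)^2 * Real.sin s ^2 + (l:ℝ)^2 * Real.cos s ^2)
        / (Real.sin s * Real.cos s)) (Ioo (0:ℝ) (π/2)) := by
      apply ContinuousOn.div (by fun_prop) (by fun_prop)
      intro s hs
      obtain ⟨hs1, hs2⟩ := hsc s hs
      exact ne_of_gt (mul_pos hs1 hs2)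
    exact hg.congr (fun s hs => hw_eq s hs)
  -- continuity of e t
  have hq_cont : Continuous (Qf m) := by
    unfold Qf; fun_prop
  have he_cont : ∀ t, ContinuousOn (Ef α a m v t) (Ioo (0:ℝ) (π/2)) := by
    intro t
    unfold Ef
    apply ContinuousOn.add
    · apply ContinuousOn.mul
      · apply Continuous.continuousOn; fun_prop
      · exact (h8.add (continuousOn_const.mul hv'.continuousOn))
    · exact (hq_cont.continuousOn.mul h8)
  -- simple bound for e
  have he_bd : ∀ t, ∀ s ∈ Ioo (0:ℝ) (π/2), |Ef α a m v t s| ≤ (A + |t| * Cv) + A := by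
    intro t s hs
    have hs' : s ∈ Icc (0:ℝ) (π/2) := ⟨hs.1.le, hs.2.le⟩
    have h1 : |(-Real.sin (α s + t * v s)) * (a s + t * deriv v s)| ≤ 1 * (A + |t| * Cv) := by
      rw [abs_mul]
      apply mul_le_mul
      · rw [abs_neg]; exact Real.abs_sin_le_one _
      · calc |a s + t * deriv v s| ≤ |a s| + |t * deriv v s| := abs_add_le _ _
          _ ≤ A + |t| * Cv := by
              rw [abs_mul]
              exact add_le_add (h4 s hs)
                (mul_le_mul_of_nonneg_left (hCv s hs') (abs_nonneg _))
      · exact abs_nonneg _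
      · norm_num
    have h2 : |Qf m s * a s| ≤ 1 * A := by
      rw [abs_mul, abs_of_nonneg (hq0 s)]
      exact mul_le_mul (hq1 s hs') (h4 s hs) (abs_nonneg _) (by norm_num)
    calc |Ef α a m v t s|
        ≤ |(-Real.sin (α s + t * v s)) * (a s + t * deriv v s)| + |Qf m s * a s| := by
          rw [Ef]; exact abs_add_le _ _
      _ ≤ (A + |t| * Cv) + A := by rw [one_mul] at h1 h2; exact add_le_add h1 h2
  -- sin bound
  have hsinq : ∀ t : ℝ, ∀ s ∈ Icc (0:ℝ) (π/2),
      Real.sin (α s + t * v s)^2 ≤ 2 * Qf m s ^2 + 2 * (t * v s)^2 := by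
    intro t s hs
    have hqe : Real.sin (α s) = Qf m s := h3' s hs
    have hd : |Real.sin (α s + t * v s) - Real.sin (α s)| ≤ |t * v s| := by
      have := abs_sin_sub_sin (α s + t * v s) (α s)
      simpa using this
    have h0 : |Real.sin (α s + t * v s)|
        ≤ |Real.sin (α s)| + |Real.sin (α s + t * v s) - Real.sin (α s)| := by
      have := abs_add_le (Real.sin (α s)) (Real.sin (α s + t * v s) - Real.sin (α s))
      simpa using this
    have h1 : |Real.sin (α s + t * v s)| ≤ Qf m s + |t * v s| := by
      rw [hqe] at h0 hd
      rw [abs_of_nonneg (hq0 s)] at h0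
      exact h0.trans (add_le_add_right hd _)
    nlinarith [mul_le_mul h1 h1 (abs_nonneg _) (add_nonneg (hq0 s) (abs_nonneg _)),
      sq_abs (Real.sin (α s + t * v s)), sq_abs (t * v s), sq_nonneg (Qf m s - |t * v s|)]
  -- squared bound for e
  have he_sq : ∀ t : ℝ, ∀ s ∈ Ioo (0:ℝ) (π/2),
      (Ef α a m v t s)^2
        ≤ 2 * t^2 * (Cv^2 * Real.sin (α s + t * v s)^2 + A^2 * (v s)^2) := by
    intro t s hs
    have hs' : s ∈ Icc (0:ℝ) (π/2) := ⟨hs.1.le, hs.2.le⟩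
    have hqe : Real.sin (α s) = Qf m s := h3' s hs'
    have heq : Ef α a m v t s = -(t * deriv v s * Real.sin (α s + t * v s))
        - a s * (Real.sin (α s + t * v s) - Real.sin (α s)) := by
      rw [Ef, hqe]; ring
    have hd : |Real.sin (α s + t * v s) - Real.sin (α s)| ≤ |t| * |v s| := by
      have := abs_sin_sub_sin (α s + t * v s) (α s)
      simpa [abs_mul] using this
    have h2 : |deriv v s| ≤ Cv := hCv s hs'
    have h1 : |Ef α a m v t s|
        ≤ |t| * (Cv * |Real.sin (α s + t * v s)| + A * |v s|) := by
      rw [heq]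
      calc |_ - _| ≤ |-(t * deriv v s * Real.sin (α s + t * v s))|
            + |a s * (Real.sin (α s + t * v s) - Real.sin (α s))| := abs_sub _ _
        _ ≤ |t| * (Cv * |Real.sin (α s + t * v s)|) + A * (|t| * |v s|) := by
            apply add_le_add
            · rw [abs_neg, abs_mul, abs_mul, mul_assoc]
              apply mul_le_mul_of_nonneg_left _ (abs_nonneg t)
              exact mul_le_mul_of_nonneg_right h2 (abs_nonneg _)
            · rw [abs_mul]
              exact mul_le_mul (h4 s hs) hd (abs_nonneg _) hA
        _ = |t| * (Cv * |Real.sin (α s + t * v s)| + A * |v s|) := by ring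
    have h3sq : (Ef α a m v t s)^2
        ≤ (|t| * (Cv * |Real.sin (α s + t * v s)| + A * |v s|))^2 := by
      rw [← sq_abs (Ef α a m v t s)]
      apply pow_le_pow_left₀ (abs_nonneg _) h1
    refine h3sq.trans ?_
    have hkey : (Cv * |Real.sin (α s + t * v s)| + A * |v s|)^2
        ≤ 2*(Cv^2 * Real.sin (α s + t * v s)^2 + A^2 * (v s)^2) := by
      nlinarith [sq_nonneg (Cv * |Real.sin (α s + t * v s)| - A * |v s|),
        sq_abs (Real.sin (α s + t * v s)), sq_abs (v s)]
    calc (|t| * (Cv * |Real.sin (α s + t * v s)| + A * |v s|))^2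
        = t^2 * (Cv * |Real.sin (α s + t * v s)| + A * |v s|)^2 := by
          rw [mul_pow, sq_abs]
      _ ≤ t^2 * (2*(Cv^2 * Real.sin (α s + t * v s)^2 + A^2 * (v s)^2)) :=
          mul_le_mul_of_nonneg_left hkey (sq_nonneg t)
      _ = 2 * t^2 * (Cv^2 * Real.sin (α s + t * v s)^2 + A^2 * (v s)^2) := by ring
  -- master bound
  set D : ℝ → ℝ := fun t => 2*(Cv^2*(2*Wc*B + 2*t^2*Wc*Cv^2) + A^2*Wc*Cv^2) with hDdef
  have hv2 : ∀ s ∈ Icc (0:ℝ) (π/2), (v s)^2 ≤ Cv^2 * (s * (π/2 - s)) := by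
    intro s hs
    have h1 := hv_le_l s hs
    have h2 := hv_le_r s hs
    nlinarith [abs_nonneg (v s), sq_abs (v s), hs.1, sub_nonneg.mpr hs.2]
  have hwv : ∀ s ∈ Ioo (0:ℝ) (π/2), Wf k l s * (v s)^2 ≤ Wc * Cv^2 := by
    intro s hs
    have hw' := hw_bound s hs
    have hwn := hw_nonneg s ⟨hs.1.le, hs.2.le⟩
    have hvv := hv2 s ⟨hs.1.le, hs.2.le⟩
    calc Wf k l s * (v s)^2 ≤ Wf k l s * (Cv^2 * (s * (π/2 - s))) :=
          mul_le_mul_of_nonneg_left hvv hwn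
      _ = Cv^2 * (Wf k l s * (s * (π/2 - s))) := by ring
      _ ≤ Cv^2 * Wc := mul_le_mul_of_nonneg_left hw' (sq_nonneg Cv)
      _ = Wc * Cv^2 := by ring
  have hwq : ∀ s ∈ Ioo (0:ℝ) (π/2), Wf k l s * (Qf m s)^2 ≤ Wc * B := by
    intro s hs
    have hw' := hw_bound s hs
    have hwn := hw_nonneg s ⟨hs.1.le, hs.2.le⟩
    have hqq : (Qf m s)^2 ≤ B * (s * (π/2 - s)) := by
      rw [hq_sq s ⟨hs.1.le, hs.2.le⟩]; exact h6 s ⟨hs.1.le, hs.2.le⟩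
    calc Wf k l s * (Qf m s)^2 ≤ Wf k l s * (B * (s * (π/2 - s))) :=
          mul_le_mul_of_nonneg_left hqq hwn
      _ = B * (Wf k l s * (s * (π/2 - s))) := by ring
      _ ≤ B * Wc := mul_le_mul_of_nonneg_left hw' hB
      _ = Wc * B := by ring
  have hwS : ∀ t : ℝ, ∀ s ∈ Ioo (0:ℝ) (π/2),
      Wf k l s * Real.sin (α s + t * v s)^2 ≤ 2*Wc*B + 2*t^2*(Wc*Cv^2) := by
    intro t s hs
    have hwn := hw_nonneg s ⟨hs.1.le, hs.2.le⟩
    have h1 := hsinq t s ⟨hs.1.le, hs.2.le⟩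
    calc Wf k l s * Real.sin (α s + t * v s)^2
        ≤ Wf k l s * (2 * Qf m s ^2 + 2 * (t * v s)^2) := mul_le_mul_of_nonneg_left h1 hwn
      _ = 2 * (Wf k l s * (Qf m s)^2) + 2 * t^2 * (Wf k l s * (v s)^2) := by ring
      _ ≤ 2 * (Wc * B) + 2 * t^2 * (Wc * Cv^2) := by
          apply add_le_add
          · exact mul_le_mul_of_nonneg_left (hwq s hs) (by norm_num)
          · exact mul_le_mul_of_nonneg_left (hwv s hs) (by positivity)
      _ = 2*Wc*B + 2*t^2*(Wc*Cv^2) := by ring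
  have hmaster : ∀ t : ℝ, ∀ s ∈ Ioo (0:ℝ) (π/2),
      Wf k l s * (Ef α a m v t s)^2 ≤ t^2 * D t := by
    intro t s hs
    have hwn := hw_nonneg s ⟨hs.1.le, hs.2.le⟩
    have h1 := he_sq t s hs
    calc Wf k l s * (Ef α a m v t s)^2
        ≤ Wf k l s * (2 * t^2 * (Cv^2 * Real.sin (α s + t * v s)^2 + A^2 * (v s)^2)) :=
          mul_le_mul_of_nonneg_left h1 hwn
      _ = 2 * t^2 * (Cv^2 * (Wf k l s * Real.sin (α s + t * v s)^2)
            + A^2 * (Wf k l s * (v s)^2)) := by ring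
      _ ≤ 2 * t^2 * (Cv^2 * (2*Wc*B + 2*t^2*(Wc*Cv^2)) + A^2 * (Wc * Cv^2)) := by
          apply mul_le_mul_of_nonneg_left _ (by positivity)
          exact add_le_add (mul_le_mul_of_nonneg_left (hwS t s hs) (sq_nonneg Cv))
            (mul_le_mul_of_nonneg_left (hwv s hs) (sq_nonneg A))
      _ = t^2 * D t := by simp only [hDdef]; ring
  -- integrability
  have int_e : ∀ t : ℝ, IntervalIntegrable (Ef α a m v t) volume 0 (π/2) :=
    fun t => bdd_intervalIntegrable (he_cont t) (he_bd t)
  have int_we : ∀ t : ℝ, IntervalIntegrable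
      (fun s => Wf k l s * (Ef α a m v t s)^2) volume 0 (π/2) := by
    intro t
    apply bdd_intervalIntegrable (C := t^2 * D t)
    · exact hw_cont.mul ((he_cont t).pow 2)
    · intro s hs
      have h0 : 0 ≤ Wf k l s * (Ef α a m v t s)^2 :=
        mul_nonneg (hw_nonneg s ⟨hs.1.le, hs.2.le⟩) (sq_nonneg _)
      rw [abs_of_nonneg h0]; exact hmaster t s hs
  have int_qa : IntervalIntegrable (fun s => Qf m s * a s) volume 0 (π/2) := by
    apply bdd_intervalIntegrable (C := A)
    · exact hq_cont.continuousOn.mul h8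
    · intro s hs
      rw [abs_mul, abs_of_nonneg (hq0 s)]
      calc Qf m s * |a s| ≤ 1 * A :=
            mul_le_mul (hq1 s ⟨hs.1.le, hs.2.le⟩) (h4 s hs) (abs_nonneg _) (by norm_num)
        _ = A := one_mul A
  -- derivative of m
  have hm_deriv : ∀ s ∈ Ioo (0:ℝ) (π/2), HasDerivAt m (-(Qf m s * a s)) s := by
    intro s hs
    have hcosα : HasDerivAt (fun x => Real.cos (α x)) (-Real.sin (α s) * a s) s := (h2 s hs).cos
    have hev : m =ᶠ[𝓝 s] (fun x => Real.cos (α x)) := by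
      filter_upwards [Ioo_mem_nhds hs.1 hs.2] with x hx
      exact (h3 x ⟨hx.1.le, hx.2.le⟩).symm
    have hder := hcosα.congr_of_eventuallyEq hev
    refine hder.congr_deriv ?_
    rw [h3' s ⟨hs.1.le, hs.2.le⟩]
    unfold Qf; ring
  have hsum_deriv : ∀ t : ℝ, ∀ s ∈ Ioo (0:ℝ) (π/2),
      HasDerivAt (fun x => α x + t * v x) (a s + t * deriv v s) s := by
    intro t s hs
    exact (h2 s hs).add (((hvd s).hasDerivAt).const_mul t)
  -- FTC : ∫ Ef = 0
  have hΦ : ∀ t : ℝ, (∫ s in (0:ℝ)..(π/2), Ef α a m v t s) = 0 := by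
    intro t
    set Φ : ℝ → ℝ := fun s => (m s * Real.cos (t * v s) - Qf m s * Real.sin (t * v s)) - m s
      with hΦdef
    have hvc : Continuous v := hv.continuous
    have hΦc : Continuous Φ := by
      rw [hΦdef]
      apply Continuous.sub _ hm
      apply Continuous.sub
      · exact hm.mul (Real.continuous_cos.comp (continuous_const.mul hvc))
      · exact hq_cont.mul (Real.continuous_sin.comp (continuous_const.mul hvc))
    have hΦeq : ∀ x ∈ Icc (0:ℝ) (π/2), Φ x = Real.cos (α x + t * v x) - m x := by
      intro x hx
      rw [hΦdef]
      simp only []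
      rw [Real.cos_add, h3 x hx, h3' x hx]
      unfold Qf
      ring
    have hΦd : ∀ x ∈ Ioo (0:ℝ) (π/2), HasDerivAt Φ (Ef α a m v t x) x := by
      intro x hx
      have h1 : HasDerivAt (fun y => Real.cos (α y + t * v y) - m y)
          (-Real.sin (α x + t * v x) * (a x + t * deriv v x) - -(Qf m x * a x)) x :=
        ((hsum_deriv t x hx).cos).sub (hm_deriv x hx)
      have hev : Φ =ᶠ[𝓝 x] (fun y => Real.cos (α y + t * v y) - m y) := by
        filter_upwards [Ioo_mem_nhds hx.1 hx.2] with y hy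
        exact hΦeq y ⟨hy.1.le, hy.2.le⟩
      have h2' := h1.congr_of_eventuallyEq hev
      refine h2'.congr_deriv ?_
      unfold Ef; ring
    have hFTC := intervalIntegral.integral_eq_sub_of_hasDeriv_right_of_le hle
        hΦc.continuousOn (fun x hx => (hΦd x hx).hasDerivWithinAt) (int_e t)
    rw [hFTC, hΦdef]
    simp [hv0, hvpi]
  -- FTC : ∫ Qf a = 2
  have hqa_val : (∫ s in (0:ℝ)..(π/2), Qf m s * a s) = 2 := by
    have hc : ContinuousOn (fun s => -m s) (Icc 0 (π/2)) := (hm.neg).continuousOn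
    have hd : ∀ x ∈ Ioo (0:ℝ) (π/2), HasDerivAt (fun s => -m s) (Qf m x * a x) x := by
      intro x hx
      have := (hm_deriv x hx).neg
      simp at this; exact this
    have := intervalIntegral.integral_eq_sub_of_hasDeriv_right_of_le hle hc
        (fun x hx => (hd x hx).hasDerivWithinAt) int_qa
    rw [this, h70, h71]; norm_num
  -- pointwise identity
  have hptw : ∀ t : ℝ, ∀ᵐ s, s ∈ Set.uIoc (0:ℝ) (π/2) →
      ((k : ℝ)^2 * Real.tan s + (l : ℝ)^2 * Real.cot s) *
        (deriv (fun x => α x + t * v x) s)^2 * Real.sin (α s + t * v s)^2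
      = Wf k l s * (Ef α a m v t s)^2 - 2*K*(Ef α a m v t s) + K * (Qf m s * a s) := by
    intro t
    have hne : ∀ᵐ (s:ℝ), s ≠ π/2 := by
      rw [ae_iff]
      have hset : {s : ℝ | ¬s ≠ π/2} = {π/2} := by ext x; simp
      rw [hset]
      exact measure_singleton _
    filter_upwards [hne] with s hsne hsI
    rw [uIoc_of_le hle] at hsI
    have hs : s ∈ Ioo (0:ℝ) (π/2) := ⟨hsI.1, lt_of_le_of_ne hsI.2 hsne⟩
    have hder : deriv (fun x => α x + t * v x) s = a s + t * deriv v s :=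
      (hsum_deriv t s hs).deriv
    rw [hder]
    have h5s := h5 s hs
    have hqf : Real.sqrt (1 - m s ^2) = Qf m s := rfl
    rw [hqf] at h5s
    have hWfeq : (k:ℝ)^2 * Real.tan s + (l:ℝ)^2 * Real.cot s = Wf k l s := rfl
    rw [hWfeq]
    unfold Ef
    linear_combination (2 * Real.sin (α s + t * v s) * (a s + t * deriv v s)
      - Qf m s * a s) * h5s
  -- decomposition
  have hdecomp : ∀ t : ℝ, (∫ s in (0:ℝ)..(π/2),
      ((k : ℝ)^2 * Real.tan s + (l : ℝ)^2 * Real.cot s) *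
        (deriv (fun x => α x + t * v x) s)^2 * Real.sin (α s + t * v s)^2)
      = Gf k l α a m v t + 2*K := by
    intro t
    rw [intervalIntegral.integral_congr_ae (hptw t)]
    have i1 := int_we t
    have i2 := (int_e t).const_mul (2*K)
    have i3 := int_qa.const_mul K
    rw [intervalIntegral.integral_add (i1.sub i2) i3, intervalIntegral.integral_sub i1 i2,
      intervalIntegral.integral_const_mul, intervalIntegral.integral_const_mul,
      hΦ t, hqa_val]
    rw [Gf]
    ring
  -- properties of Gf
  have hG0 : Gf k l α a m v 0 = 0 := by
    rw [Gf]
    rw [intervalIntegral.integral_congr (g := fun _ => (0:ℝ))]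
    · simp
    · intro s hs
      rw [uIcc_of_le hle] at hs
      show Wf k l s * (Ef α a m v 0 s)^2 = 0
      rcases eq_or_lt_of_le hs.1 with h0 | h0
      · rw [← h0, hw0]; ring
      rcases eq_or_lt_of_le hs.2 with h1 | h1
      · rw [h1, hwpi2]; ring
      · have hqe : Real.sin (α s) = Qf m s := h3' s hs
        have hEf0 : Ef α a m v 0 s = 0 := by
          unfold Ef
          rw [zero_mul, add_zero, zero_mul, add_zero, hqe]
          ring
        rw [hEf0]
        ring
  have hGnn : ∀ t, 0 ≤ Gf k l α a m v t := by
    intro t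
    rw [Gf]
    apply intervalIntegral.integral_nonneg hle
    intro u hu
    exact mul_nonneg (hw_nonneg u hu) (sq_nonneg _)
  have hGcont : ContinuousAt (Gf k l α a m v) 0 := by
    have hD1nn : 0 ≤ D 1 := by simp only [hDdef]; positivity
    have hbound : ∀ t : ℝ, |t| ≤ 1 → |Gf k l α a m v t| ≤ (D 1 * (π/2)) * t^2 := by
      intro t ht
      have ht2 : t^2 ≤ 1 := by nlinarith [sq_abs t, abs_nonneg t]
      have hD : D t ≤ D 1 := by
        simp only [hDdef]
        have hh : 0 ≤ Wc * Cv^2 * Cv^2 := by positivity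
        nlinarith
      have key : ∀ x ∈ Set.uIoc (0:ℝ) (π/2), ‖Wf k l x * (Ef α a m v t x)^2‖ ≤ t^2 * D 1 := by
        intro x hx
        rw [uIoc_of_le hle] at hx
        rcases eq_or_lt_of_le hx.2 with h1 | h1
        · rw [h1, hwpi2, zero_mul, norm_zero]
          positivity
        · have hxo : x ∈ Ioo (0:ℝ) (π/2) := ⟨hx.1, h1⟩
          rw [Real.norm_eq_abs,
            abs_of_nonneg (mul_nonneg (hw_nonneg x ⟨hx.1.le, hx.2⟩) (sq_nonneg _))]
          exact (hmaster t x hxo).trans (mul_le_mul_of_nonneg_left hD (sq_nonneg t))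
      have hni := intervalIntegral.norm_integral_le_of_norm_le_const key
      rw [Real.norm_eq_abs] at hni
      calc |Gf k l α a m v t| ≤ t^2 * D 1 * |π/2 - 0| := by rw [Gf]; exact hni
        _ = (D 1 * (π/2)) * t^2 := by
            rw [sub_zero, abs_of_nonneg hle]; ring
    rw [ContinuousAt, hG0]
    have hev1 : ∀ᶠ t in 𝓝 (0:ℝ), |t| ≤ 1 := by
      have hball := Metric.ball_mem_nhds (0:ℝ) one_pos
      filter_upwards [hball] with t ht
      rw [Metric.mem_ball, Real.dist_eq, sub_zero] at ht
      exact ht.le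
    apply squeeze_zero' (g := fun t : ℝ => (D 1 * (π/2)) * t^2)
    · filter_upwards with t; exact hGnn t
    · filter_upwards [hev1] with t ht
      have := hbound t ht
      exact (le_abs_self _).trans this
    · have hcont : Continuous fun t : ℝ => (D 1 * (π/2)) * t^2 :=
        continuous_const.mul (continuous_pow 2)
      have h00 := hcont.tendsto 0
      simpa using h00
  -- conclusion
  have hFeq : (fun t : ℝ => ∫ s in (0:ℝ)..(π/2),
      ((k : ℝ)^2 * Real.tan s + (l : ℝ)^2 * Real.cot s) *
        (deriv (fun x => α x + t * v x) s)^2 * Real.sin (α s + t * v s)^2)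
      = fun t => Gf k l α a m v t + 2*K := funext hdecomp
  rw [hFeq]
  have hd1 : deriv (fun t => Gf k l α a m v t + 2*K) = deriv (Gf k l α a m v) := by
    funext x
    exact deriv_add_const _
  rw [hd1]
  exact second_deriv_nonneg_of_min hG0 hGnn hGcont

theorem case_eq (k l : ℤ) (hk : k ≠ 0) (hl : l ≠ 0) (hkl : |k| = |l|) :
    ∀ v : ℝ → ℝ, ContDiff ℝ (⊤ : ℕ∞) v → v 0 = 0 → v (π/2) = 0 →
      0 ≤ deriv (deriv (fun t : ℝ => ∫ s in (0:ℝ)..(π/2),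
        ((k : ℝ)^2 * tan s + (l : ℝ)^2 * cot s) *
          (deriv (fun x => (fun s => 2*s) x + t * v x) s)^2 *
            sin ((fun s => 2*s) s + t * v s)^2)) 0 := by
  have hk2 : (k:ℝ)^2 = (l:ℝ)^2 := by
    have h1 : k^2 = l^2 := by
      rw [← sq_abs k, ← sq_abs l, hkl]
    exact_mod_cast congrArg (fun n : ℤ => (n:ℝ)) (by exact_mod_cast h1)
  apply engine k l (fun s => Real.cos (2*s)) (fun s => 2*s) (fun _ => (2:ℝ))
      2 (π^2) (4*(k:ℝ)^2)
  -- hm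
  · fun_prop
  -- hαc
  · fun_prop
  -- h2
  · intro s hs
    simpa using (hasDerivAt_id s).const_mul (2:ℝ)
  -- h3
  · intro s hs; rfl
  -- h3'
  · intro s hs
    exact Real.sin_eq_sqrt_one_sub_cos_sq (by linarith [hs.1]) (by linarith [hs.2])
  -- h4
  · intro s hs; norm_num
  -- h5
  · intro s hs
    obtain ⟨hs1, hs2⟩ := hs
    have hsin : 0 < Real.sin s := Real.sin_pos_of_pos_of_lt_pi hs1 (by linarith [Real.pi_pos])
    have hcos : 0 < Real.cos s := Real.cos_pos_of_mem_Ioo ⟨by linarith, hs2⟩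
    have hsq : Real.sqrt (1 - Real.cos (2*s)^2) = Real.sin (2*s) :=
      (Real.sin_eq_sqrt_one_sub_cos_sq (by linarith) (by linarith)).symm
    rw [hsq, Real.sin_two_mul, Wf, Real.tan_eq_sin_div_cos, Real.cot_eq_cos_div_sin, hk2]
    field_simp
    linear_combination 4 * Real.sin_sq_add_cos_sq s
  -- h6
  · intro s hs
    obtain ⟨hs1, hs2⟩ := hs
    have hle' : (0:ℝ) ≤ π/2 := by positivity
    have hsin : 0 ≤ Real.sin s := Real.sin_nonneg_of_nonneg_of_le_pi hs1
      (by linarith [Real.pi_pos])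
    have hcos : 0 ≤ Real.cos s := Real.cos_nonneg_of_mem_Icc ⟨by linarith, hs2⟩
    have h1 : Real.sin s ≤ s := Real.sin_le hs1
    have h2 : Real.cos s ≤ π/2 - s := by
      have := Real.sin_le (x := π/2 - s) (by linarith)
      rwa [Real.sin_pi_div_two_sub] at this
    have hΔ : (0:ℝ) ≤ π/2 - s := by linarith
    have hcos2 : 1 - Real.cos (2*s)^2 = 4 * (Real.sin s * Real.cos s)^2 := by
      have h0 := Real.sin_sq_add_cos_sq (2*s)
      have h1' : Real.sin (2*s) = 2 * Real.sin s * Real.cos s := Real.sin_two_mul s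
      have h2' : Real.sin (2*s)^2 = 4 * (Real.sin s * Real.cos s)^2 := by rw [h1']; ring
      linarith [h0, h2']
    rw [hcos2]
    have hprod : Real.sin s * Real.cos s ≤ s * (π/2 - s) := mul_le_mul h1 h2 hcos hs1
    have hx2 : (Real.sin s * Real.cos s)^2 ≤ (s * (π/2 - s))^2 :=
      pow_le_pow_left₀ (mul_nonneg hsin hcos) hprod 2
    have hΔ2 : π/2 - s ≤ π/2 := by linarith
    have hsd : s * (π/2 - s) ≤ (π/2)^2 := by nlinarith [mul_le_mul hs2 hΔ2 hΔ hle']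
    have hy : (s * (π/2 - s))^2 ≤ (π/2)^2 * (s * (π/2 - s)) := by
      nlinarith [hsd, mul_nonneg hs1 hΔ]
    nlinarith [hx2, hy]
  -- h70
  · simp
  -- h71
  · rw [show 2*(π/2) = π by ring, Real.cos_pi]
  -- h8
  · exact continuousOn_const
  -- hA
  · norm_num
  -- hB
  · positivity

theorem case_lt (k l : ℤ) (hk : k ≠ 0) (hl : l ≠ 0) (hkl : |k| > |l|) :
    ∀ v : ℝ → ℝ, ContDiff ℝ (⊤ : ℕ∞) v → v 0 = 0 → v (π/2) = 0 →
      0 ≤ deriv (deriv (fun t : ℝ => ∫ s in (0:ℝ)..(π/2),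
        ((k : ℝ)^2 * tan s + (l : ℝ)^2 * cot s) *
          (deriv (fun x => (fun s => arccos (1 - 2 * Real.log (((k : ℝ)^2 / (l : ℝ)^2) *
            sin s ^ 2 + cos s ^ 2) / Real.log ((k : ℝ)^2 / (l : ℝ)^2))) x + t * v x) s)^2 *
          sin ((fun s => arccos (1 - 2 * Real.log (((k : ℝ)^2 / (l : ℝ)^2) *
            sin s ^ 2 + cos s ^ 2) / Real.log ((k : ℝ)^2 / (l : ℝ)^2))) s + t * v s)^2)) 0 := by
  have hl2 : (1:ℝ) ≤ (l:ℝ)^2 := by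
    have h0 : (1:ℤ) ≤ l^2 := by nlinarith [sq_abs l, Int.one_le_abs hl]
    exact_mod_cast h0
  have hk2l2 : (l:ℝ)^2 < (k:ℝ)^2 := by
    have h0 : l^2 < k^2 := by nlinarith [sq_abs l, sq_abs k, abs_nonneg l, abs_nonneg k, hkl]
    exact_mod_cast h0
  have hl2pos : (0:ℝ) < (l:ℝ)^2 := by linarith
  set r : ℝ := (k:ℝ)^2/(l:ℝ)^2 with hrdef
  have hr1 : 1 < r := by rw [hrdef, lt_div_iff₀ hl2pos]; linarith
  set L : ℝ := Real.log r with hLdef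
  have hL : 0 < L := Real.log_pos hr1
  set g : ℝ → ℝ := fun s => r * Real.sin s^2 + Real.cos s^2 with hgdef
  have hg1 : ∀ s, 1 ≤ g s := by
    intro s
    have h0 := Real.sin_sq_add_cos_sq s
    simp only [hgdef]
    nlinarith [sq_nonneg (Real.sin s)]
  have hgpos : ∀ s, 0 < g s := fun s => lt_of_lt_of_le one_pos (hg1 s)
  have hgr : ∀ s, g s ≤ r := by
    intro s
    have h0 := Real.sin_sq_add_cos_sq s
    simp only [hgdef]
    nlinarith [sq_nonneg (Real.cos s)]
  set m : ℝ → ℝ := fun s => 1 - 2 * Real.log (g s) / L with hmdef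
  set gd : ℝ → ℝ := fun s => (r-1) * (2 * Real.sin s * Real.cos s) with hgddef
  set md : ℝ → ℝ := fun s => -(2 * (gd s / g s) / L) with hmddef
  set af : ℝ → ℝ := fun s => -(1 / Real.sqrt (1 - (m s)^2)) * md s with hafdef
  -- continuity
  have hgcont : Continuous g := by rw [hgdef]; fun_prop
  have hlogcont : Continuous (fun s => Real.log (g s)) := by
    rw [continuous_iff_continuousAt]
    intro s
    exact (Real.continuousAt_log (hgpos s).ne').comp hgcont.continuousAt
  have hmcont : Continuous m := by
    rw [hmdef]
    exact continuous_const.sub ((continuous_const.mul hlogcont).div_const L)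
  have hgdcont : Continuous gd := by rw [hgddef]; fun_prop
  have hmdcont : Continuous md := by
    rw [hmddef]
    apply Continuous.neg
    apply Continuous.div_const
    apply Continuous.mul continuous_const
    exact hgdcont.div hgcont (fun s => (hgpos s).ne')
  -- derivatives
  have hgd : ∀ s, HasDerivAt g (gd s) s := by
    intro s
    have h1 : HasDerivAt (fun x : ℝ => Real.sin x ^ 2) (2 * Real.sin s * Real.cos s) s := by
      have := (Real.hasDerivAt_sin s).pow 2
      simp at this; exact this
    have h2 : HasDerivAt (fun x : ℝ => Real.cos x ^ 2) (2 * Real.cos s * (-Real.sin s)) s := by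
      have := (Real.hasDerivAt_cos s).pow 2
      simp at this; exact this.congr_deriv (by ring)
    have h3 := (h1.const_mul r).add h2
    rw [hgdef, hgddef]
    exact h3.congr_deriv (by ring)
  have hmd : ∀ s, HasDerivAt m (md s) s := by
    intro s
    have hlog : HasDerivAt (fun x => Real.log (g x)) (gd s / g s) s :=
      (hgd s).log (hgpos s).ne'
    have h3 := ((hlog.const_mul 2).div_const L).const_sub 1
    rw [hmdef, hmddef]
    convert h3 using 1 <;> ring
  -- interior facts
  have hint : ∀ s ∈ Ioo (0:ℝ) (π/2), 0 < Real.sin s ∧ 0 < Real.cos s ∧ 1 < g s ∧ g s < r := by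
    intro s hs
    obtain ⟨hs1, hs2⟩ := hs
    have hsin : 0 < Real.sin s := Real.sin_pos_of_pos_of_lt_pi hs1 (by linarith [Real.pi_pos])
    have hcos : 0 < Real.cos s := Real.cos_pos_of_mem_Ioo ⟨by linarith, hs2⟩
    have h0 := Real.sin_sq_add_cos_sq s
    refine ⟨hsin, hcos, ?_, ?_⟩
    · simp only [hgdef]; nlinarith [mul_pos hsin hsin, hr1, h0]
    · simp only [hgdef]; nlinarith [mul_pos hcos hcos, hr1, h0]
  have hm_lt : ∀ s ∈ Ioo (0:ℝ) (π/2), -1 < m s ∧ m s < 1 := by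
    intro s hs
    obtain ⟨hsin, hcos, hgl, hgu⟩ := hint s hs
    have hlg0 : 0 < Real.log (g s) := Real.log_pos hgl
    have hlgL : Real.log (g s) < L := by rw [hLdef]; exact Real.log_lt_log (hgpos s) hgu
    have hd0 : 0 < Real.log (g s)/L := div_pos hlg0 hL
    have hd1 : Real.log (g s)/L < 1 := (div_lt_one hL).mpr hlgL
    have he : m s = 1 - 2 * (Real.log (g s)/L) := by rw [hmdef]; ring
    constructor <;> rw [he] <;> linarith
  have hq2pos : ∀ s ∈ Ioo (0:ℝ) (π/2), 0 < 1 - m s^2 := by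
    intro s hs
    obtain ⟨hm1', hm2'⟩ := hm_lt s hs
    nlinarith
  have hm_bd : ∀ s ∈ Icc (0:ℝ) (π/2), -1 ≤ m s ∧ m s ≤ 1 := by
    intro s hs
    have hlg0 : 0 ≤ Real.log (g s) := Real.log_nonneg (hg1 s)
    have hlgL : Real.log (g s) ≤ L := by
      rw [hLdef]
      exact (Real.log_le_log_iff (hgpos s) (by positivity)).mpr (hgr s)
    have hd0 : 0 ≤ Real.log (g s)/L := div_nonneg hlg0 hL.le
    have hd1 : Real.log (g s)/L ≤ 1 := (div_le_one hL).mpr hlgL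
    have he : m s = 1 - 2 * (Real.log (g s)/L) := by rw [hmdef]; ring
    constructor <;> rw [he] <;> linarith
  -- pythagoras helpers
  have hgsub1 : ∀ s, g s - 1 = (r-1) * Real.sin s^2 := by
    intro s
    simp only [hgdef]
    linear_combination Real.sin_sq_add_cos_sq s
  have hrsubg : ∀ s, r - g s = (r-1) * Real.cos s^2 := by
    intro s
    simp only [hgdef]
    linear_combination (-r) * Real.sin_sq_add_cos_sq s
  apply engine k l m (fun s => Real.arccos (m s)) af (2*r)
      ((2*(r-1)/L)^2 * (π/2)^2) (4*((k:ℝ)^2 - (l:ℝ)^2)/L)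
  -- hm
  · exact hmcont
  -- hαc
  · exact Real.continuous_arccos.comp hmcont
  -- h2
  · intro s hs
    obtain ⟨hm1', hm2'⟩ := hm_lt s hs
    have h1 := Real.hasDerivAt_arccos (ne_of_gt hm1') (ne_of_lt hm2')
    have h2 := h1.comp s (hmd s)
    rw [hafdef]
    exact h2.congr_deriv rfl
  -- h3
  · intro s hs
    exact Real.cos_arccos (hm_bd s hs).1 (hm_bd s hs).2
  -- h3'
  · intro s hs
    exact Real.sin_arccos _
  -- h4
  · intro s hs
    obtain ⟨hsin, hcos, hgl, hgu⟩ := hint s hs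
    have hgp := hgpos s
    have hq2 : 0 < 1 - m s^2 := hq2pos s hs
    have hlg0 : 0 < Real.log (g s) := Real.log_pos hgl
    have hlgL : Real.log (g s) < L := by rw [hLdef]; exact Real.log_lt_log hgp hgu
    have hlb1 : (r-1) * Real.sin s^2 ≤ Real.log (g s) * g s := by
      have h1 : 1 - (g s)⁻¹ ≤ Real.log (g s) := Real.one_sub_inv_le_log_of_pos hgp
      have h3 : g s - 1 ≤ Real.log (g s) * g s := by
        have h4 := mul_le_mul_of_nonneg_right h1 hgp.le
        calc g s - 1 = (1 - (g s)⁻¹) * g s := by field_simp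
          _ ≤ Real.log (g s) * g s := h4
      linarith [hgsub1 s]
    have hlb2 : (r-1) * Real.cos s^2 ≤ (L - Real.log (g s)) * r := by
      have hrpos : (0:ℝ) < r := by linarith
      have h1 : 1 - (r / g s)⁻¹ ≤ Real.log (r / g s) :=
        Real.one_sub_inv_le_log_of_pos (by positivity)
      have h2 : Real.log (r/g s) = L - Real.log (g s) := by
        rw [hLdef, Real.log_div hrpos.ne' hgp.ne']
      rw [h2] at h1
      have h3 : r - g s ≤ (L - Real.log (g s)) * r := by
        have h4 := mul_le_mul_of_nonneg_right h1 hrpos.le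
        calc r - g s = (1 - (r / g s)⁻¹) * r := by field_simp
          _ ≤ (L - Real.log (g s)) * r := h4
      linarith [hrsubg s]
    have hq2L : (1 - m s^2) * L^2 = 4 * Real.log (g s) * (L - Real.log (g s)) := by
      simp only [hmdef]
      field_simp
      ring
    have hmd2 : md s^2 * (g s^2 * L^2) = 16*(r-1)^2*(Real.sin s^2 * Real.cos s^2) := by
      simp only [hmddef, hgddef]
      field_simp
      ring
    have hrg1 : (1:ℝ) ≤ r * g s := by nlinarith [hr1, hg1 s]
    have hcore : md s^2 ≤ (2*r)^2 * (1 - m s^2) := by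
      rw [← mul_le_mul_iff_of_pos_right (show (0:ℝ) < g s^2 * L^2 by positivity)]
      have hmul : ((r-1) * Real.sin s^2) * ((r-1) * Real.cos s^2)
          ≤ (Real.log (g s) * g s) * ((L - Real.log (g s)) * r) :=
        mul_le_mul hlb1 hlb2 (by nlinarith [hr1, sq_nonneg (Real.cos s)])
          (mul_nonneg hlg0.le hgp.le)
      calc md s^2 * (g s^2 * L^2) = 16*(r-1)^2*(Real.sin s^2 * Real.cos s^2) := hmd2
        _ = 16 * (((r-1) * Real.sin s^2) * ((r-1) * Real.cos s^2)) := by ring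
        _ ≤ 16 * ((Real.log (g s) * g s) * ((L - Real.log (g s)) * r)) := by linarith [hmul]
        _ = 16 * (Real.log (g s) * (L - Real.log (g s))) * (r * g s) := by ring
        _ ≤ 16 * (Real.log (g s) * (L - Real.log (g s))) * ((r * g s) * (r * g s)) := by
            have hXnn : 0 ≤ 16 * (Real.log (g s) * (L - Real.log (g s))) := by
              apply mul_nonneg (by norm_num)
              exact mul_nonneg hlg0.le (by linarith)
            have hstep : (r * g s) ≤ (r * g s) * (r * g s) := by nlinarith [hrg1, hgp, hr1]
            exact mul_le_mul_of_nonneg_left hstep hXnn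
        _ = 4 * (4 * Real.log (g s) * (L - Real.log (g s))) * (r^2 * g s^2) := by ring
        _ = (2*r)^2 * (1 - m s^2) * (g s^2 * L^2) := by rw [← hq2L]; ring
    have hsqrt2 : (Real.sqrt (1 - m s^2))^2 = 1 - m s^2 := Real.sq_sqrt hq2.le
    have hafsq : af s^2 * (1 - m s^2) = md s^2 := by
      simp only [hafdef]
      have hneg : (-(1 / Real.sqrt (1 - m s ^ 2)))^2 = 1/(1-m s^2) := by
        rw [neg_sq, div_pow, one_pow, hsqrt2]
      rw [mul_pow, hneg]
      field_simp
    have ha2 : af s^2 ≤ (2*r)^2 := by nlinarith [hafsq, hcore, hq2]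
    nlinarith [sq_abs (af s), abs_nonneg (af s), ha2, hr1]
  -- h5
  · intro s hs
    obtain ⟨hsin, hcos, hgl, hgu⟩ := hint s hs
    have hq2 : 0 < 1 - m s^2 := hq2pos s hs
    have hsqpos : 0 < Real.sqrt (1 - m s^2) := Real.sqrt_pos.mpr hq2
    have haq : af s * Real.sqrt (1 - m s ^ 2) = -md s := by
      rw [hafdef]
      field_simp
    rw [haq]
    simp only [hmddef, hgddef, hgdef, Wf]
    rw [Real.tan_eq_sin_div_cos, Real.cot_eq_cos_div_sin]
    have hrl : r * (l:ℝ)^2 = (k:ℝ)^2 := by rw [hrdef]; field_simp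
    have h0 := Real.sin_sq_add_cos_sq s
    have hgne : r * Real.sin s^2 + Real.cos s^2 ≠ 0 := by
      have := hgpos s
      rw [hgdef] at this
      exact this.ne'
    field_simp
    linear_combination (4*(Real.sin s^2 + Real.cos s^2)) * hrl
  -- h6
  · intro s hs
    obtain ⟨hs1, hs2⟩ := hs
    have hsin0 : 0 ≤ Real.sin s := Real.sin_nonneg_of_nonneg_of_le_pi hs1
      (by linarith [Real.pi_pos])
    have hcos0 : 0 ≤ Real.cos s := Real.cos_nonneg_of_mem_Icc ⟨by linarith, hs2⟩
    have hgp := hgpos s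
    have hlgnn : 0 ≤ Real.log (g s) := Real.log_nonneg (hg1 s)
    have hlgL : Real.log (g s) ≤ L := by
      rw [hLdef]
      exact (Real.log_le_log_iff hgp (by positivity)).mpr (hgr s)
    have hub1 : Real.log (g s) ≤ (r-1) * Real.sin s^2 := by
      have h1 := Real.log_le_sub_one_of_pos hgp
      linarith [hgsub1 s]
    have hub2 : L - Real.log (g s) ≤ (r-1) * Real.cos s^2 := by
      have hrpos : (0:ℝ) < r := by linarith
      have h1 : Real.log (r / g s) ≤ r / g s - 1 := Real.log_le_sub_one_of_pos (by positivity)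
      have h2 : Real.log (r/g s) = L - Real.log (g s) := by
        rw [hLdef, Real.log_div hrpos.ne' hgp.ne']
      have h3 : r / g s - 1 ≤ r - g s := by
        have hnn : 0 ≤ r - g s := by linarith [hgr s]
        have heq : r / g s - 1 = (r - g s)/g s := by field_simp
        rw [heq]
        exact div_le_self hnn (hg1 s)
      calc L - Real.log (g s) = Real.log (r / g s) := h2.symm
        _ ≤ r / g s - 1 := h1
        _ ≤ r - g s := h3
        _ = (r-1) * Real.cos s^2 := hrsubg s
    have hq2L : (1 - m s^2) * L^2 = 4 * Real.log (g s) * (L - Real.log (g s)) := by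
      simp only [hmdef]
      field_simp
      ring
    have hsin_le : Real.sin s ≤ s := Real.sin_le hs1
    have hcos_le : Real.cos s ≤ π/2 - s := by
      have := Real.sin_le (x := π/2 - s) (by linarith)
      rwa [Real.sin_pi_div_two_sub] at this
    have hΔ : (0:ℝ) ≤ π/2 - s := by linarith
    have hprod : Real.sin s * Real.cos s ≤ s * (π/2 - s) := mul_le_mul hsin_le hcos_le hcos0 hs1
    have hx2 : (Real.sin s * Real.cos s)^2 ≤ (s*(π/2-s))^2 :=
      pow_le_pow_left₀ (mul_nonneg hsin0 hcos0) hprod 2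
    have hsd : s * (π/2-s) ≤ (π/2)^2 := by nlinarith
    have hy : (s*(π/2-s))^2 ≤ (π/2)^2 * (s*(π/2-s)) := by nlinarith [mul_nonneg hs1 hΔ]
    have hmul : Real.log (g s) * (L - Real.log (g s))
        ≤ ((r-1)*Real.sin s^2) * ((r-1)*Real.cos s^2) :=
      mul_le_mul hub1 hub2 (by linarith) (by nlinarith [hr1, sq_nonneg (Real.sin s)])
    rw [← mul_le_mul_iff_of_pos_right (show (0:ℝ) < L^2 by positivity)]
    calc (1 - m s^2) * L^2 = 4 * Real.log (g s) * (L - Real.log (g s)) := hq2L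
      _ ≤ 4 * (((r-1)*Real.sin s^2) * ((r-1)*Real.cos s^2)) := by linarith [hmul]
      _ = 4*(r-1)^2 * (Real.sin s * Real.cos s)^2 := by ring
      _ ≤ 4*(r-1)^2 * ((π/2)^2 * (s*(π/2-s))) := by
          apply mul_le_mul_of_nonneg_left (hx2.trans hy) (by nlinarith [hr1])
      _ = (2*(r-1)/L)^2*(π/2)^2 * (s*(π/2-s)) * L^2 := by field_simp; ring
  -- h70
  · show m 0 = 1
    rw [hmdef]
    simp [hgdef]
  -- h71
  · show m (π/2) = -1
    rw [hmdef]
    simp only [hgdef, Real.sin_pi_div_two, Real.cos_pi_div_two]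
    rw [show r * 1^2 + 0^2 = r by ring]
    rw [← hLdef]
    field_simp
    norm_num
  -- h8
  · apply ContinuousOn.mul _ hmdcont.continuousOn
    apply ContinuousOn.neg
    apply ContinuousOn.div continuousOn_const
    · exact (Real.continuous_sqrt.comp (continuous_const.sub (hmcont.pow 2))).continuousOn
    · intro s hs
      exact (Real.sqrt_pos.mpr (hq2pos s hs)).ne'
  -- hA
  · linarith
  -- hB
  · positivity

/-- Let `α` be the critical configuration (arccos formula if `|k| > |l|`,
`α(s) = 2s` if `|k| = |l|`). Then for every smooth fixed-endpoint variation `v`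
(`v(0) = v(π/2) = 0`) the second variation of the reduced σ₂-energy at `α` is
nonnegative: these solutions are stable critical points. -/
theorem stmt_7 (k l : ℤ) (hk : k ≠ 0) (hl : l ≠ 0) (α : ℝ → ℝ)
    (hα : (|k| > |l| ∧ α = fun s => arccos (1 - 2 * Real.log (((k : ℝ)^2 / (l : ℝ)^2) *
            sin s ^ 2 + cos s ^ 2) / Real.log ((k : ℝ)^2 / (l : ℝ)^2)))
        ∨ (|k| = |l| ∧ α = fun s => 2 * s)) :
    ∀ v : ℝ → ℝ, ContDiff ℝ (⊤ : ℕ∞) v → v 0 = 0 → v (π/2) = 0 →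
      0 ≤ deriv (deriv (fun t : ℝ => ∫ s in (0:ℝ)..(π/2),
        ((k : ℝ)^2 * tan s + (l : ℝ)^2 * cot s) *
          (deriv (fun x => α x + t * v x) s)^2 * sin (α s + t * v s)^2)) 0 := by
  rcases hα with ⟨hkl, hαe⟩ | ⟨hkl, hαe⟩
  · subst hαe
    exact case_lt k l hk hl hkl
  · subst hαe
    exact case_eq k l hk hl hkl
end
end

section
/- Let k, ℓ be nonzero integers, and suppose α : [0, π/2] → [0, π] is continuous, C² on (0, π/2), satisfies α(0) = 0, α(π/2) = π, and on (0, π/2) satisfies [α″(s)·sin α(s) + α′(s)²·cos α(s)]·(k²/cos²s + ℓ²/sin²s) + α′(s)·sin α(s)·(k²/(sin s·cos³s) − ℓ²/(cos s·sin³s)) = 0. Then α is uniquely determined: α(s) = arccos(1 − 2·ln((k²/ℓ²)·sin²s + cos²s)/ln(k²/ℓ²)) if |k| > |ℓ|, and α(s) = 2s if |k| = |ℓ|. -/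
/-!
With `P(s) = K sin² s + L cos² s` (`K = k²`, `L = ℓ²`), the left-hand side of the ODE equals
`(sin s cos s)⁻¹ · d/ds [α' sin α · P / (sin s cos s)]`, so `α' sin α = c · sin s cos s / P(s)`
for a constant `c`. Integrating once more, `1 - cos α` is `c` times an antiderivative `F` of
`sin s cos s / P` normalised by `F(0) = 0`, and the boundary value `α(π/2) = π` fixes
`c = 2 / F(π/2)`. For `K > L` one can take `F = log (P / L) / (2 (K - L))`, and for `K = L`
`F = sin² / (2 K)`, which gives `cos α(s) = cos 2s`. Since `α` takes values in `[0, π]`,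
`α = arccos (cos α)`.
-/

open Real Set

theorem sub_eq_sub_of_hasDerivAt_eq {f g f' : ℝ → ℝ} {a b x : ℝ}
    (hf : ContinuousOn f (Icc a b)) (hg : ContinuousOn g (Icc a b))
    (hf' : ∀ y ∈ Ioo a b, HasDerivAt f (f' y) y) (hg' : ∀ y ∈ Ioo a b, HasDerivAt g (f' y) y)
    (hx : x ∈ Icc a b) : f x - f a = g x - g a := by
  rcases hx.1.eq_or_lt with rfl | hax
  · simp
  obtain ⟨y, -, hslope⟩ := exists_hasDerivAt_eq_slope (f - g) (fun _ => 0) hax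
    ((hf.sub hg).mono (Icc_subset_Icc_right hx.2)) fun y hy =>
      ((hf' y ⟨hy.1, hy.2.trans_le hx.2⟩).sub (hg' y ⟨hy.1, hy.2.trans_le hx.2⟩)).congr_deriv
        (sub_self _)
  rw [eq_comm, div_eq_zero_iff, sub_eq_zero, Pi.sub_apply, Pi.sub_apply] at hslope
  rcases hslope with h | h
  · linarith
  · exact absurd h (sub_ne_zero.2 hax.ne')

theorem hasDerivAt_deriv_of_contDiffOn_two {f : ℝ → ℝ} {s : Set ℝ} {x : ℝ}
    (hf : ContDiffOn ℝ 2 f s) (hs : IsOpen s) (hx : x ∈ s) :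
    HasDerivAt f (deriv f x) x ∧ HasDerivAt (deriv f) (deriv (deriv f) x) x :=
  ⟨((hf.differentiableOn (by norm_num)).differentiableAt (hs.mem_nhds hx)).hasDerivAt,
    (((hf.deriv_of_isOpen hs (m := 1) (by norm_num)).differentiableOn one_ne_zero).differentiableAt
      (hs.mem_nhds hx)).hasDerivAt⟩

theorem cos_comp_eq_of_hasDerivAt {α F F' : ℝ → ℝ} {a b c x : ℝ}
    (hα : ContinuousOn α (Icc a b)) (hF : ContinuousOn F (Icc a b))
    (ha : α a = 0) (hb : α b = π) (hab : a ≤ b)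
    (hF' : ∀ s ∈ Ioo a b, HasDerivAt F (F' s) s)
    (hαF : ∀ s ∈ Ioo a b, HasDerivAt (fun t => cos (α t)) (c * F' s) s)
    (hx : x ∈ Icc a b) :
    cos (α x) = 1 - 2 * (F x - F a) / (F b - F a) := by
  have key : ∀ y ∈ Icc a b, cos (α y) - cos (α a) = c * F y - c * F a := fun y hy =>
    sub_eq_sub_of_hasDerivAt_eq (continuous_cos.comp_continuousOn hα) (hF.const_smul c) hαF
      (fun s hs => (hF' s hs).const_mul c) hy
  have hend := key b (right_mem_Icc.2 hab)
  rw [ha, hb, cos_zero, cos_pi] at hend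
  have hne : F b - F a ≠ 0 := by
    intro h
    rw [← mul_sub, h] at hend
    norm_num at hend
  have hxa := key x hx
  rw [ha, cos_zero] at hxa
  field_simp
  linear_combination (F b - F a) * hxa - (F x - F a) * hend

noncomputable def hopfWeight (K L t : ℝ) : ℝ := K * sin t ^ 2 + L * cos t ^ 2

section hopfWeight

variable {K L : ℝ}

theorem hopfWeight_zero : hopfWeight K L 0 = L := by simp [hopfWeight]

theorem hopfWeight_pi_div_two : hopfWeight K L (π / 2) = K := by simp [hopfWeight]

theorem hopfWeight_self (t : ℝ) : hopfWeight K K t = K := by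
  rw [hopfWeight, ← mul_add, sin_sq_add_cos_sq, mul_one]

theorem hopfWeight_pos (hK : 0 < K) (hL : 0 < L) (t : ℝ) : 0 < hopfWeight K L t := by
  unfold hopfWeight
  rcases eq_or_ne (sin t) 0 with h | h
  · have : cos t ^ 2 = 1 := by nlinarith [sin_sq_add_cos_sq t]
    simp [h, this, hL]
  · positivity

theorem continuous_hopfWeight : Continuous (hopfWeight K L) := by
  unfold hopfWeight
  fun_prop

theorem hasDerivAt_hopfWeight (t : ℝ) :
    HasDerivAt (hopfWeight K L) (2 * (K - L) * sin t * cos t) t :=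
  ((((hasDerivAt_sin t).pow 2).const_mul K).add
    (((hasDerivAt_cos t).pow 2).const_mul L)).congr_deriv (by ring)

-- `hopfWeight K L t / (sin t * cos t) = K tan t + L cot t`.
theorem hasDerivAt_hopfWeight_div_sin_mul_cos {t : ℝ} (hs : sin t ≠ 0) (hc : cos t ≠ 0) :
    HasDerivAt (fun u => hopfWeight K L u / (sin u * cos u))
      (K / cos t ^ 2 - L / sin t ^ 2) t := by
  refine ((hasDerivAt_hopfWeight t).div ((hasDerivAt_sin t).mul (hasDerivAt_cos t))
    (mul_ne_zero hs hc)).congr_deriv ?_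
  simp only [Pi.mul_apply, hopfWeight]
  field_simp
  linear_combination (K * sin t ^ 2 - L * cos t ^ 2) * sin_sq_add_cos_sq t

end hopfWeight

theorem hasDerivAt_first_integral {α : ℝ → ℝ} {K L s : ℝ} (hs : sin s ≠ 0) (hc : cos s ≠ 0)
    (hα : HasDerivAt α (deriv α s) s) (hα' : HasDerivAt (deriv α) (deriv (deriv α) s) s)
    (hode : (deriv (deriv α) s * sin (α s) + (deriv α s) ^ 2 * cos (α s)) *
        (K / cos s ^ 2 + L / sin s ^ 2) +
      deriv α s * sin (α s) * (K / (sin s * cos s ^ 3) - L / (cos s * sin s ^ 3)) = 0) :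
    HasDerivAt (fun t => deriv α t * sin (α t) * (hopfWeight K L t / (sin t * cos t))) 0 s := by
  refine ((hα'.mul ((hasDerivAt_sin (α s)).comp s hα)).mul
    (hasDerivAt_hopfWeight_div_sin_mul_cos hs hc)).congr_deriv ?_
  simp only [Pi.mul_apply, Function.comp_apply]
  rw [← mul_zero (sin s * cos s), ← hode, hopfWeight]
  field_simp

section boundaryValueProblem

variable {α : ℝ → ℝ} {K L : ℝ}

theorem cos_comp_eq_of_ode {F : ℝ → ℝ} (hK : 0 < K) (hL : 0 < L)
    (hcont : ContinuousOn α (Icc 0 (π / 2))) (hC2 : ContDiffOn ℝ 2 α (Ioo 0 (π / 2)))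
    (h0 : α 0 = 0) (h1 : α (π / 2) = π)
    (hode : ∀ s ∈ Ioo 0 (π / 2),
      (deriv (deriv α) s * sin (α s) + (deriv α s) ^ 2 * cos (α s)) *
        (K / cos s ^ 2 + L / sin s ^ 2) +
      deriv α s * sin (α s) * (K / (sin s * cos s ^ 3) - L / (cos s * sin s ^ 3)) = 0)
    (hF : ContinuousOn F (Icc 0 (π / 2)))
    (hF' : ∀ s ∈ Ioo 0 (π / 2), HasDerivAt F (sin s * cos s / hopfWeight K L s) s)
    {x : ℝ} (hx : x ∈ Icc 0 (π / 2)) :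
    cos (α x) = 1 - 2 * (F x - F 0) / (F (π / 2) - F 0) := by
  have hsin : ∀ s ∈ Ioo 0 (π / 2), sin s ≠ 0 := fun s hs =>
    (sin_pos_of_pos_of_lt_pi hs.1 (hs.2.trans (by linarith [pi_pos]))).ne'
  have hcos : ∀ s ∈ Ioo 0 (π / 2), cos s ≠ 0 := fun s hs =>
    (cos_pos_of_mem_Ioo ⟨by linarith [hs.1, pi_pos], hs.2⟩).ne'
  have hderiv : ∀ s ∈ Ioo 0 (π / 2),
      HasDerivAt α (deriv α s) s ∧ HasDerivAt (deriv α) (deriv (deriv α) s) s :=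
    fun s hs => hasDerivAt_deriv_of_contDiffOn_two hC2 isOpen_Ioo hs
  have hfirst : ∀ s ∈ Ioo 0 (π / 2), HasDerivAt
      (fun t => deriv α t * sin (α t) * (hopfWeight K L t / (sin t * cos t))) 0 s :=
    fun s hs => hasDerivAt_first_integral (hsin s hs) (hcos s hs) (hderiv s hs).1
      (hderiv s hs).2 (hode s hs)
  obtain ⟨c, hc⟩ := isOpen_Ioo.exists_is_const_of_deriv_eq_zero isPreconnected_Ioo
    (fun s hs => (hfirst s hs).differentiableAt.differentiableWithinAt)
    (fun s hs => (hfirst s hs).deriv)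
  refine cos_comp_eq_of_hasDerivAt hcont hF h0 h1 (by linarith [pi_pos]) hF' (c := -c)
    (fun s hs => ?_) hx
  have hP := (hopfWeight_pos hK hL s).ne'
  have hs0 := hsin s hs
  have hc0 := hcos s hs
  have hcs := hc s hs
  refine ((hasDerivAt_cos (α s)).comp s (hderiv s hs).1).congr_deriv ?_
  field_simp at hcs ⊢
  linear_combination -hcs

theorem cos_comp_eq_of_ode_of_lt (hL : 0 < L) (hLK : L < K)
    (hcont : ContinuousOn α (Icc 0 (π / 2))) (hC2 : ContDiffOn ℝ 2 α (Ioo 0 (π / 2)))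
    (h0 : α 0 = 0) (h1 : α (π / 2) = π)
    (hode : ∀ s ∈ Ioo 0 (π / 2),
      (deriv (deriv α) s * sin (α s) + (deriv α s) ^ 2 * cos (α s)) *
        (K / cos s ^ 2 + L / sin s ^ 2) +
      deriv α s * sin (α s) * (K / (sin s * cos s ^ 3) - L / (cos s * sin s ^ 3)) = 0)
    {x : ℝ} (hx : x ∈ Icc 0 (π / 2)) :
    cos (α x) = 1 - 2 * log (K / L * sin x ^ 2 + cos x ^ 2) / log (K / L) := by
  have hK : 0 < K := hL.trans hLK
  have hP := hopfWeight_pos hK hL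
  have hF' : ∀ t ∈ Ioo 0 (π / 2), HasDerivAt (fun u => log (hopfWeight K L u) / (2 * (K - L)))
      (sin t * cos t / hopfWeight K L t) t := fun t _ => by
    refine (((hasDerivAt_hopfWeight t).log (hP t).ne').div_const _).congr_deriv ?_
    field_simp [(hP t).ne', (sub_pos.2 hLK).ne']
  have harg : K / L * sin x ^ 2 + cos x ^ 2 = hopfWeight K L x / L := by
    rw [hopfWeight]
    field_simp
  rw [cos_comp_eq_of_ode hK hL hcont hC2 h0 h1 hode
      ((continuous_hopfWeight.log fun t => (hP t).ne').div_const _).continuousOn hF' hx,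
    harg, log_div (hP x).ne' hL.ne', log_div hK.ne' hL.ne', hopfWeight_zero,
    hopfWeight_pi_div_two]
  field_simp [(sub_pos.2 hLK).ne']

theorem cos_comp_eq_of_ode_of_eq (hK : 0 < K)
    (hcont : ContinuousOn α (Icc 0 (π / 2))) (hC2 : ContDiffOn ℝ 2 α (Ioo 0 (π / 2)))
    (h0 : α 0 = 0) (h1 : α (π / 2) = π)
    (hode : ∀ s ∈ Ioo 0 (π / 2),
      (deriv (deriv α) s * sin (α s) + (deriv α s) ^ 2 * cos (α s)) *
        (K / cos s ^ 2 + K / sin s ^ 2) +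
      deriv α s * sin (α s) * (K / (sin s * cos s ^ 3) - K / (cos s * sin s ^ 3)) = 0)
    {x : ℝ} (hx : x ∈ Icc 0 (π / 2)) :
    cos (α x) = cos (2 * x) := by
  have hF' : ∀ t ∈ Ioo 0 (π / 2), HasDerivAt (fun u => sin u ^ 2 / (2 * K))
      (sin t * cos t / hopfWeight K K t) t := fun t _ => by
    refine (((hasDerivAt_sin t).pow 2).div_const _).congr_deriv ?_
    rw [hopfWeight_self]
    field_simp
    ring
  rw [cos_comp_eq_of_ode hK hK hcont hC2 h0 h1 hode (by fun_prop) hF' hx, sin_zero,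
    sin_pi_div_two, cos_two_mul, cos_sq']
  field_simp
  ring

end boundaryValueProblem

/-- Uniqueness of solutions of the reduced σ₂-criticality ODE with the
boundary conditions `α(0) = 0`, `α(π/2) = π`: any continuous `α : [0, π/2] → [0, π]`,
C² on `(0, π/2)`, satisfying the bracketed ODE on `(0, π/2)` must equal the arccos
formula if `|k| > |l|`, and `α(s) = 2s` if `|k| = |l|`. -/
theorem stmt_8 (k l : ℤ) (hk : k ≠ 0) (hl : l ≠ 0) (α : ℝ → ℝ)
    (hcont : ContinuousOn α (Icc 0 (π/2)))
    (hmaps : MapsTo α (Icc 0 (π/2)) (Icc 0 π))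
    (hC2 : ContDiffOn ℝ 2 α (Ioo 0 (π/2)))
    (h0 : α 0 = 0) (h1 : α (π/2) = π)
    (hode : ∀ s ∈ Ioo 0 (π/2),
      (deriv (deriv α) s * sin (α s) + (deriv α s)^2 * cos (α s)) *
        ((k : ℝ)^2 / cos s ^ 2 + (l : ℝ)^2 / sin s ^ 2) +
      deriv α s * sin (α s) *
        ((k : ℝ)^2 / (sin s * cos s ^ 3) - (l : ℝ)^2 / (cos s * sin s ^ 3)) = 0) :
    (|k| > |l| → ∀ s ∈ Icc (0:ℝ) (π/2),
      α s = arccos (1 - 2 * Real.log (((k : ℝ)^2 / (l : ℝ)^2) * sin s ^ 2 + cos s ^ 2)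
        / Real.log ((k : ℝ)^2 / (l : ℝ)^2))) ∧
    (|k| = |l| → ∀ s ∈ Icc (0:ℝ) (π/2), α s = 2 * s) := by
  have hK : 0 < (k : ℝ) ^ 2 := by positivity
  have hL : 0 < (l : ℝ) ^ 2 := by positivity
  have hα : ∀ s ∈ Icc (0:ℝ) (π/2), α s = arccos (cos (α s)) := fun s hs =>
    (arccos_cos (hmaps hs).1 (hmaps hs).2).symm
  refine ⟨fun hkl s hs => ?_, fun hkl s hs => ?_⟩
  · have hLK : (l : ℝ) ^ 2 < (k : ℝ) ^ 2 := by
      rw [sq_lt_sq, ← Int.cast_abs, ← Int.cast_abs]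
      exact_mod_cast hkl
    rw [hα s hs, cos_comp_eq_of_ode_of_lt hL hLK hcont hC2 h0 h1 hode hs]
  · have hKL : (k : ℝ) ^ 2 = (l : ℝ) ^ 2 := by
      rw [sq_eq_sq_iff_abs_eq_abs, ← Int.cast_abs, ← Int.cast_abs]
      exact_mod_cast hkl
    rw [← hKL] at hode
    rw [hα s hs, cos_comp_eq_of_ode_of_eq hK hcont hC2 h0 h1 hode hs,
      arccos_cos (by linarith [hs.1]) (by linarith [hs.2])]
end

section
/- Let k be a positive integer and C > 0. Then the function α(s) = 2·arctan(C·tan^k s) satisfies, on (0, π/2), the harmonicity ODE α″(s) + (cot s − tan s)·α′(s) − (k²/cos²s + k²/sin²s)·sin α(s)·cos α(s) = 0, together with the boundary conditions lim_{s→0⁺} α(s) = 0 and lim_{s→π/2⁻} α(s) = π. -/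
/-!
`α` solves the first-order equation `α' = k sin α / (sin s cos s)`: the function
`u = C tanᵏ s` satisfies `u' = k u / (sin s cos s)`, and `2 arctan` turns `u' = c u` into
`α' = c sin α` because `sin (2 arctan u) = 2u / (1 + u²)`. Differentiating the first-order
equation, the term coming from `(sin s cos s)' = cos² s − sin² s` cancels `(cot s − tan s) α'`,
and what remains is `k² sin α cos α / (sin² s cos² s)`.
-/

open Real Set Filter Topology

lemma sin_ne_zero_of_mem_Ioo_zero_pi_div_two {s : ℝ} (hs : s ∈ Ioo 0 (π / 2)) : sin s ≠ 0 :=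
  (sin_pos_of_pos_of_lt_pi hs.1 (by linarith [hs.2, pi_pos])).ne'

lemma cos_ne_zero_of_mem_Ioo_zero_pi_div_two {s : ℝ} (hs : s ∈ Ioo 0 (π / 2)) : cos s ≠ 0 :=
  (cos_pos_of_mem_Ioo ⟨by linarith [hs.1, pi_pos], hs.2⟩).ne'

lemma sin_two_mul_arctan (x : ℝ) : sin (2 * arctan x) = 2 * x / (1 + x ^ 2) := by
  have h : √(1 + x ^ 2) ^ 2 = 1 + x ^ 2 := sq_sqrt (by positivity)
  rw [sin_two_mul, sin_arctan, cos_arctan]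
  field_simp
  rw [h]

lemma hasDerivAt_two_mul_arctan_of_hasDerivAt_mul_self {u : ℝ → ℝ} {c x : ℝ}
    (hu : HasDerivAt u (c * u x) x) :
    HasDerivAt (fun y => 2 * arctan (u y)) (c * sin (2 * arctan (u x))) x := by
  refine (hu.arctan.const_mul 2).congr_deriv ?_
  rw [sin_two_mul_arctan]
  ring

lemma hasDerivAt_tan_pow (k : ℕ) {x : ℝ} (hsin : sin x ≠ 0) (hcos : cos x ≠ 0) :
    HasDerivAt (fun y => tan y ^ k) (k / (sin x * cos x) * tan x ^ k) x := by
  refine ((hasDerivAt_pow k (tan x)).comp x (hasDerivAt_tan hcos)).congr_deriv ?_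
  cases k with
  | zero => simp
  | succ n =>
    rw [Nat.add_sub_cancel, tan_eq_sin_div_cos, div_pow, div_pow]
    push_cast
    field_simp
    ring

lemma hasDerivAt_two_mul_arctan_mul_tan_pow (k : ℕ) (C : ℝ) {s : ℝ} (hs : s ∈ Ioo 0 (π / 2)) :
    HasDerivAt (fun x => 2 * arctan (C * tan x ^ k))
      (k / (sin s * cos s) * sin (2 * arctan (C * tan s ^ k))) s := by
  refine hasDerivAt_two_mul_arctan_of_hasDerivAt_mul_self ?_
  rw [mul_left_comm]
  exact (hasDerivAt_tan_pow k (sin_ne_zero_of_mem_Ioo_zero_pi_div_two hs)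
    (cos_ne_zero_of_mem_Ioo_zero_pi_div_two hs)).const_mul C

theorem harmonicity_ode_of_hasDerivAt_eq_mul_sin {α : ℝ → ℝ} {k : ℝ}
    (hα : ∀ s ∈ Ioo 0 (π / 2), HasDerivAt α (k / (sin s * cos s) * sin (α s)) s) :
    ∀ s ∈ Ioo 0 (π / 2), deriv (deriv α) s + (cot s - tan s) * deriv α s -
        (k ^ 2 / cos s ^ 2 + k ^ 2 / sin s ^ 2) * sin (α s) * cos (α s) = 0 := by
  intro s hs
  have hsin := sin_ne_zero_of_mem_Ioo_zero_pi_div_two hs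
  have hcos := cos_ne_zero_of_mem_Ioo_zero_pi_div_two hs
  have hderiv : deriv α =ᶠ[𝓝 s] fun x => k / (sin x * cos x) * sin (α x) := by
    filter_upwards [isOpen_Ioo.mem_nhds hs] with x hx using (hα x hx).deriv
  have hcoef : HasDerivAt (fun x => k / (sin x * cos x))
      (-(k * (cos s * cos s - sin s * sin s)) / (sin s * cos s) ^ 2) s := by
    refine ((hasDerivAt_const s k).fun_div ((hasDerivAt_sin s).mul (hasDerivAt_cos s))
      (mul_ne_zero hsin hcos)).congr_deriv ?_
    simp only [Pi.mul_apply]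
    ring
  have hsecond : HasDerivAt (fun x => k / (sin x * cos x) * sin (α x)) _ s :=
    hcoef.mul (hα s hs).sin
  rw [hderiv.deriv_eq, hsecond.deriv, (hα s hs).deriv, cot_eq_cos_div_sin, tan_eq_sin_div_cos]
  field_simp
  linear_combination -(k ^ 2 * sin (α s) * cos (α s)) * sin_sq_add_cos_sq s

lemma tendsto_two_mul_arctan_mul_tan_pow_nhdsGT_zero {k : ℕ} (hk : k ≠ 0) (C : ℝ) :
    Tendsto (fun s => 2 * arctan (C * tan s ^ k)) (𝓝[>] 0) (𝓝 0) := by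
  have hcont : ContinuousAt (fun s => 2 * arctan (C * tan s ^ k)) 0 := by
    have : ContinuousAt tan 0 := continuousAt_tan.2 (by simp)
    fun_prop
  simpa [hk] using hcont.tendsto.mono_left nhdsWithin_le_nhds

lemma tendsto_two_mul_arctan_mul_tan_pow_nhdsLT_pi_div_two {k : ℕ} (hk : k ≠ 0) {C : ℝ}
    (hC : 0 < C) : Tendsto (fun s => 2 * arctan (C * tan s ^ k)) (𝓝[<] (π / 2)) (𝓝 π) := by
  have hinner : Tendsto (fun s => C * tan s ^ k) (𝓝[<] (π / 2)) atTop :=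
    ((tendsto_pow_atTop hk).comp tendsto_tan_pi_div_two).const_mul_atTop hC
  have := ((tendsto_arctan_atTop.mono_right nhdsWithin_le_nhds).comp hinner).const_mul 2
  rwa [mul_div_cancel₀ π two_ne_zero] at this

/-- For a positive integer `k` and `C > 0`, the function
`α(s) = 2·arctan(C·tanᵏ s)` satisfies the harmonicity ODE
`α'' + (cot s − tan s)·α' − (k²/cos²s + k²/sin²s)·sin α·cos α = 0` on `(0, π/2)` with
boundary limits `α(s) → 0` as `s → 0⁺` and `α(s) → π` as `s → (π/2)⁻`. -/
theorem stmt_9 (k : ℕ) (hk : 0 < k) (C : ℝ) (hC : 0 < C)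
    (α : ℝ → ℝ) (hα : α = fun s => 2 * arctan (C * tan s ^ k)) :
    (∀ s ∈ Ioo 0 (π/2),
      deriv (deriv α) s + (cot s - tan s) * deriv α s -
        ((k : ℝ)^2 / cos s ^ 2 + (k : ℝ)^2 / sin s ^ 2) * sin (α s) * cos (α s) = 0) ∧
    Filter.Tendsto α (nhdsWithin 0 (Ioi 0)) (nhds 0) ∧
    Filter.Tendsto α (nhdsWithin (π/2) (Iio (π/2))) (nhds π) := by
  subst hα
  exact ⟨harmonicity_ode_of_hasDerivAt_eq_mul_sin
      fun s hs => hasDerivAt_two_mul_arctan_mul_tan_pow k C hs,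
    tendsto_two_mul_arctan_mul_tan_pow_nhdsGT_zero hk.ne' C,
    tendsto_two_mul_arctan_mul_tan_pow_nhdsLT_pi_div_two hk.ne' hC⟩
end

section
/- Let k, ℓ be nonzero integers. Then there exists a smooth, strictly increasing function α : (0, π/2) → (0, π) satisfying the eikonal (horizontal conformality) equation α′(s) = sin α(s) · √(k²/cos²s + ℓ²/sin²s) for all s ∈ (0, π/2), with lim_{s→0⁺} α(s) = 0 and lim_{s→π/2⁻} α(s) = π. -/
open Real Set Filter

noncomputable def eikG (K L s : ℝ) : ℝ :=
  Real.sqrt (K ^ 2 * Real.sin s ^ 2 + L ^ 2 * Real.cos s ^ 2)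

noncomputable def eikF (K L s : ℝ) : ℝ :=
  K * (Real.log (K + eikG K L s) - Real.log (Real.cos s))
    + L * (Real.log (Real.sin s) - Real.log (L + eikG K L s))

noncomputable def eikA (K L s : ℝ) : ℝ := 2 * Real.arctan (Real.exp (eikF K L s))

section lemmas

variable {K L s : ℝ}

lemma eik_w_pos (hK : 0 < K) (hsin : 0 < Real.sin s) :
    0 < K ^ 2 * Real.sin s ^ 2 + L ^ 2 * Real.cos s ^ 2 := by
  have h1 : 0 < K ^ 2 * Real.sin s ^ 2 := by positivity
  nlinarith [sq_nonneg (L * Real.cos s)]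

lemma eikG_pos (hK : 0 < K) (hsin : 0 < Real.sin s) : 0 < eikG K L s :=
  Real.sqrt_pos.2 (eik_w_pos hK hsin)

lemma eikG_sq (hK : 0 < K) (hsin : 0 < Real.sin s) :
    eikG K L s ^ 2 = K ^ 2 * Real.sin s ^ 2 + L ^ 2 * Real.cos s ^ 2 :=
  Real.sq_sqrt (eik_w_pos hK hsin).le

lemma eik_hasDerivAt_w (s : ℝ) :
    HasDerivAt (fun s => K ^ 2 * Real.sin s ^ 2 + L ^ 2 * Real.cos s ^ 2)
      (K ^ 2 * (2 * Real.sin s ^ 1 * Real.cos s) + L ^ 2 * (2 * Real.cos s ^ 1 * (-Real.sin s))) s :=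
  ((((Real.hasDerivAt_sin s).pow 2).const_mul (K ^ 2)).add
    (((Real.hasDerivAt_cos s).pow 2).const_mul (L ^ 2)))

lemma eik_hasDerivAt_G (hK : 0 < K) (hL : 0 < L) (hsin : 0 < Real.sin s) :
    HasDerivAt (eikG K L) ((K ^ 2 - L ^ 2) * Real.sin s * Real.cos s / eikG K L s) s := by
  have hw := eik_w_pos (L := L) (s := s) hK hsin
  have h := (Real.hasDerivAt_sqrt hw.ne').comp s (eik_hasDerivAt_w (K := K) (L := L) s)
  have hG := eikG_pos (L := L) (s := s) hK hsin
  refine h.congr_deriv ?_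
  have : Real.sqrt (K ^ 2 * Real.sin s ^ 2 + L ^ 2 * Real.cos s ^ 2) = eikG K L s := rfl
  rw [this]
  field_simp
  ring

lemma eik_hasDerivAt_F (hK : 0 < K) (hL : 0 < L) (hs : s ∈ Ioo 0 (π / 2)) :
    HasDerivAt (eikF K L) (eikG K L s / (Real.sin s * Real.cos s)) s := by
  have hsin : 0 < Real.sin s := Real.sin_pos_of_pos_of_lt_pi hs.1 (hs.2.trans (by linarith [Real.pi_pos]))
  have hcos : 0 < Real.cos s := Real.cos_pos_of_mem_Ioo ⟨by linarith [Real.pi_pos, hs.1], hs.2⟩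
  have hG := eikG_pos (L := L) (s := s) hK hsin
  have hG2 := eikG_sq (L := L) (s := s) hK hsin
  have hpyth := Real.sin_sq_add_cos_sq s
  have hg := eik_hasDerivAt_G (s := s) hK hL hsin
  set g := eikG K L s with hgdef
  set g' := (K ^ 2 - L ^ 2) * Real.sin s * Real.cos s / g with hg'def
  have h1 : HasDerivAt (fun s => Real.log (K + eikG K L s)) (g' / (K + g)) s := by
    simpa using ((hasDerivAt_const s K).add hg).log (add_pos hK hG).ne'
  have h2 : HasDerivAt (fun s => Real.log (Real.cos s)) (-Real.sin s / Real.cos s) s :=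
    (Real.hasDerivAt_cos s).log hcos.ne'
  have h3 : HasDerivAt (fun s => Real.log (Real.sin s)) (Real.cos s / Real.sin s) s :=
    (Real.hasDerivAt_sin s).log hsin.ne'
  have h4 : HasDerivAt (fun s => Real.log (L + eikG K L s)) (g' / (L + g)) s := by
    simpa using ((hasDerivAt_const s L).add hg).log (add_pos hL hG).ne'
  have hF : HasDerivAt (eikF K L)
      (K * (g' / (K + g) - -Real.sin s / Real.cos s)
        + L * (Real.cos s / Real.sin s - g' / (L + g))) s :=
    ((h1.sub h2).const_mul K).add ((h3.sub h4).const_mul L)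
  convert hF using 1
  -- algebraic identity
  have hA : (K ^ 2 - L ^ 2) * Real.cos s ^ 2 = (K - g) * (K + g) := by
    linear_combination hG2 + K ^ 2 * hpyth
  have hB : (K ^ 2 - L ^ 2) * Real.sin s ^ 2 = (g - L) * (g + L) := by
    linear_combination (-1 : ℝ) * hG2 - L ^ 2 * hpyth
  have hKg : (0 : ℝ) < K + g := by positivity
  have hLg : (0 : ℝ) < L + g := by positivity
  have e1 : g' / (K + g) = Real.sin s * (K - g) / (g * Real.cos s) := by
    rw [hg'def, div_div, div_eq_div_iff (by positivity) (by positivity)]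
    linear_combination (g * Real.sin s) * hA
  have e2 : g' / (L + g) = (g - L) * Real.cos s / (g * Real.sin s) := by
    rw [hg'def, div_div, div_eq_div_iff (by positivity) (by positivity)]
    linear_combination (g * Real.cos s) * hB
  rw [e1, e2]
  rw [div_eq_iff (by positivity : Real.sin s * Real.cos s ≠ 0)]
  field_simp
  linear_combination hG2

end lemmas

lemma eik_sqrt_eq {K L s : ℝ} (hK : 0 < K) (hL : 0 < L)
    (hsin : 0 < Real.sin s) (hcos : 0 < Real.cos s) :
    Real.sqrt (K ^ 2 / Real.cos s ^ 2 + L ^ 2 / Real.sin s ^ 2)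
      = eikG K L s / (Real.sin s * Real.cos s) := by
  have h : K ^ 2 / Real.cos s ^ 2 + L ^ 2 / Real.sin s ^ 2
      = (K ^ 2 * Real.sin s ^ 2 + L ^ 2 * Real.cos s ^ 2) / (Real.sin s * Real.cos s) ^ 2 := by
    rw [div_add_div _ _ (by positivity : Real.cos s ^ 2 ≠ 0) (by positivity : Real.sin s ^ 2 ≠ 0)]
    rw [div_eq_div_iff (by positivity) (by positivity)]
    ring
  rw [h, Real.sqrt_div (by positivity) ((Real.sin s * Real.cos s) ^ 2),
    Real.sqrt_sq (by positivity : (0:ℝ) ≤ Real.sin s * Real.cos s)]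
  rfl

lemma eik_sin_A {K L s : ℝ} :
    Real.sin (eikA K L s)
      = 2 * Real.exp (eikF K L s) / (1 + Real.exp (eikF K L s) ^ 2) := by
  rw [eikA, Real.sin_two_mul, Real.sin_arctan, Real.cos_arctan]
  set u := Real.exp (eikF K L s)
  have h : Real.sqrt (1 + u ^ 2) * Real.sqrt (1 + u ^ 2) = 1 + u ^ 2 :=
    Real.mul_self_sqrt (by positivity)
  have e : 2 * (u / Real.sqrt (1 + u ^ 2)) * (1 / Real.sqrt (1 + u ^ 2))
      = 2 * u / (Real.sqrt (1 + u ^ 2) * Real.sqrt (1 + u ^ 2)) := by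
    ring
  rw [e, h]

lemma eik_hasDerivAt_A {K L s : ℝ} (hK : 0 < K) (hL : 0 < L) (hs : s ∈ Ioo 0 (π / 2)) :
    HasDerivAt (eikA K L)
      (Real.sin (eikA K L s) * (eikG K L s / (Real.sin s * Real.cos s))) s := by
  have hF := eik_hasDerivAt_F hK hL hs
  have h := (((Real.hasDerivAt_arctan (Real.exp (eikF K L s))).comp s
      ((Real.hasDerivAt_exp (eikF K L s)).comp s hF)).const_mul 2)
  refine h.congr_deriv ?_
  rw [eik_sin_A]
  set u := Real.exp (eikF K L s)
  have hu : (0:ℝ) < 1 + u ^ 2 := by positivity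
  field_simp

lemma eik_contDiffAt_A {K L s : ℝ} (hK : 0 < K) (hL : 0 < L) (hs : s ∈ Ioo 0 (π / 2)) :
    ContDiffAt ℝ (⊤ : ℕ∞) (eikA K L) s := by
  have hsin : 0 < Real.sin s :=
    Real.sin_pos_of_pos_of_lt_pi hs.1 (hs.2.trans (by linarith [Real.pi_pos]))
  have hcos : 0 < Real.cos s := Real.cos_pos_of_mem_Ioo ⟨by linarith [Real.pi_pos, hs.1], hs.2⟩
  have hw : ContDiffAt ℝ (⊤ : ℕ∞) (fun s => K ^ 2 * Real.sin s ^ 2 + L ^ 2 * Real.cos s ^ 2) s :=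
    (((contDiff_const.mul (Real.contDiff_sin.pow 2)).add
      (contDiff_const.mul (Real.contDiff_cos.pow 2))).contDiffAt)
  have hG : ContDiffAt ℝ (⊤ : ℕ∞) (eikG K L) s :=
    (Real.contDiffAt_sqrt (eik_w_pos hK hsin).ne').comp s hw
  have h1 : ContDiffAt ℝ (⊤ : ℕ∞) (fun s => Real.log (K + eikG K L s)) s :=
    ((contDiffAt_const (c := K)).add hG).log (add_pos_of_pos_of_nonneg hK (eikG_pos (L := L) hK hsin).le).ne'
  have h2 : ContDiffAt ℝ (⊤ : ℕ∞) (fun s => Real.log (Real.cos s)) s :=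
    (Real.contDiffAt_log.2 hcos.ne').comp s Real.contDiff_cos.contDiffAt
  have h3 : ContDiffAt ℝ (⊤ : ℕ∞) (fun s => Real.log (Real.sin s)) s :=
    (Real.contDiffAt_log.2 hsin.ne').comp s Real.contDiff_sin.contDiffAt
  have h4 : ContDiffAt ℝ (⊤ : ℕ∞) (fun s => Real.log (L + eikG K L s)) s :=
    ((contDiffAt_const (c := L)).add hG).log (add_pos_of_pos_of_nonneg hL (eikG_pos (L := L) hK hsin).le).ne'
  have hF : ContDiffAt ℝ (⊤ : ℕ∞) (eikF K L) s :=
    (contDiffAt_const.mul (h1.sub h2)).add (contDiffAt_const.mul (h3.sub h4))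
  exact contDiffAt_const.mul (Real.contDiff_arctan.contDiffAt.comp s
    (Real.contDiff_exp.contDiffAt.comp s hF))

lemma eikG_pos' : True := trivial

lemma eik_tendsto_F_zero {K L : ℝ} (hK : 0 < K) (hL : 0 < L) :
    Filter.Tendsto (eikF K L) (nhdsWithin 0 (Ioi 0)) Filter.atBot := by
  have hGcont : Continuous (eikG K L) :=
    ((continuous_const.mul (Real.continuous_sin.pow 2)).add
      (continuous_const.mul (Real.continuous_cos.pow 2))).sqrt
  have hG0 : eikG K L 0 = L := by
    simp [eikG, abs_of_pos hL]
    rw [Real.sqrt_eq_iff_mul_self_eq (by positivity) hL.le]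
    ring
  have hGt : Filter.Tendsto (eikG K L) (nhdsWithin 0 (Ioi 0)) (nhds L) := by
    have h : Filter.Tendsto (eikG K L) (nhdsWithin 0 (Ioi 0)) (nhds (eikG K L 0)) :=
      (hGcont.tendsto 0).mono_left nhdsWithin_le_nhds
    rwa [hG0] at h
  -- the bounded part
  have hrest : Filter.Tendsto
      (fun s => K * (Real.log (K + eikG K L s) - Real.log (Real.cos s))
        - L * Real.log (L + eikG K L s)) (nhdsWithin 0 (Ioi 0))
      (nhds (K * (Real.log (K + L) - Real.log (Real.cos 0)) - L * Real.log (L + L))) := by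
    have t1 : Filter.Tendsto (fun s => Real.log (K + eikG K L s)) (nhdsWithin 0 (Ioi 0))
        (nhds (Real.log (K + L))) :=
      ((Real.continuousAt_log (by positivity)).tendsto).comp (tendsto_const_nhds.add hGt)
    have t2 : Filter.Tendsto (fun s => Real.log (Real.cos s)) (nhdsWithin 0 (Ioi 0))
        (nhds (Real.log (Real.cos 0))) := by
      have : ContinuousAt (fun s => Real.log (Real.cos s)) 0 :=
        (Real.continuousAt_log (by simp)).comp Real.continuous_cos.continuousAt
      exact this.tendsto.mono_left nhdsWithin_le_nhds
    have t4 : Filter.Tendsto (fun s => Real.log (L + eikG K L s)) (nhdsWithin 0 (Ioi 0))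
        (nhds (Real.log (L + L))) :=
      ((Real.continuousAt_log (by positivity)).tendsto).comp (tendsto_const_nhds.add hGt)
    exact ((t1.sub t2).const_mul K).sub (t4.const_mul L)
  have hsin : Filter.Tendsto (fun s => Real.sin s) (nhdsWithin 0 (Ioi 0)) (nhdsWithin 0 (Ioi 0)) := by
    apply tendsto_nhdsWithin_of_tendsto_nhds_of_eventually_within _
    · have := (Real.continuous_sin.tendsto 0).mono_left (nhdsWithin_le_nhds (s := Ioi (0:ℝ)))
      simpa using this
    · filter_upwards [Ioo_mem_nhdsGT_of_mem (by constructor <;> [rfl; exact Real.pi_pos] : (0:ℝ) ∈ Ico 0 π)] with x hx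
      exact Real.sin_pos_of_pos_of_lt_pi hx.1 hx.2
  have hlogsin : Filter.Tendsto (fun s => L * Real.log (Real.sin s)) (nhdsWithin 0 (Ioi 0))
      Filter.atBot :=
    (Real.tendsto_log_nhdsGT_zero.comp hsin).const_mul_atBot hL
  have heq : eikF K L = fun s => L * Real.log (Real.sin s)
      + (K * (Real.log (K + eikG K L s) - Real.log (Real.cos s))
        - L * Real.log (L + eikG K L s)) := by
    funext s; rw [eikF]; ring
  rw [heq]
  exact hlogsin.atBot_add hrest

lemma eik_tendsto_F_pi2 {K L : ℝ} (hK : 0 < K) (hL : 0 < L) :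
    Filter.Tendsto (eikF K L) (nhdsWithin (π/2) (Iio (π/2))) Filter.atTop := by
  have hGcont : Continuous (eikG K L) :=
    ((continuous_const.mul (Real.continuous_sin.pow 2)).add
      (continuous_const.mul (Real.continuous_cos.pow 2))).sqrt
  have hG0 : eikG K L (π/2) = K := by
    rw [eikG]
    simp
    rw [Real.sqrt_eq_iff_mul_self_eq (by positivity) hK.le]
    ring
  have hGt : Filter.Tendsto (eikG K L) (nhdsWithin (π/2) (Iio (π/2))) (nhds K) := by
    have h : Filter.Tendsto (eikG K L) (nhdsWithin (π/2) (Iio (π/2))) (nhds (eikG K L (π/2))) :=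
      (hGcont.tendsto (π/2)).mono_left nhdsWithin_le_nhds
    rwa [hG0] at h
  have hrest : Filter.Tendsto
      (fun s => K * Real.log (K + eikG K L s)
        + L * (Real.log (Real.sin s) - Real.log (L + eikG K L s)))
      (nhdsWithin (π/2) (Iio (π/2)))
      (nhds (K * Real.log (K + K)
        + L * (Real.log (Real.sin (π/2)) - Real.log (L + K)))) := by
    have t1 : Filter.Tendsto (fun s => Real.log (K + eikG K L s)) (nhdsWithin (π/2) (Iio (π/2)))
        (nhds (Real.log (K + K))) :=
      ((Real.continuousAt_log (by positivity)).tendsto).comp (tendsto_const_nhds.add hGt)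
    have t3 : Filter.Tendsto (fun s => Real.log (Real.sin s)) (nhdsWithin (π/2) (Iio (π/2)))
        (nhds (Real.log (Real.sin (π/2)))) := by
      have : ContinuousAt (fun s => Real.log (Real.sin s)) (π/2) :=
        (Real.continuousAt_log (by simp)).comp Real.continuous_sin.continuousAt
      exact this.tendsto.mono_left nhdsWithin_le_nhds
    have t4 : Filter.Tendsto (fun s => Real.log (L + eikG K L s)) (nhdsWithin (π/2) (Iio (π/2)))
        (nhds (Real.log (L + K))) :=
      ((Real.continuousAt_log (by positivity)).tendsto).comp (tendsto_const_nhds.add hGt)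
    exact (t1.const_mul K).add ((t3.sub t4).const_mul L)
  have hcos : Filter.Tendsto (fun s => Real.cos s) (nhdsWithin (π/2) (Iio (π/2)))
      (nhdsWithin 0 (Ioi 0)) := by
    apply tendsto_nhdsWithin_of_tendsto_nhds_of_eventually_within _
    · have := (Real.continuous_cos.tendsto (π/2)).mono_left
        (nhdsWithin_le_nhds (s := Iio (π/2)))
      simpa using this
    · filter_upwards [Ioo_mem_nhdsLT_of_mem
        (⟨by linarith [Real.pi_pos], le_refl _⟩ : π/2 ∈ Ioc (-(π/2)) (π/2))] with x hx
      exact Real.cos_pos_of_mem_Ioo hx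
  have hlogcos : Filter.Tendsto (fun s => -(K * Real.log (Real.cos s)))
      (nhdsWithin (π/2) (Iio (π/2))) Filter.atTop := by
    have : Filter.Tendsto (fun s => K * Real.log (Real.cos s))
        (nhdsWithin (π/2) (Iio (π/2))) Filter.atBot :=
      (Real.tendsto_log_nhdsGT_zero.comp hcos).const_mul_atBot hK
    exact Filter.tendsto_neg_atBot_atTop.comp this
  have heq : eikF K L = fun s => -(K * Real.log (Real.cos s))
      + (K * Real.log (K + eikG K L s)
        + L * (Real.log (Real.sin s) - Real.log (L + eikG K L s))) := by
    funext s; rw [eikF]; ring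
  rw [heq]
  exact hlogcos.atTop_add hrest

/-- For all nonzero integers `k, l`, there exists a smooth, strictly
increasing function `α : (0, π/2) → (0, π)` satisfying the eikonal (horizontal
conformality) equation `α'(s) = sin α(s) · √(k²/cos²s + l²/sin²s)` on `(0, π/2)`, with
`α(s) → 0` as `s → 0⁺` and `α(s) → π` as `s → (π/2)⁻`. -/
theorem stmt_10 (k l : ℤ) (hk : k ≠ 0) (hl : l ≠ 0) :
    ∃ α : ℝ → ℝ,
      ContDiffOn ℝ (⊤ : ℕ∞) α (Ioo 0 (π/2)) ∧
      StrictMonoOn α (Ioo 0 (π/2)) ∧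
      MapsTo α (Ioo 0 (π/2)) (Ioo 0 π) ∧
      (∀ s ∈ Ioo 0 (π/2),
        deriv α s = sin (α s) * Real.sqrt ((k : ℝ)^2 / cos s ^ 2 + (l : ℝ)^2 / sin s ^ 2)) ∧
      Filter.Tendsto α (nhdsWithin 0 (Ioi 0)) (nhds 0) ∧
      Filter.Tendsto α (nhdsWithin (π/2) (Iio (π/2))) (nhds π) := by

  set K : ℝ := |(k : ℝ)| with hKdef
  set L : ℝ := |(l : ℝ)| with hLdef
  have hK : 0 < K := abs_pos.2 (Int.cast_ne_zero.2 hk)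
  have hL : 0 < L := abs_pos.2 (Int.cast_ne_zero.2 hl)
  refine ⟨eikA K L, ?_, ?_, ?_, ?_, ?_, ?_⟩
  · exact fun x hx => (eik_contDiffAt_A hK hL hx).contDiffWithinAt
  · -- strict mono
    have hcont : ContinuousOn (eikA K L) (Ioo 0 (π/2)) :=
      fun x hx => (eik_contDiffAt_A hK hL hx).continuousAt.continuousWithinAt
    apply strictMonoOn_of_deriv_pos (convex_Ioo _ _) hcont
    intro x hx
    rw [interior_Ioo] at hx
    have hsin : 0 < Real.sin x :=
      Real.sin_pos_of_pos_of_lt_pi hx.1 (hx.2.trans (by linarith [Real.pi_pos]))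
    have hcos : 0 < Real.cos x := Real.cos_pos_of_mem_Ioo ⟨by linarith [Real.pi_pos, hx.1], hx.2⟩
    rw [(eik_hasDerivAt_A hK hL hx).deriv]
    have hsinA : 0 < Real.sin (eikA K L x) := by
      apply Real.sin_pos_of_pos_of_lt_pi
      · have : 0 < Real.arctan (Real.exp (eikF K L x)) := by simpa using Real.arctan_strictMono (Real.exp_pos (eikF K L x))
        rw [eikA]; linarith
      · have : Real.arctan (Real.exp (eikF K L x)) < π / 2 := Real.arctan_lt_pi_div_two _
        rw [eikA]; linarith
    have hGpos := eikG_pos (L := L) (s := x) hK hsin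
    positivity
  · -- maps to
    intro x hx
    have h1 : 0 < Real.arctan (Real.exp (eikF K L x)) := by simpa using Real.arctan_strictMono (Real.exp_pos (eikF K L x))
    have h2 : Real.arctan (Real.exp (eikF K L x)) < π / 2 := Real.arctan_lt_pi_div_two _
    exact ⟨by rw [eikA]; linarith, by rw [eikA]; linarith⟩
  · -- derivative formula
    intro x hx
    have hsin : 0 < Real.sin x :=
      Real.sin_pos_of_pos_of_lt_pi hx.1 (hx.2.trans (by linarith [Real.pi_pos]))
    have hcos : 0 < Real.cos x := Real.cos_pos_of_mem_Ioo ⟨by linarith [Real.pi_pos, hx.1], hx.2⟩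
    rw [(eik_hasDerivAt_A hK hL hx).deriv]
    congr 1
    rw [show ((k : ℝ))^2 = K^2 from (sq_abs _).symm, show ((l : ℝ))^2 = L^2 from (sq_abs _).symm]
    exact (eik_sqrt_eq hK hL hsin hcos).symm
  · -- limit at 0
    have hF := eik_tendsto_F_zero hK hL
    have hexp : Filter.Tendsto (fun s => Real.exp (eikF K L s)) (nhdsWithin 0 (Ioi 0)) (nhds 0) :=
      Real.tendsto_exp_atBot.comp hF
    have harctan : Filter.Tendsto (fun s => Real.arctan (Real.exp (eikF K L s)))
        (nhdsWithin 0 (Ioi 0)) (nhds (Real.arctan 0)) :=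
      (Real.continuous_arctan.tendsto 0).comp hexp
    have := harctan.const_mul (2 : ℝ)
    simp at this; exact this
  · -- limit at π/2
    have hF := eik_tendsto_F_pi2 hK hL
    have hexp : Filter.Tendsto (fun s => Real.exp (eikF K L s)) (nhdsWithin (π/2) (Iio (π/2)))
        Filter.atTop := Real.tendsto_exp_atTop.comp hF
    have harctan : Filter.Tendsto (fun s => Real.arctan (Real.exp (eikF K L s)))
        (nhdsWithin (π/2) (Iio (π/2))) (nhds (π/2)) :=
      (Real.tendsto_arctan_atTop.mono_right nhdsWithin_le_nhds).comp hexp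
    have h2 := harctan.const_mul (2 : ℝ)
    have : (2 : ℝ) * (π/2) = π := by ring
    rw [this] at h2
    exact h2
end

section
/- Let k, ℓ be integers with k > ℓ ≥ 1. Then (k² − ℓ²)/ln(k²/ℓ²) > kℓ. Consequently, the σ₂-energy 16π²·(k² − ℓ²)/(R·ln(k²/ℓ²)) of the critical configuration with |k| > |ℓ| strictly exceeds the topological lower bound 16π²·kℓ/R corresponding to Hopf invariant Q = kℓ; within the family of critical configurations of the α-Hopf construction ansatz, the bound is attained if and only if k = ℓ. -/
/-!
With `t = k / l > 1` one has `ln (k² / l²) = 2 ln t` and `(k² - l²) / (k l) = t - t⁻¹ = 2 sinh (ln t)`,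
so the inequality is `ln t < sinh (ln t)`, i.e. `x < sinh x` for `x > 0`: the logarithmic mean
of `k²` and `l²` exceeds their geometric mean `k l`.
-/

open Real

lemma two_mul_log_lt_sub_inv {t : ℝ} (ht : 1 < t) : 2 * log t < t - t⁻¹ := by
  have h := self_lt_sinh_iff.mpr (log_pos ht)
  rw [sinh_log (by linarith)] at h
  linarith

lemma mul_mul_log_sq_div_sq_lt {a b : ℝ} (hb : 0 < b) (hba : b < a) :
    a * b * log (a ^ 2 / b ^ 2) < a ^ 2 - b ^ 2 := by
  have ha : 0 < a := hb.trans hba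
  have hlog : log (a ^ 2 / b ^ 2) = 2 * log (a / b) := by
    rw [← div_pow, log_pow]; norm_num
  have hsub : a / b - (a / b)⁻¹ = (a ^ 2 - b ^ 2) / (a * b) := by
    field_simp
  calc a * b * log (a ^ 2 / b ^ 2) < a * b * ((a ^ 2 - b ^ 2) / (a * b)) := by
        rw [hlog, ← hsub]
        exact mul_lt_mul_of_pos_left (two_mul_log_lt_sub_inv ((one_lt_div hb).mpr hba))
          (by positivity)
    _ = a ^ 2 - b ^ 2 := by field_simp

lemma log_sq_div_sq_pos {a b : ℝ} (hb : 0 < b) (hba : b < a) : 0 < log (a ^ 2 / b ^ 2) :=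
  log_pos ((one_lt_div (by positivity)).mpr (pow_lt_pow_left₀ hba hb.le two_ne_zero))

lemma mul_lt_sq_sub_sq_div_log {a b : ℝ} (hb : 0 < b) (hba : b < a) :
    a * b < (a ^ 2 - b ^ 2) / log (a ^ 2 / b ^ 2) :=
  (lt_div_iff₀ (log_sq_div_sq_pos hb hba)).mpr (mul_mul_log_sq_div_sq_lt hb hba)

/-- For integers `k > l ≥ 1`, one has `(k² − l²)/ln(k²/l²) > k·l`;
consequently the σ₂-energy `16π²·(k² − l²)/(R·ln(k²/l²))` of the critical configuration
with `|k| > |l|` strictly exceeds the topological lower bound `16π²·k·l/R` for Hopf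
invariant `Q = kl`. -/
theorem stmt_11 (k l : ℤ) (hl : 1 ≤ l) (hkl : l < k) :
    ((k : ℝ)^2 - (l : ℝ)^2) / Real.log ((k : ℝ)^2 / (l : ℝ)^2) > (k : ℝ) * (l : ℝ) ∧
    ∀ R : ℝ, 0 < R →
      16 * π^2 * ((k : ℝ)^2 - (l : ℝ)^2) / (R * Real.log ((k : ℝ)^2 / (l : ℝ)^2))
        > 16 * π^2 * ((k : ℝ) * (l : ℝ)) / R := by
  have hl0 : (0 : ℝ) < l := by exact_mod_cast hl
  have hlk : (l : ℝ) < k := by exact_mod_cast hkl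
  have hmain := mul_lt_sq_sub_sq_div_log hl0 hlk
  refine ⟨hmain, fun R hR => ?_⟩
  have henergy : 16 * π ^ 2 * ((k : ℝ) ^ 2 - (l : ℝ) ^ 2) / (R * log ((k : ℝ) ^ 2 / (l : ℝ) ^ 2))
      = 16 * π ^ 2 * (((k : ℝ) ^ 2 - (l : ℝ) ^ 2) / log ((k : ℝ) ^ 2 / (l : ℝ) ^ 2)) / R := by
    rw [mul_div_assoc, mul_div_assoc, div_div, mul_comm R]
  rw [henergy]
  gcongr
end

section
/- Let k, ℓ be nonzero integers, R > 0, α : (0, π/2) → ℝ differentiable, and fix s ∈ (0, π/2). Define Φ : ℝ³ → ℝ³ by Φ(x₁, x₂, σ) = (cos α(σ), sin α(σ)·cos(k x₁ + ℓ x₂), sin α(σ)·sin(k x₁ + ℓ x₂)), and let G be the 3×3 Gram matrix with entries G_{ij} = ⟨u_i, u_j⟩ for the Euclidean inner product, where u₁ = (1/(R cos s))·∂Φ/∂x₁, u₂ = (1/(R sin s))·∂Φ/∂x₂, u₃ = (1/R)·∂Φ/∂σ, all evaluated at any point with σ = s. Then: (i) the vector e₃ = ((cos s)/k, −(sin s)/ℓ,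 0) satisfies G·e₃ = 0; (ii) the vector e₁ = (0, 0, 1) is an eigenvector of G with eigenvalue λ₁² = α′(s)²/R²; (iii) the vector e₂ = ((sin s)/ℓ, (cos s)/k, 0) is an eigenvector of G with eigenvalue λ₂² = (sin²α(s)/R²)·(k²·sin²s + ℓ²·cos²s)/(sin²s·cos²s). -/
/-!
Write `Φ = S(α(σ), kx₁ + ℓx₂)` with `S(t, θ) = (cos t, sin t cos θ, sin t sin θ)` the spherical
coordinates of the unit sphere. Then `u₁ = c₁ v` and `u₂ = c₂ v` are multiples of the same vector
`v = ∂_θ S`, with `c₁ = k/(R cos s)`, `c₂ = ℓ/(R sin s)`, while `u₃ = w = (α'(s)/R) ∂_t S`.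
Since `∂_t S ⊥ ∂_θ S`, `|∂_t S| = 1` and `|∂_θ S| = sin t`, the Gram matrix acts by
`G (x, y, z) = (c₁x + c₂y)|v|² (c₁, c₂, 0) + z|w|² (0, 0, 1)`. The vector `e₃` is orthogonal to
`(c₁, c₂)` and `e₂` is parallel to it, which gives all three claims.
-/

open Real Set Matrix

noncomputable def sphericalCoords (t θ : ℝ) : Fin 3 → ℝ := ![cos t, sin t * cos θ, sin t * sin θ]

noncomputable def polarTangent (t θ : ℝ) : Fin 3 → ℝ := ![-sin t, cos t * cos θ, cos t * sin θ]

noncomputable def azimuthalTangent (t θ : ℝ) : Fin 3 → ℝ := ![0, -(sin t * sin θ), sin t * cos θ]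

section SphericalCoords

variable (t θ : ℝ)

theorem hasDerivAt_sphericalCoords_polar (i : Fin 3) :
    HasDerivAt (fun t => sphericalCoords t θ i) (polarTangent t θ i) t := by
  fin_cases i
  · exact hasDerivAt_cos t
  · exact (hasDerivAt_sin t).mul_const _
  · exact (hasDerivAt_sin t).mul_const _

theorem hasDerivAt_sphericalCoords_azimuthal (i : Fin 3) :
    HasDerivAt (fun θ => sphericalCoords t θ i) (azimuthalTangent t θ i) θ := by
  fin_cases i
  · exact hasDerivAt_const θ _
  · simpa [sphericalCoords, azimuthalTangent] using (hasDerivAt_cos θ).const_mul (sin t)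
  · exact (hasDerivAt_sin θ).const_mul _

theorem azimuthalTangent_dotProduct_polarTangent :
    azimuthalTangent t θ ⬝ᵥ polarTangent t θ = 0 := by
  simp [azimuthalTangent, polarTangent]
  ring

theorem polarTangent_dotProduct_self : polarTangent t θ ⬝ᵥ polarTangent t θ = 1 := by
  simp [polarTangent]
  linear_combination (cos t ^ 2) * sin_sq_add_cos_sq θ + sin_sq_add_cos_sq t

theorem azimuthalTangent_dotProduct_self :
    azimuthalTangent t θ ⬝ᵥ azimuthalTangent t θ = sin t ^ 2 := by
  simp [azimuthalTangent]
  linear_combination (sin t ^ 2) * sin_sq_add_cos_sq θ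

end SphericalCoords

theorem deriv_sphericalCoords_comp_affine_left (t k l a b : ℝ) (i : Fin 3) :
    deriv (fun a => sphericalCoords t (k * a + l * b) i) a
      = k * azimuthalTangent t (k * a + l * b) i := by
  have h : HasDerivAt (fun a => k * a + l * b) k a := by
    simpa using ((hasDerivAt_id a).const_mul k).add_const (l * b)
  exact ((hasDerivAt_sphericalCoords_azimuthal t _ i).comp a h).deriv.trans (mul_comm _ _)

theorem deriv_sphericalCoords_comp_affine_right (t k l a b : ℝ) (i : Fin 3) :
    deriv (fun b => sphericalCoords t (k * a + l * b) i) b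
      = l * azimuthalTangent t (k * a + l * b) i := by
  have h : HasDerivAt (fun b => k * a + l * b) l b := by
    simpa using ((hasDerivAt_id b).const_mul l).const_add (k * a)
  exact ((hasDerivAt_sphericalCoords_azimuthal t _ i).comp b h).deriv.trans (mul_comm _ _)

theorem deriv_sphericalCoords_comp {α : ℝ → ℝ} {s : ℝ} (hα : DifferentiableAt ℝ α s)
    (θ : ℝ) (i : Fin 3) :
    deriv (fun σ => sphericalCoords (α σ) θ i) s = deriv α s * polarTangent (α s) θ i :=
  ((hasDerivAt_sphericalCoords_polar (α s) θ i).comp s hα.hasDerivAt).deriv.trans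
    (mul_comm _ _)

theorem Matrix.mul_transpose_self_mulVec {m n α : Type*} [Fintype m] [Fintype n] [CommSemiring α]
    (u : Matrix m n α) (e : m → α) : (u * uᵀ) *ᵥ e = u *ᵥ (e ᵥ* u) := by
  rw [← mulVec_mulVec, mulVec_transpose]

theorem gram_mulVec_of_dotProduct_eq_zero {n α : Type*} [Fintype n] [CommSemiring α]
    {v w : n → α} (hvw : v ⬝ᵥ w = 0) (c₁ c₂ x y z : α) :
    (of ![c₁ • v, c₂ • v, w] * (of ![c₁ • v, c₂ • v, w])ᵀ) *ᵥ ![x, y, z]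
      = ((c₁ * x + c₂ * y) * (v ⬝ᵥ v)) • ![c₁, c₂, 0] + (z * (w ⬝ᵥ w)) • ![0, 0, 1] := by
  have hwv : w ⬝ᵥ v = 0 := by rw [dotProduct_comm, hvw]
  rw [mul_transpose_self_mulVec]
  ext i
  fin_cases i <;> simp [dotProduct_add, hvw, hwv] <;> ring

theorem hopf_scaled_partials_eq (k l R : ℝ) {α : ℝ → ℝ} {s : ℝ} (hαs : DifferentiableAt ℝ α s)
    (x₁ x₂ : ℝ) :
    (![fun i => 1 / (R * cos s) * deriv (fun a => sphericalCoords (α s) (k * a + l * x₂) i) x₁,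
      fun i => 1 / (R * sin s) * deriv (fun b => sphericalCoords (α s) (k * x₁ + l * b) i) x₂,
      fun i => 1 / R * deriv (fun σ => sphericalCoords (α σ) (k * x₁ + l * x₂) i) s] :
        Fin 3 → Fin 3 → ℝ)
      = ![(R⁻¹ * (cos s)⁻¹ * k) • azimuthalTangent (α s) (k * x₁ + l * x₂),
          (R⁻¹ * (sin s)⁻¹ * l) • azimuthalTangent (α s) (k * x₁ + l * x₂),
          (R⁻¹ * deriv α s) • polarTangent (α s) (k * x₁ + l * x₂)] := by
  ext i m
  fin_cases i <;>
    simp [deriv_sphericalCoords_comp_affine_left, deriv_sphericalCoords_comp_affine_right,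
      deriv_sphericalCoords_comp hαs] <;> ring

theorem stmt_12_general (k l : ℤ) (hk : k ≠ 0) (hl : l ≠ 0) (R : ℝ)
    (α : ℝ → ℝ) (hα : DifferentiableOn ℝ α (Ioo 0 (π/2)))
    (s : ℝ) (hs : s ∈ Ioo 0 (π/2)) (x₁ x₂ : ℝ)
    (Φ : ℝ → ℝ → ℝ → Fin 3 → ℝ)
    (hΦ : Φ = fun a b σ => ![cos (α σ),
      sin (α σ) * cos ((k : ℝ) * a + (l : ℝ) * b),
      sin (α σ) * sin ((k : ℝ) * a + (l : ℝ) * b)])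
    (u : Fin 3 → Fin 3 → ℝ)
    (hu : u = ![fun i => (1 / (R * cos s)) * deriv (fun a => Φ a x₂ s i) x₁,
                fun i => (1 / (R * sin s)) * deriv (fun b => Φ x₁ b s i) x₂,
                fun i => (1 / R) * deriv (fun σ => Φ x₁ x₂ σ i) s])
    (G : Matrix (Fin 3) (Fin 3) ℝ)
    (hG : G = fun i j => ∑ m, u i m * u j m) :
    G.mulVec ![cos s / (k : ℝ), -(sin s / (l : ℝ)), 0] = 0 ∧
    G.mulVec ![0, 0, 1] = ((deriv α s)^2 / R^2) • ![0, 0, 1] ∧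
    G.mulVec ![sin s / (l : ℝ), cos s / (k : ℝ), 0]
      = ((sin (α s)^2 / R^2) * ((k : ℝ)^2 * sin s ^ 2 + (l : ℝ)^2 * cos s ^ 2)
          / (sin s ^ 2 * cos s ^ 2)) • ![sin s / (l : ℝ), cos s / (k : ℝ), 0] := by
  have hsin : sin s ≠ 0 := (sin_pos_of_pos_of_lt_pi hs.1 (by linarith [hs.2, pi_pos])).ne'
  have hcos : cos s ≠ 0 := (cos_pos_of_mem_Ioo ⟨by linarith [hs.1, pi_pos], hs.2⟩).ne'
  have hk' : (k : ℝ) ≠ 0 := Int.cast_ne_zero.mpr hk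
  have hl' : (l : ℝ) ≠ 0 := Int.cast_ne_zero.mpr hl
  have hαs : DifferentiableAt ℝ α s := hα.differentiableAt (isOpen_Ioo.mem_nhds hs)
  have hΦ' : Φ = fun a b σ => sphericalCoords (α σ) (k * a + l * b) := hΦ
  subst hΦ'
  have hu' := hu.trans (hopf_scaled_partials_eq k l R hαs x₁ x₂)
  have hGu : G = of u * (of u)ᵀ := hG
  have horth : azimuthalTangent (α s) (k * x₁ + l * x₂) ⬝ᵥ
      (R⁻¹ * deriv α s) • polarTangent (α s) (k * x₁ + l * x₂) = 0 := by
    rw [dotProduct_smul, azimuthalTangent_dotProduct_polarTangent, smul_zero]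
  simp only [hGu, hu', gram_mulVec_of_dotProduct_eq_zero horth, azimuthalTangent_dotProduct_self,
    smul_dotProduct, dotProduct_smul, polarTangent_dotProduct_self, div_eq_mul_inv _ (R ^ 2),
    ← inv_pow]
  generalize R⁻¹ = r
  refine ⟨?_, ?_, ?_⟩
  · have hker : r * (cos s)⁻¹ * k * (cos s / k) + r * (sin s)⁻¹ * l * -(sin s / l) = 0 := by
      field_simp
      ring
    rw [hker]
    simp
  · ext i; fin_cases i <;> simp; ring
  · ext i; fin_cases i <;> simp <;> field_simp

/-- For the α-Hopf ansatz map
`Φ(x₁, x₂, σ) = (cos α(σ), sin α(σ)·cos(kx₁ + lx₂), sin α(σ)·sin(kx₁ + lx₂))` and the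
Gram matrix `G` of the vectors `u₁ = (1/(R cos s))·∂Φ/∂x₁`, `u₂ = (1/(R sin s))·∂Φ/∂x₂`,
`u₃ = (1/R)·∂Φ/∂σ` at `σ = s`: (i) `e₃ = (cos s/k, −sin s/l, 0)` satisfies `G·e₃ = 0`;
(ii) `e₁ = (0,0,1)` is an eigenvector with eigenvalue `λ₁² = α'(s)²/R²`;
(iii) `e₂ = (sin s/l, cos s/k, 0)` is an eigenvector with eigenvalue
`λ₂² = (sin²α(s)/R²)·(k²sin²s + l²cos²s)/(sin²s·cos²s)`. -/
theorem stmt_12 (k l : ℤ) (hk : k ≠ 0) (hl : l ≠ 0) (R : ℝ) (hR : 0 < R)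
    (α : ℝ → ℝ) (hα : DifferentiableOn ℝ α (Ioo 0 (π/2)))
    (s : ℝ) (hs : s ∈ Ioo 0 (π/2)) (x₁ x₂ : ℝ)
    (Φ : ℝ → ℝ → ℝ → Fin 3 → ℝ)
    (hΦ : Φ = fun a b σ => ![cos (α σ),
      sin (α σ) * cos ((k : ℝ) * a + (l : ℝ) * b),
      sin (α σ) * sin ((k : ℝ) * a + (l : ℝ) * b)])
    (u : Fin 3 → Fin 3 → ℝ)
    (hu : u = ![fun i => (1 / (R * cos s)) * deriv (fun a => Φ a x₂ s i) x₁,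
                fun i => (1 / (R * sin s)) * deriv (fun b => Φ x₁ b s i) x₂,
                fun i => (1 / R) * deriv (fun σ => Φ x₁ x₂ σ i) s])
    (G : Matrix (Fin 3) (Fin 3) ℝ)
    (hG : G = fun i j => ∑ m, u i m * u j m) :
    G.mulVec ![cos s / (k : ℝ), -(sin s / (l : ℝ)), 0] = 0 ∧
    G.mulVec ![0, 0, 1] = ((deriv α s)^2 / R^2) • ![0, 0, 1] ∧
    G.mulVec ![sin s / (l : ℝ), cos s / (k : ℝ), 0]
      = ((sin (α s)^2 / R^2) * ((k : ℝ)^2 * sin s ^ 2 + (l : ℝ)^2 * cos s ^ 2)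
          / (sin s ^ 2 * cos s ^ 2)) • ![sin s / (l : ℝ), cos s / (k : ℝ), 0] :=
  stmt_12_general k l hk hl R α hα s hs x₁ x₂ Φ hΦ u hu G hG
end
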